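/- arXiv:1606.08615 — 7 statements merged into one kernel-verified Lean document; each statement's English description precedes it below -/
import Mathlib

section
/- Let ω be nondecreasing, i.e. ω n ≤ ω (n+1) for all n ∈ ℕ. Then U_ω = 1, and the supremum defining U_ω is not attained: for every admissible sequence a one has |Θ_ω(a)| < 1. -/
set_option maxHeartbeats 1000000

open scoped BigOperators

/-- Numerator of the quantity Θ_ω(a) = ⟨f, zf⟩_ω. -/
noncomputable def thetaNum (ω : ℕ → ℝ) (a : ℕ → ℂ) : ℂ :=
  ∑' n : ℕ, (starRingEnd ℂ) (a n) * a (n + 1) * (ω (n + 1) : ℂ)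

/-- Denominator of the quantity Θ_ω(a) = ‖zf‖²_ω. -/
noncomputable def thetaDen (ω : ℕ → ℝ) (a : ℕ → ℂ) : ℝ :=
  ∑' n : ℕ, ‖a n‖ ^ 2 * ω (n + 1)

/-- The quantity Θ_ω(a) = ⟨f, zf⟩_ω / ‖zf‖²_ω. -/
noncomputable def theta (ω : ℕ → ℝ) (a : ℕ → ℂ) : ℂ :=
  thetaNum ω a / (thetaDen ω a : ℂ)

/-- `a` is the coefficient sequence of a nonzero element of `H²_ω`. -/
def Admissible (ω : ℕ → ℝ) (a : ℕ → ℂ) : Prop :=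
  Summable (fun n => ‖a n‖ ^ 2 * ω n) ∧ 0 < ∑' n : ℕ, ‖a n‖ ^ 2 * ω n

/-- The extremal quantity U_ω. -/
noncomputable def Uomega (ω : ℕ → ℝ) : ℝ :=
  sSup {x : ℝ | ∃ a : ℕ → ℂ, Admissible ω a ∧ x = ‖theta ω a‖}

lemma strict_lt (ω : ℕ → ℝ) (hpos : ∀ n, 0 < ω n) (h0 : ω 0 = 1)
    (hlim : Filter.Tendsto (fun n => ω n / ω (n + 1)) Filter.atTop (nhds 1))
    (hmono : ∀ n, ω n ≤ ω (n + 1)) (a : ℕ → ℂ) (ha : Admissible ω a) :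
    ‖theta ω a‖ < 1 := by
  obtain ⟨hT, hTpos⟩ := ha
  -- eventual ratio bound
  obtain ⟨n₀, hn₀⟩ := (Filter.eventually_atTop).1
    (hlim.eventually (lt_mem_nhds (by norm_num : (1:ℝ)/2 < 1)))
  have hrat : ∀ n, n₀ ≤ n → ω (n+1) ≤ 2 * ω n := by
    intro n hn
    have h1 := hn₀ n hn
    have h2 := hpos (n+1)
    rw [lt_div_iff₀ h2] at h1
    linarith
  -- summability of the denominator series
  have hD : Summable (fun n => ‖a n‖ ^ 2 * ω (n+1)) := by
    have h1 : Summable (fun n => ‖a (n + n₀)‖ ^ 2 * ω ((n + n₀) + 1)) := by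
      refine Summable.of_nonneg_of_le (fun n => mul_nonneg (by positivity) (hpos _).le) (fun n => ?_)
        (((summable_nat_add_iff (f := fun n => ‖a n‖ ^ 2 * ω n) n₀).2 hT).mul_left 2)
      have := hrat (n + n₀) (by omega)
      have h2 : (0:ℝ) ≤ ‖a (n + n₀)‖ ^ 2 := by positivity
      nlinarith
    exact (summable_nat_add_iff (f := fun n => ‖a n‖ ^ 2 * ω (n+1)) n₀).1 h1
  have hS : Summable (fun n => ‖a (n+1)‖ ^ 2 * ω (n+1)) := (summable_nat_add_iff (f := fun n => ‖a n‖ ^ 2 * ω n) 1).2 hT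
  set D := thetaDen ω a with hDdef
  have hTD : (∑' n, ‖a n‖ ^ 2 * ω n) ≤ D := by
    refine Summable.tsum_le_tsum (fun n => ?_) hT hD
    exact mul_le_mul_of_nonneg_left (hmono n) (by positivity)
  have hD0 : 0 < D := lt_of_lt_of_le hTpos hTD
  -- majorant
  set g : ℕ → ℝ := fun n => (‖a n‖ ^ 2 * ω (n+1) + ‖a (n+1)‖ ^ 2 * ω (n+1)) / 2 with hgdef
  have hg : Summable g := (hD.add hS).div_const 2
  set F : ℕ → ℝ := fun n => ‖(starRingEnd ℂ) (a n) * a (n + 1) * (ω (n + 1) : ℂ)‖ with hFdef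
  have hFg : ∀ n, F n ≤ g n := by
    intro n
    have hF : F n = ‖a n‖ * ‖a (n+1)‖ * ω (n+1) := by
      simp [hFdef, norm_mul, Complex.norm_real, abs_of_pos (hpos (n+1))]
    rw [hF, hgdef]
    have h1 := hpos (n+1)
    nlinarith [two_mul_le_add_sq ‖a n‖ ‖a (n+1)‖, norm_nonneg (a n), norm_nonneg (a (n+1))]
  have hF : Summable F := Summable.of_nonneg_of_le (fun n => norm_nonneg _) hFg hg
  have hNle : ‖thetaNum ω a‖ ≤ ∑' n, F n := norm_tsum_le_tsum_norm hF
  -- sum of majorant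
  have hTsplit : (∑' n, ‖a n‖ ^ 2 * ω n) = ‖a 0‖ ^ 2 * ω 0 + ∑' n, ‖a (n+1)‖ ^ 2 * ω (n+1) :=
    Summable.tsum_eq_zero_add hT
  have hSle : (∑' n, ‖a (n+1)‖ ^ 2 * ω (n+1)) = (∑' n, ‖a n‖ ^ 2 * ω n) - ‖a 0‖ ^ 2 := by
    rw [hTsplit, h0]; ring
  have hgsum : (∑' n, g n) = (D + ∑' n, ‖a (n+1)‖ ^ 2 * ω (n+1)) / 2 := by
    rw [hgdef]
    rw [tsum_div_const, Summable.tsum_add hD hS, hDdef, thetaDen]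
  have hgD : (∑' n, g n) ≤ D - ‖a 0‖ ^ 2 / 2 := by
    rw [hgsum, hSle]; linarith
  -- key strict bound
  have hexist : ∃ n, a n ≠ 0 := by
    by_contra h
    push_neg at h
    have : (∑' n, ‖a n‖ ^ 2 * ω n) = 0 := by
      simp [h]
    linarith
  have hkey : (∑' n, F n) < D := by
    rcases Nat.eq_zero_or_pos (Nat.find hexist) with hk | hk
    · have ha0 : a 0 ≠ 0 := hk ▸ Nat.find_spec hexist
      have : (0:ℝ) < ‖a 0‖ ^ 2 := by
        have := norm_pos_iff.mpr ha0
        positivity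
      calc (∑' n, F n) ≤ ∑' n, g n := Summable.tsum_le_tsum hFg hF hg
        _ ≤ D - ‖a 0‖ ^ 2 / 2 := hgD
        _ < D := by linarith
    · obtain ⟨j, hj⟩ : ∃ j, Nat.find hexist = j + 1 := ⟨Nat.find hexist - 1, by omega⟩
      have haj : a j = 0 := by
        have := Nat.find_min hexist (by omega : j < Nat.find hexist)
        simpa using this
      have hak : a (j+1) ≠ 0 := hj ▸ Nat.find_spec hexist
      have hstrict : F j < g j := by
        have hFj : F j = 0 := by simp [hFdef, haj]
        rw [hFj, hgdef]
        have h1 := hpos (j+1)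
        have h2 : (0:ℝ) < ‖a (j+1)‖ ^ 2 := by
          have := norm_pos_iff.mpr hak
          positivity
        have h3 : (0:ℝ) < ‖a (j+1)‖ ^ 2 * ω (j+1) := mul_pos h2 h1
        simp only [haj, norm_zero]
        nlinarith
      calc (∑' n, F n) < ∑' n, g n := Summable.tsum_lt_tsum hFg hstrict hF hg
        _ ≤ D - ‖a 0‖ ^ 2 / 2 := hgD
        _ ≤ D := by nlinarith [norm_nonneg (a 0)]
  have hNlt : ‖thetaNum ω a‖ < D := lt_of_le_of_lt hNle hkey
  rw [theta]
  rw [norm_div, Complex.norm_real, Real.norm_of_nonneg hD0.le]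
  exact (div_lt_one hD0).2 hNlt

lemma window (ω : ℕ → ℝ) (hpos : ∀ n, 0 < ω n)
    (hlim : Filter.Tendsto (fun n => ω n / ω (n + 1)) Filter.atTop (nhds 1))
    (hmono : ∀ n, ω n ≤ ω (n + 1)) (c : ℝ) (hc0 : 0 ≤ c) (hc1 : c < 1) :
    ∃ a : ℕ → ℂ, Admissible ω a ∧ c < ‖theta ω a‖ := by
  set c' : ℝ := (1 + c) / 2 with hc'def
  have hc'1 : c' < 1 := by rw [hc'def]; linarith
  have hcc' : c < c' := by rw [hc'def]; linarith
  set ε : ℝ := (c' - c) / (c + 1) with hεdef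
  have hε : 0 < ε := by
    apply div_pos <;> linarith
  have hcε : c * (1 + ε) ≤ c' := by
    have h1 : c * ε ≤ (c + 1) * ε := by nlinarith
    have h2 : (c + 1) * ε = c' - c := by
      rw [hεdef]; field_simp
    nlinarith
  set M : ℕ := ⌈2 / (1 - c')⌉₊ + 2 with hMdef
  have hM2 : 2 ≤ M := by omega
  have hMR : (2:ℝ) ≤ (M:ℝ) := by exact_mod_cast hM2
  have hM1 : 1 < (M:ℝ) * (1 - c') := by
    have h1 : (2 / (1 - c') : ℝ) ≤ (M:ℝ) := by
      calc (2 / (1 - c') : ℝ) ≤ (⌈2 / (1 - c')⌉₊ : ℝ) := Nat.le_ceil _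
        _ ≤ (M:ℝ) := by exact_mod_cast Nat.le_add_right _ 2
    have h2 : (0:ℝ) < 1 - c' := by linarith
    rw [div_le_iff₀ h2] at h1
    linarith
  -- choose K
  have h1ε : 1 / (1 + ε) < 1 := by
    rw [div_lt_one (by linarith)]; linarith
  obtain ⟨K, hK⟩ := (Filter.eventually_atTop).1 (hlim.eventually (lt_mem_nhds h1ε))
  have hrat : ∀ n, K ≤ n → ω (n + 1) ≤ (1 + ε) * ω n := by
    intro n hn
    have h1 := hK n hn
    have h2 := hpos (n + 1)
    have h3 := hpos n
    rw [div_lt_div_iff₀ (by linarith) h2] at h1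
    linarith
  set s : Finset ℕ := Finset.Ico K (K + M) with hsdef
  set a : ℕ → ℂ := fun n => if n ∈ s then ((Real.sqrt (ω n))⁻¹ : ℝ) else 0 with hadef
  -- basic norm computation
  have hnorm : ∀ n, ‖a n‖ ^ 2 = if n ∈ s then (ω n)⁻¹ else 0 := by
    intro n
    by_cases h : n ∈ s
    · simp only [hadef, if_pos h, Complex.norm_real, norm_inv, Real.norm_eq_abs,
        abs_of_nonneg (Real.sqrt_nonneg _), inv_pow, Real.sq_sqrt (hpos n).le]
    · simp [hadef, if_neg h]
  have hT : ∀ n, ‖a n‖ ^ 2 * ω n = if n ∈ s then 1 else 0 := by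
    intro n
    rw [hnorm]
    by_cases h : n ∈ s
    · rw [if_pos h, if_pos h, inv_mul_cancel₀ (hpos n).ne']
    · rw [if_neg h, if_neg h, zero_mul]
  have hTzero : ∀ n ∉ s, ‖a n‖ ^ 2 * ω n = 0 := fun n h => by rw [hT, if_neg h]
  have hTsummable : Summable (fun n => ‖a n‖ ^ 2 * ω n) := summable_of_ne_finset_zero hTzero
  have hTsum : (∑' n, ‖a n‖ ^ 2 * ω n) = M := by
    rw [tsum_eq_sum hTzero]
    have : ∀ n ∈ s, ‖a n‖ ^ 2 * ω n = 1 := fun n h => by rw [hT, if_pos h]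
    rw [Finset.sum_congr rfl this, Finset.sum_const, Nat.card_Ico]
    simp
  have hAdm : Admissible ω a := ⟨hTsummable, by rw [hTsum]; positivity⟩
  -- denominator
  have hDterm : ∀ n, ‖a n‖ ^ 2 * ω (n + 1) = if n ∈ s then ω (n + 1) / ω n else 0 := by
    intro n
    rw [hnorm]
    by_cases h : n ∈ s
    · rw [if_pos h, if_pos h, inv_mul_eq_div]
    · rw [if_neg h, if_neg h, zero_mul]
  have hDzero : ∀ n ∉ s, ‖a n‖ ^ 2 * ω (n + 1) = 0 := fun n h => by rw [hDterm, if_neg h]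
  have hDsum : thetaDen ω a = ∑ n ∈ s, ω (n + 1) / ω n := by
    rw [thetaDen, tsum_eq_sum hDzero]
    exact Finset.sum_congr rfl fun n h => by rw [hDterm, if_pos h]
  have hDlb : (M:ℝ) ≤ thetaDen ω a := by
    rw [hDsum]
    calc (M:ℝ) = ∑ n ∈ s, (1:ℝ) := by rw [Finset.sum_const, Nat.card_Ico]; simp
      _ ≤ ∑ n ∈ s, ω (n + 1) / ω n := by
        refine Finset.sum_le_sum fun n _ => ?_
        rw [le_div_iff₀ (hpos n)]
        linarith [hmono n]
  have hDub : thetaDen ω a ≤ (M:ℝ) * (1 + ε) := by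
    rw [hDsum]
    have h1 : ∀ n ∈ s, ω (n + 1) / ω n ≤ 1 + ε := by
      intro n hn
      rw [div_le_iff₀ (hpos n)]
      have hKn : K ≤ n := (Finset.mem_Ico.1 hn).1
      have := hrat n hKn
      linarith
    refine le_trans (Finset.sum_le_sum h1) ?_
    rw [Finset.sum_const, Nat.card_Ico, nsmul_eq_mul]
    have hcard : K + M - K = M := by omega
    rw [hcard]
  have hD0 : (0:ℝ) < thetaDen ω a := lt_of_lt_of_le (by positivity) hDlb
  -- numerator
  set t : ℕ → ℝ := fun n =>
    (if n ∈ s then (Real.sqrt (ω n))⁻¹ else 0) *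
    (if n + 1 ∈ s then (Real.sqrt (ω (n + 1)))⁻¹ else 0) * ω (n + 1) with htdef
  have hNterm : ∀ n, (starRingEnd ℂ) (a n) * a (n + 1) * (ω (n + 1) : ℂ) = (t n : ℝ) := by
    intro n
    rw [hadef, htdef]
    push_cast [apply_ite (starRingEnd ℂ), Complex.conj_ofReal, apply_ite (Complex.ofReal)]
    simp
  have htnonneg : ∀ n, 0 ≤ t n := by
    intro n
    rw [htdef]
    have := (Real.sqrt_nonneg (ω n))
    have := (Real.sqrt_nonneg (ω (n+1)))
    have := (hpos (n+1)).le
    positivity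
  have htzero : ∀ n ∉ s, (fun n => (starRingEnd ℂ) (a n) * a (n + 1) * (ω (n + 1) : ℂ)) n = 0 := by
    intro n h
    simp only [hNterm n, htdef, if_neg h, zero_mul, Complex.ofReal_eq_zero]
  have hNsum : thetaNum ω a = ((∑ n ∈ s, t n : ℝ) : ℂ) := by
    rw [thetaNum, tsum_eq_sum htzero]
    push_cast
    exact Finset.sum_congr rfl fun n _ => hNterm n
  -- lower bound on the real numerator sum
  have htone : ∀ n ∈ Finset.Ico K (K + M - 1), 1 ≤ t n := by
    intro n hn
    rw [Finset.mem_Ico] at hn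
    have hns : n ∈ s := by rw [hsdef, Finset.mem_Ico]; omega
    have hn1s : n + 1 ∈ s := by rw [hsdef, Finset.mem_Ico]; omega
    rw [htdef]
    simp only [if_pos hns, if_pos hn1s]
    have h1 : Real.sqrt (ω (n+1)) * Real.sqrt (ω (n+1)) = ω (n + 1) :=
      Real.mul_self_sqrt (hpos (n+1)).le
    have hs1 : 0 < Real.sqrt (ω n) := Real.sqrt_pos.2 (hpos n)
    have hs2 : 0 < Real.sqrt (ω (n+1)) := Real.sqrt_pos.2 (hpos (n+1))
    have hle : Real.sqrt (ω n) ≤ Real.sqrt (ω (n+1)) := Real.sqrt_le_sqrt (hmono n)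
    rw [show (Real.sqrt (ω n))⁻¹ * (Real.sqrt (ω (n+1)))⁻¹ * ω (n+1)
      = ω (n+1) / (Real.sqrt (ω n) * Real.sqrt (ω (n+1))) by ring]
    rw [one_le_div (by positivity)]
    nlinarith
  have hNlb : (M:ℝ) - 1 ≤ ∑ n ∈ s, t n := by
    have hsub : Finset.Ico K (K + M - 1) ⊆ s := by
      rw [hsdef]
      apply Finset.Ico_subset_Ico le_rfl
      omega
    calc (M:ℝ) - 1 = ∑ n ∈ Finset.Ico K (K + M - 1), (1:ℝ) := by
          rw [Finset.sum_const, Nat.card_Ico, nsmul_eq_mul, mul_one]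
          have hcard : K + M - 1 - K = M - 1 := by omega
          rw [hcard, Nat.cast_sub (by omega : 1 ≤ M), Nat.cast_one]
      _ ≤ ∑ n ∈ Finset.Ico K (K + M - 1), t n := Finset.sum_le_sum htone
      _ ≤ ∑ n ∈ s, t n := Finset.sum_le_sum_of_subset_of_nonneg hsub fun n _ _ => htnonneg n
  -- conclude
  refine ⟨a, hAdm, ?_⟩
  have habs : ‖theta ω a‖ = (∑ n ∈ s, t n) / thetaDen ω a := by
    rw [theta, hNsum, norm_div, Complex.norm_real, Complex.norm_real,
      Real.norm_of_nonneg (Finset.sum_nonneg fun n _ => htnonneg n), Real.norm_of_nonneg hD0.le]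
  rw [habs]
  have hfrac : ((M:ℝ) - 1) / ((M:ℝ) * (1 + ε)) ≤ (∑ n ∈ s, t n) / thetaDen ω a :=
    div_le_div₀ (Finset.sum_nonneg fun n _ => htnonneg n) hNlb hD0 hDub
  have hclt : c < ((M:ℝ) - 1) / ((M:ℝ) * (1 + ε)) := by
    rw [lt_div_iff₀ (by positivity)]
    nlinarith
  linarith

theorem stmt0 (ω : ℕ → ℝ) (hpos : ∀ n, 0 < ω n) (h0 : ω 0 = 1)
    (hlim : Filter.Tendsto (fun n => ω n / ω (n + 1)) Filter.atTop (nhds 1))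
    (hmono : ∀ n, ω n ≤ ω (n + 1)) :
    Uomega ω = 1 ∧ ∀ a : ℕ → ℂ, Admissible ω a → ‖theta ω a‖ < 1 := by
  have hstrict : ∀ a : ℕ → ℂ, Admissible ω a → ‖theta ω a‖ < 1 :=
    fun a ha => strict_lt ω hpos h0 hlim hmono a ha
  refine ⟨?_, hstrict⟩
  rw [Uomega]
  set S := {x : ℝ | ∃ a : ℕ → ℂ, Admissible ω a ∧ x = ‖theta ω a‖} with hSdef
  have hbdd : BddAbove S := by
    refine ⟨1, ?_⟩
    rintro x ⟨a, ha, rfl⟩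
    exact (hstrict a ha).le
  apply le_antisymm
  · apply Real.sSup_le
    · rintro x ⟨a, ha, rfl⟩
      exact (hstrict a ha).le
    · exact zero_le_one
  · apply le_of_forall_lt
    intro cc hcc
    have hc1 : max cc 0 < 1 := max_lt hcc one_pos
    obtain ⟨a, ha, hgt⟩ := window ω hpos hlim hmono (max cc 0) (le_max_right _ _) hc1
    have hmem : ‖theta ω a‖ ∈ S := ⟨a, ha, rfl⟩
    calc cc ≤ max cc 0 := le_max_left _ _
      _ < ‖theta ω a‖ := hgt
      _ ≤ sSup S := le_csSup hbdd hmem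
end

section
/- Suppose there exist n, k ∈ ℕ such that ω (k+n+1) < ω (k+1) / 4. Then U_ω > 1, and the supremum defining U_ω is attained: there exists an admissible sequence a with |Θ_ω(a)| = U_ω. -/
open scoped BigOperators

noncomputable def NN (v : ℕ → ℝ) (b : ℕ → ℝ) : ℝ := ∑' n : ℕ, b n * b (n+1) * v n
noncomputable def DD (v : ℕ → ℝ) (b : ℕ → ℝ) : ℝ := ∑' n : ℕ, (b n)^2 * v n

section aux
variable {v : ℕ → ℝ} {C : ℝ} {b b' : ℕ → ℝ}

lemma sq_weight_nonneg (b : ℕ → ℝ) (hv : ∀ n, 0 < v n) (n : ℕ) : 0 ≤ (b n)^2 * v n :=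
  mul_nonneg (sq_nonneg _) (hv n).le

lemma DD_nonneg (hv : ∀ n, 0 < v n) : 0 ≤ DD v b :=
  tsum_nonneg (sq_weight_nonneg b hv)

lemma summable_shift (hv : ∀ n, 0 < v n) (hC : ∀ n, v n ≤ C * v (n+1))
    (hb : Summable fun n => (b n)^2 * v n) :
    Summable fun n => (b (n+1))^2 * v n := by
  have h1 : Summable fun n => (b (n+1))^2 * v (n+1) := (summable_nat_add_iff 1).2 hb
  have h2 : Summable fun n => C * ((b (n+1))^2 * v (n+1)) := h1.mul_left C
  refine Summable.of_nonneg_of_le (fun n => sq_weight_nonneg (fun m => b (m+1)) hv n) ?_ h2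
  intro n
  calc (b (n+1))^2 * v n ≤ (b (n+1))^2 * (C * v (n+1)) :=
        mul_le_mul_of_nonneg_left (hC n) (sq_nonneg _)
    _ = C * ((b (n+1))^2 * v (n+1)) := by ring

lemma cross_abs_le (hv : ∀ n, 0 < v n) (n : ℕ) :
    |b n * b' (n+1) * v n| ≤ ((b n)^2 * v n + (b' (n+1))^2 * v n) / 2 := by
  have h1 : |b n * b' (n+1) * v n| = |b n * b' (n+1)| * v n := by
    rw [abs_mul, abs_of_pos (hv n)]
  rw [h1]
  have h2 : |b n * b' (n+1)| ≤ ((b n)^2 + (b' (n+1))^2) / 2 := by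
    rw [abs_mul]
    nlinarith [sq_nonneg (|b n| - |b' (n+1)|), sq_abs (b n), sq_abs (b' (n+1)), abs_nonneg (b n), abs_nonneg (b' (n+1))]
  nlinarith [(hv n).le]

lemma summable_cross_abs (hv : ∀ n, 0 < v n) (hC : ∀ n, v n ≤ C * v (n+1))
    (hb : Summable fun n => (b n)^2 * v n) (hb' : Summable fun n => (b' n)^2 * v n) :
    Summable fun n => |b n * b' (n+1) * v n| := by
  have h2 : Summable fun n => ((b n)^2 * v n + (b' (n+1))^2 * v n) / 2 :=
    (hb.add (summable_shift hv hC hb')).div_const 2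
  exact Summable.of_nonneg_of_le (fun n => abs_nonneg _) (cross_abs_le hv) h2

lemma summable_cross (hv : ∀ n, 0 < v n) (hC : ∀ n, v n ≤ C * v (n+1))
    (hb : Summable fun n => (b n)^2 * v n) (hb' : Summable fun n => (b' n)^2 * v n) :
    Summable fun n => b n * b' (n+1) * v n :=
  (summable_abs_iff).1 (summable_cross_abs hv hC hb hb')

lemma summable_cross0 (hv : ∀ n, 0 < v n)
    (hb : Summable fun n => (b n)^2 * v n) (hb' : Summable fun n => (b' n)^2 * v n) :
    Summable fun n => b n * b' n * v n := by
  apply (summable_abs_iff).1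
  have h2 : Summable fun n => ((b n)^2 * v n + (b' n)^2 * v n)/2 := (hb.add hb').div_const 2
  refine Summable.of_nonneg_of_le (fun n => abs_nonneg _) ?_ h2
  intro n
  have h1 : |b n * b' n * v n| = |b n * b' n| * v n := by rw [abs_mul, abs_of_pos (hv n)]
  rw [h1]
  have h3 : |b n * b' n| ≤ ((b n)^2 + (b' n)^2) / 2 := by
    rw [abs_mul]
    nlinarith [sq_nonneg (|b n| - |b' n|), sq_abs (b n), sq_abs (b' n), abs_nonneg (b n), abs_nonneg (b' n)]
  nlinarith [(hv n).le]

/-- key global bound : NN b ≤ (1+C)/2 * DD b for nonneg b. -/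
lemma NN_le_DD (hv : ∀ n, 0 < v n) (hC : ∀ n, v n ≤ C * v (n+1))
    (hC0 : 0 ≤ C)
    (hb0 : ∀ n, 0 ≤ b n) (hb : Summable fun n => (b n)^2 * v n) :
    NN v b ≤ (1 + C)/2 * DD v b := by
  have hshift : Summable fun n => (b (n+1))^2 * v (n+1) := (summable_nat_add_iff 1).2 hb
  have hle : ∀ n, b n * b (n+1) * v n ≤ ((b n)^2 * v n + C * ((b (n+1))^2 * v (n+1))) / 2 := by
    intro n
    have h2 : b n * b (n+1) ≤ ((b n)^2 + (b (n+1))^2)/2 := by nlinarith [sq_nonneg (b n - b (n+1))]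
    have h3 : b n * b (n+1) * v n ≤ ((b n)^2 + (b (n+1))^2)/2 * v n :=
      mul_le_mul_of_nonneg_right h2 (hv n).le
    have h4 : (b (n+1))^2 * v n ≤ C * ((b (n+1))^2 * v (n+1)) := by
      calc (b (n+1))^2 * v n ≤ (b (n+1))^2 * (C * v (n+1)) :=
            mul_le_mul_of_nonneg_left (hC n) (sq_nonneg _)
        _ = C * ((b (n+1))^2 * v (n+1)) := by ring
    nlinarith [sq_weight_nonneg b hv n]
  have hsum : Summable fun n => ((b n)^2 * v n + C * ((b (n+1))^2 * v (n+1))) / 2 :=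
    (hb.add (hshift.mul_left C)).div_const 2
  have h5 : NN v b ≤ ∑' n : ℕ, ((b n)^2 * v n + C * ((b (n+1))^2 * v (n+1))) / 2 :=
    Summable.tsum_le_tsum hle (summable_cross hv hC hb hb) hsum
  have h6 : ∑' n : ℕ, ((b n)^2 * v n + C * ((b (n+1))^2 * v (n+1))) / 2
      = (DD v b + C * ∑' n : ℕ, (b (n+1))^2 * v (n+1)) / 2 := by
    rw [tsum_div_const, Summable.tsum_add hb (hshift.mul_left C), tsum_mul_left]
    rfl
  have h7 : ∑' n : ℕ, (b (n+1))^2 * v (n+1) ≤ DD v b :=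
    Summable.tsum_le_tsum_of_inj (fun n => n + 1) (add_left_injective 1)
      (fun c _ => sq_weight_nonneg b hv c) (fun n => le_refl _) hshift hb
  have h8 : 0 ≤ DD v b := DD_nonneg hv
  calc NN v b ≤ (DD v b + C * ∑' n : ℕ, (b (n+1))^2 * v (n+1)) / 2 := by rw [← h6]; exact h5
    _ ≤ (DD v b + C * DD v b) / 2 := by nlinarith
    _ = (1 + C)/2 * DD v b := by ring

end aux

noncomputable def beta (v : ℕ → ℝ) (k : ℕ) : ℕ → ℝ
  | 0 => v k
  | (m+1) => v (k+m+1) - (v (k+m))^2 / (4 * beta v k m)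

section witness
variable {v : ℕ → ℝ}

lemma beta_invariant (hv : ∀ n, 0 < v n) (k : ℕ) :
    ∀ m, (∀ j, j ≤ m → 0 < beta v k j) → v k * beta v k m ≤ (v (k+m))^2 := by
  intro m
  induction m with
  | zero => intro _; simp [beta, sq]
  | succ m ih =>
    intro hall
    have hβm : 0 < beta v k m := hall m (Nat.le_succ m)
    have hIH : v k * beta v k m ≤ (v (k+m))^2 := ih (fun j hj => hall j (hj.trans (Nat.le_succ m)))
    have hvk : 0 < v k := hv k
    have hw' : 0 < v (k+m+1) := hv (k+m+1)
    have hq : (v (k+m))^2 / (4 * beta v k m) * (4 * beta v k m) = (v (k+m))^2 := by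
      field_simp
    set q := (v (k+m))^2 / (4 * beta v k m) with hqdef
    have hvk4q : v k ≤ 4 * q := by nlinarith
    show v k * (v (k+m+1) - q) ≤ (v (k+m+1))^2
    nlinarith [sq_nonneg (2 * v (k+m+1) - v k)]

lemma beta_bad (hv : ∀ n, 0 < v n) (k n : ℕ) (hyp : v (k+n) < v k / 4) :
    ∃ j, 1 ≤ j ∧ (∀ i, i < j → 0 < beta v k i) ∧ beta v k j ≤ 0 := by
  classical
  have hex : ∃ j, beta v k j ≤ 0 := by
    by_contra hc
    push_neg at hc
    -- all beta positive
    rcases Nat.eq_zero_or_pos n with hn | hn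
    · subst hn
      simp only [Nat.add_zero] at hyp
      nlinarith [hv k]
    · obtain ⟨m, rfl⟩ := Nat.exists_eq_add_of_le hn
      -- n = 1 + m ; use invariant at m
      have hinv := beta_invariant hv k m (fun j _ => hc j)
      have hβ : 0 < beta v k (m+1) := hc (m+1)
      have hβm : 0 < beta v k m := hc m
      have hup : (v (k+m))^2 / (4 * beta v k m) < v (k+m+1) := by
        have := hβ
        simp only [beta] at this
        linarith
      have h2 : (v (k+m))^2 < 4 * beta v k m * v (k+m+1) := by
        rw [div_lt_iff₀ (by positivity)] at hup
        linarith [hup]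
      have h3 : v k * beta v k m < 4 * beta v k m * v (k+m+1) := lt_of_le_of_lt hinv h2
      have h4 : v k < 4 * v (k+m+1) := by
        by_contra h5
        push_neg at h5
        nlinarith
      have : k + (1 + m) = k + m + 1 := by ring
      rw [this] at hyp
      linarith
  let j := Nat.find hex
  refine ⟨j, ?_, ?_, Nat.find_spec hex⟩
  · rcases Nat.eq_zero_or_pos j with h0 | h1
    · exfalso
      have := Nat.find_spec hex
      rw [show j = Nat.find hex from rfl] at h0
      rw [h0] at this
      simp only [beta] at this
      linarith [hv k]
    · exact h1
  · intro i hi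
    have := Nat.find_min hex hi
    push_neg at this
    exact this

lemma witness_partial (hv : ∀ n, 0 < v n) (k : ℕ) :
    ∀ m, (∀ i, i < m → 0 < beta v k i) →
    ∃ b : ℕ → ℝ, (∀ i, 0 ≤ b i) ∧ (∀ i, b i ≠ 0 → k ≤ i ∧ i ≤ k + m) ∧ b (k+m) = 1 ∧
      (∑ i ∈ Finset.range (m+1), (b (k+i))^2 * v (k+i))
        - (∑ i ∈ Finset.range m, b (k+i) * b (k+i+1) * v (k+i)) = beta v k m := by
  intro m
  induction m with
  | zero =>
    intro _
    classical
    refine ⟨fun i => if i = k then 1 else 0, ?_, ?_, ?_, ?_⟩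
    · intro i; dsimp only; split <;> norm_num
    · intro i hi
      by_cases h : i = k
      · subst h; omega
      · simp [h] at hi
    · simp
    · simp [beta]
  | succ m ih =>
    intro hall
    obtain ⟨b, hb0, hbsupp, hb1, hbval⟩ := ih (fun i hi => hall i (hi.trans (Nat.lt_succ_self m)))
    classical
    have hβm : 0 < beta v k m := hall m (Nat.lt_succ_self m)
    set t := v (k+m) / (2 * beta v k m) with htdef
    have ht : 0 < t := div_pos (hv (k+m)) (by linarith)
    refine ⟨fun i => if i = k+m+1 then 1 else t * b i, ?_, ?_, ?_, ?_⟩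
    · intro i; dsimp only; split
      · norm_num
      · exact mul_nonneg ht.le (hb0 i)
    · intro i hi
      dsimp only at hi
      by_cases h : i = k+m+1
      · subst h; omega
      · simp only [h, if_false] at hi
        have : b i ≠ 0 := by
          intro hb; rw [hb, mul_zero] at hi; exact hi rfl
        have := hbsupp i this
        omega
    · show (if k+(m+1) = k+m+1 then (1:ℝ) else t * b (k+(m+1))) = 1
      rw [if_pos (by omega)]
    · have hS1 : ∑ i ∈ Finset.range (m+1+1),
          (if k+i = k+m+1 then (1:ℝ) else t * b (k+i))^2 * v (k+i)
          = t^2 * (∑ i ∈ Finset.range (m+1), (b (k+i))^2 * v (k+i)) + v (k+m+1) := by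
        rw [Finset.sum_range_succ]
        have e1 : ∀ i ∈ Finset.range (m+1),
            (if k + i = k+m+1 then (1:ℝ) else t * b (k+i))^2 * v (k+i)
              = t^2 * ((b (k+i))^2 * v (k+i)) := by
          intro i hi
          rw [Finset.mem_range] at hi
          rw [if_neg (by omega : ¬ k + i = k+m+1)]
          ring
        rw [Finset.sum_congr rfl e1, ← Finset.mul_sum, if_pos (by omega : k+(m+1) = k+m+1)]
        have : k+(m+1) = k+m+1 := by omega
        rw [this]
        ring
      have hS2 : ∑ i ∈ Finset.range (m+1),
          ((if k+i = k+m+1 then (1:ℝ) else t * b (k+i)) *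
            (if k+i+1 = k+m+1 then (1:ℝ) else t * b (k+i+1)) * v (k+i))
          = t^2 * (∑ i ∈ Finset.range m, b (k+i) * b (k+i+1) * v (k+i)) + t * v (k+m) := by
        rw [Finset.sum_range_succ]
        have e2 : ∀ i ∈ Finset.range m,
            ((if k+i = k+m+1 then (1:ℝ) else t * b (k+i)) *
              (if k+i+1 = k+m+1 then (1:ℝ) else t * b (k+i+1)) * v (k+i))
              = t^2 * (b (k+i) * b (k+i+1) * v (k+i)) := by
          intro i hi
          rw [Finset.mem_range] at hi
          rw [if_neg (by omega : ¬ k + i = k+m+1), if_neg (by omega : ¬ k + i + 1 = k+m+1)]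
          ring
        rw [Finset.sum_congr rfl e2, ← Finset.mul_sum,
          if_neg (by omega : ¬ k + m = k+m+1), if_pos (by omega : k+m+1 = k+m+1), hb1]
        ring
      have hgoal : t^2 * beta v k m + v (k+m+1) - t * v (k+m) = beta v k (m+1) := by
        show _ = v (k+m+1) - (v (k+m))^2 / (4 * beta v k m)
        rw [htdef]
        field_simp
        ring
      show ∑ i ∈ Finset.range (m+1+1),
          (if k+i = k+m+1 then (1:ℝ) else t * b (k+i))^2 * v (k+i)
          - ∑ i ∈ Finset.range (m+1),
          ((if k+i = k+m+1 then (1:ℝ) else t * b (k+i)) *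
            (if k+i+1 = k+m+1 then (1:ℝ) else t * b (k+i+1)) * v (k+i)) = beta v k (m+1)
      rw [hS1, hS2]
      have := hbval
      nlinarith [hbval, hgoal]
end witness

section assemble
variable {v : ℕ → ℝ}

lemma exists_witness (hv : ∀ n, 0 < v n) (k n : ℕ) (hyp : v (k+n) < v k / 4) :
    ∃ b : ℕ → ℝ, (∀ i, 0 ≤ b i) ∧ (Summable fun i => (b i)^2 * v i) ∧
      0 < DD v b ∧ DD v b < NN v b := by
  classical
  obtain ⟨j, hj1, hjpos, hjle⟩ := beta_bad hv k n hyp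
  obtain ⟨b, hb0, hbsupp, hb1, hbval⟩ := witness_partial hv k j hjpos
  set ε := v (k+j) / (2 * v (k+j+1)) with hεdef
  have hε : 0 < ε := div_pos (hv (k+j)) (by linarith [hv (k+j+1)])
  set w : ℕ → ℝ := fun i => if i = k+j+1 then ε else b i with hwdef
  have hw0 : ∀ i, 0 ≤ w i := by
    intro i; simp only [hwdef]; split
    · exact hε.le
    · exact hb0 i
  have hwsupp : ∀ i, w i ≠ 0 → k ≤ i ∧ i ≤ k + j + 1 := by
    intro i hi
    simp only [hwdef] at hi
    by_cases h : i = k+j+1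
    · subst h; omega
    · rw [if_neg h] at hi
      have := hbsupp i hi
      omega
  -- partial sums of w agree with b's plus the epsilon term
  have hwb : ∀ i, i ≤ k + j → w i = b i := by
    intro i hi
    simp only [hwdef]
    rw [if_neg (by omega)]
  -- DD computation
  have hDsupp : ∀ i ∉ (Finset.range (j+2)).map ⟨fun i => k+i, add_right_injective k⟩,
      (w i)^2 * v i = 0 := by
    intro i hi
    simp only [Finset.mem_map, Finset.mem_range, Function.Embedding.coeFn_mk] at hi
    push_neg at hi
    have : w i = 0 := by
      by_contra hne
      have hb := hwsupp i hne
      obtain ⟨d, rfl⟩ := Nat.exists_eq_add_of_le hb.1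
      exact absurd rfl (hi d (by omega))
    rw [this]; ring
  have hDsum : Summable fun i => (w i)^2 * v i := summable_of_ne_finset_zero hDsupp
  have hDD : DD v w = ∑ i ∈ Finset.range (j+2), (w (k+i))^2 * v (k+i) := by
    unfold DD
    rw [tsum_eq_sum hDsupp, Finset.sum_map]
    rfl
  have hNsupp : ∀ i ∉ (Finset.range (j+1)).map ⟨fun i => k+i, add_right_injective k⟩,
      w i * w (i+1) * v i = 0 := by
    intro i hi
    simp only [Finset.mem_map, Finset.mem_range, Function.Embedding.coeFn_mk] at hi
    push_neg at hi
    by_cases h1 : w i = 0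
    · rw [h1]; ring
    by_cases h2 : w (i+1) = 0
    · rw [h2]; ring
    exfalso
    have hi1 := hwsupp i h1
    have hi2 := hwsupp (i+1) h2
    obtain ⟨d, rfl⟩ := Nat.exists_eq_add_of_le hi1.1
    exact absurd rfl (hi d (by omega))
  have hNN : NN v w = ∑ i ∈ Finset.range (j+1), w (k+i) * w (k+i+1) * v (k+i) := by
    unfold NN
    rw [tsum_eq_sum hNsupp, Finset.sum_map]
    rfl
  -- compute the sums
  have hwlast : w (k+j+1) = ε := by simp [hwdef]
  have hS1 : ∑ i ∈ Finset.range (j+2), (w (k+i))^2 * v (k+i)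
      = (∑ i ∈ Finset.range (j+1), (b (k+i))^2 * v (k+i)) + ε^2 * v (k+j+1) := by
    rw [Finset.sum_range_succ]
    congr 1
    · refine Finset.sum_congr rfl (fun i hi => ?_)
      rw [Finset.mem_range] at hi
      rw [hwb (k+i) (by omega)]
    · rw [show k+(j+1) = k+j+1 by omega, hwlast]
  have hS2 : ∑ i ∈ Finset.range (j+1), w (k+i) * w (k+i+1) * v (k+i)
      = (∑ i ∈ Finset.range j, b (k+i) * b (k+i+1) * v (k+i)) + ε * v (k+j) := by
    rw [Finset.sum_range_succ]
    congr 1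
    · refine Finset.sum_congr rfl (fun i hi => ?_)
      rw [Finset.mem_range] at hi
      rw [hwb (k+i) (by omega), hwb (k+i+1) (by omega)]
    · rw [hwb (k+j) (by omega), hwlast, hb1]
      ring
  have hkey : DD v w - NN v w = beta v k j + ε^2 * v (k+j+1) - ε * v (k+j) := by
    rw [hDD, hNN, hS1, hS2]
    linarith [hbval]
  have hneg : beta v k j + ε^2 * v (k+j+1) - ε * v (k+j) < 0 := by
    have hv1 : 0 < v (k+j+1) := hv (k+j+1)
    have hv2 : 0 < v (k+j) := hv (k+j)
    have he1 : ε^2 * v (k+j+1) = (v (k+j))^2 / (4 * v (k+j+1)) := by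
      rw [hεdef]; field_simp; ring
    have he2 : ε * v (k+j) = (v (k+j))^2 / (2 * v (k+j+1)) := by
      rw [hεdef]; field_simp
    rw [he1, he2]
    have heq : (v (k+j))^2 / (4 * v (k+j+1)) - (v (k+j))^2 / (2 * v (k+j+1))
        = -((v (k+j))^2 / (4 * v (k+j+1))) := by
      field_simp
      ring
    have hposq : 0 < (v (k+j))^2 / (4 * v (k+j+1)) := by positivity
    linarith [heq, hposq]
  have hDpos : 0 < DD v w := by
    unfold DD
    refine Summable.tsum_pos hDsum (sq_weight_nonneg w hv) (k+j) ?_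
    rw [hwb (k+j) (by omega), hb1]
    simpa using hv (k+j)
  exact ⟨w, hw0, hDsum, hDpos, by linarith [hkey, hneg]⟩
end assemble

set_option maxHeartbeats 1600000
open Filter

section weak
variable {v : ℕ → ℝ}

lemma amgm_abs (t a b : ℝ) (ht : 0 < t) : |a| * |b| ≤ a^2/(2*t) + t * b^2/2 := by
  have h3 : a^2/(2*t) + t*b^2/2 = (a^2 + t^2*b^2)/(2*t) := by field_simp
  rw [h3, le_div_iff₀ (by positivity)]
  nlinarith [sq_nonneg (|a| - t * |b|), sq_abs a, sq_abs b, abs_nonneg a, abs_nonneg b, ht.le]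

lemma weak_lemma (hv : ∀ n, 0 < v n) {B : ℝ} (hB : 0 < B) (e : ℕ → ℕ → ℝ)
    (he2 : ∀ j, Summable fun n => (e j n)^2 * v n)
    (heB : ∀ j, (∑' n : ℕ, (e j n)^2 * v n) ≤ B)
    (he0 : ∀ n, Tendsto (fun j => e j n) atTop (nhds 0))
    (z : ℕ → ℝ) (hz : Summable fun n => (z n)^2 * v n) :
    Tendsto (fun j => ∑' n : ℕ, e j n * z n * v n) atTop (nhds 0) := by
  rw [Metric.tendsto_atTop]
  intro η hη
  set t : ℝ := 2 * B / η with htdef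
  have ht : 0 < t := by positivity
  have htail := tendsto_sum_nat_add (fun n => (z n)^2 * v n)
  obtain ⟨M, hM0⟩ := (Metric.tendsto_atTop.mp htail) (η/(2*t)) (by positivity)
  have hM : (∑' n : ℕ, (z (n+M))^2 * v (n+M)) < η/(2*t) := by
    have := hM0 M le_rfl
    rw [Real.dist_eq, sub_zero] at this
    calc (∑' n : ℕ, (z (n+M))^2 * v (n+M)) ≤ |∑' n : ℕ, (z (n+M))^2 * v (n+M)| := le_abs_self _
      _ < η/(2*t) := this
  have hhead : Tendsto (fun j => ∑ i ∈ Finset.range M, e j i * z i * v i) atTop (nhds 0) := by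
    have h := tendsto_finset_sum (Finset.range M)
      (fun i (_ : i ∈ Finset.range M) => ((he0 i).mul_const (z i)).mul_const (v i))
    simpa using h
  rw [Metric.tendsto_atTop] at hhead
  obtain ⟨J, hJ⟩ := hhead (η / 4) (by positivity)
  refine ⟨J, fun j hj => ?_⟩
  have hsum : Summable fun n => e j n * z n * v n := summable_cross0 hv (he2 j) hz
  have hsplit := (Summable.sum_add_tsum_nat_add M hsum).symm
  have he2M : Summable fun n => (e j (n+M))^2 * v (n+M) := (summable_nat_add_iff M).2 (he2 j)
  have hz2M : Summable fun n => (z (n+M))^2 * v (n+M) := (summable_nat_add_iff M).2 hz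
  have habs : Summable fun n => |e j (n+M) * z (n+M) * v (n+M)| :=
    ((summable_nat_add_iff M).2 hsum).abs
  have htb : |∑' n : ℕ, e j (n+M) * z (n+M) * v (n+M)| ≤ η / 2 := by
    have h1 : |∑' n : ℕ, e j (n+M) * z (n+M) * v (n+M)|
        ≤ ∑' n : ℕ, |e j (n+M) * z (n+M) * v (n+M)| := by
      have := norm_tsum_le_tsum_norm (f := fun n => e j (n+M) * z (n+M) * v (n+M))
        (by simpa only [Real.norm_eq_abs] using habs)
      simpa only [Real.norm_eq_abs] using this
    have h2 : ∀ n, |e j (n+M) * z (n+M) * v (n+M)|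
        ≤ (e j (n+M))^2 * v (n+M) / (2*t) + t * ((z (n+M))^2 * v (n+M)) / 2 := by
      intro n
      have hvp := hv (n+M)
      rw [abs_mul, abs_of_pos hvp]
      have key := amgm_abs t (e j (n+M)) (z (n+M)) ht
      have h5 : |e j (n+M) * z (n+M)| = |e j (n+M)| * |z (n+M)| := abs_mul _ _
      rw [h5]
      have := mul_le_mul_of_nonneg_right key hvp.le
      calc |e j (n+M)| * |z (n+M)| * v (n+M)
          ≤ ((e j (n+M))^2/(2*t) + t * (z (n+M))^2/2) * v (n+M) := this
        _ = (e j (n+M))^2 * v (n+M) / (2*t) + t * ((z (n+M))^2 * v (n+M)) / 2 := by ring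
    have hsum2 : Summable fun n => (e j (n+M))^2 * v (n+M) / (2*t) + t * ((z (n+M))^2 * v (n+M)) / 2 :=
      (he2M.div_const _).add ((hz2M.mul_left t).div_const 2)
    have h3 := Summable.tsum_le_tsum h2 habs hsum2
    have h4 : ∑' n : ℕ, ((e j (n+M))^2 * v (n+M) / (2*t) + t * ((z (n+M))^2 * v (n+M)) / 2)
        = (∑' n : ℕ, (e j (n+M))^2 * v (n+M)) / (2*t) + t * (∑' n : ℕ, (z (n+M))^2 * v (n+M)) / 2 := by
      rw [Summable.tsum_add (he2M.div_const _) ((hz2M.mul_left t).div_const 2), tsum_div_const]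
      congr 1
      rw [mul_div_assoc, ← tsum_div_const, ← tsum_mul_left]
      exact tsum_congr (fun n => by ring)
    have h5 : ∑' n : ℕ, (e j (n+M))^2 * v (n+M) ≤ B := by
      refine le_trans ?_ (heB j)
      exact Summable.tsum_le_tsum_of_inj (fun n => n + M) (add_left_injective M)
        (fun c _ => sq_weight_nonneg (e j) hv c) (fun n => le_refl _) he2M (he2 j)
    have h6 : (∑' n : ℕ, (e j (n+M))^2 * v (n+M)) / (2*t) ≤ B / (2*t) := by gcongr
    have h7 : B / (2*t) = η / 4 := by rw [htdef]; field_simp; ring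
    have h8 : t * (∑' n : ℕ, (z (n+M))^2 * v (n+M)) / 2 ≤ t * (η / (2*t)) / 2 := by
      have := hM.le
      gcongr
    have h9 : t * (η / (2*t)) / 2 = η / 4 := by field_simp; ring
    calc |∑' n : ℕ, e j (n+M) * z (n+M) * v (n+M)|
        ≤ ∑' n : ℕ, |e j (n+M) * z (n+M) * v (n+M)| := h1
      _ ≤ ∑' n : ℕ, ((e j (n+M))^2 * v (n+M) / (2*t) + t * ((z (n+M))^2 * v (n+M)) / 2) := h3
      _ = (∑' n : ℕ, (e j (n+M))^2 * v (n+M)) / (2*t) + t * (∑' n : ℕ, (z (n+M))^2 * v (n+M)) / 2 := h4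
      _ ≤ η/4 + η/4 := add_le_add (h7 ▸ h6) (h9 ▸ h8)
      _ = η/2 := by ring
  have hhb : |∑ i ∈ Finset.range M, e j i * z i * v i| < η / 4 := by
    have := hJ j hj
    rwa [Real.dist_eq, sub_zero] at this
  rw [Real.dist_eq, sub_zero, hsplit]
  calc |∑ i ∈ Finset.range M, e j i * z i * v i + ∑' n : ℕ, e j (n+M) * z (n+M) * v (n+M)|
      ≤ |∑ i ∈ Finset.range M, e j i * z i * v i|
        + |∑' n : ℕ, e j (n+M) * z (n+M) * v (n+M)| := abs_add_le _ _
    _ < η := by linarith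
end weak


section head
variable {v : ℕ → ℝ}

lemma head_bound (hv : ∀ n, 0 < v n) {C2 δ : ℝ} (hδ : 0 < δ) (hC2b : 0 ≤ C2)
    (hC2a : ∀ n, v n ≤ C2 * v (n+1))
    {N : ℕ} (hN : ∀ n, N ≤ n → v n ≤ (1+δ) * v (n+1))
    (b : ℕ → ℝ) (hb0 : ∀ n, 0 ≤ b n) (hb : Summable fun n => (b n)^2 * v n) :
    NN v b ≤ (1 + δ/2) * DD v b + C2 * ∑ n ∈ Finset.range (N+2), (b n)^2 * v n := by
  classical
  have hsh : Summable fun n => (b (n+1))^2 * v (n+1) := (summable_nat_add_iff 1).2 hb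
  set g : ℕ → ℝ := fun n => (1+δ)*((b (n+1))^2 * v (n+1))
      + (if n < N then C2 * ((b (n+1))^2 * v (n+1)) else 0) with hgdef
  have hgsum : Summable g := by
    apply Summable.add (hsh.mul_left _)
    apply summable_of_ne_finset_zero (s := Finset.range N)
    intro n hn
    rw [Finset.mem_range] at hn
    simp [hn]
  clear_value g
  have hterm : ∀ n, b n * b (n+1) * v n ≤ ((b n)^2 * v n + g n)/2 := by
    intro n
    have h1 : 2 * (b n * b (n+1) * v n) ≤ (b n)^2 * v n + (b (n+1))^2 * v n := by
      nlinarith [sq_nonneg (b n - b (n+1)), (hv n).le]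
    have h2 : (b (n+1))^2 * v n ≤ g n := by
      by_cases hc : n < N
      · have : (b (n+1))^2 * v n ≤ C2 * ((b (n+1))^2 * v (n+1)) := by
          calc (b (n+1))^2 * v n ≤ (b (n+1))^2 * (C2 * v (n+1)) :=
                mul_le_mul_of_nonneg_left (hC2a n) (sq_nonneg _)
            _ = C2 * ((b (n+1))^2 * v (n+1)) := by ring
        rw [hgdef]; simp only [if_pos hc]
        nlinarith [mul_nonneg (mul_nonneg (le_of_lt (by linarith : (0:ℝ) < 1+δ)) (sq_nonneg (b (n+1)))) (hv (n+1)).le]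
      · push_neg at hc
        have : (b (n+1))^2 * v n ≤ (1+δ) * ((b (n+1))^2 * v (n+1)) := by
          calc (b (n+1))^2 * v n ≤ (b (n+1))^2 * ((1+δ) * v (n+1)) :=
                mul_le_mul_of_nonneg_left (hN n hc) (sq_nonneg _)
            _ = (1+δ) * ((b (n+1))^2 * v (n+1)) := by ring
        rw [hgdef]; simp only [if_neg (by omega : ¬ n < N)]
        linarith
    linarith
  have hNle : NN v b ≤ (DD v b + ∑' n, g n)/2 := by
    have h3 : NN v b ≤ ∑' n, ((b n)^2 * v n + g n)/2 :=
      Summable.tsum_le_tsum hterm (summable_cross hv hC2a hb hb) ((hb.add hgsum).div_const 2)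
    have h4 : ∑' n, ((b n)^2 * v n + g n)/2 = (DD v b + ∑' n, g n)/2 := by
      rw [tsum_div_const, Summable.tsum_add hb hgsum]; rfl
    linarith [h3, h4.le, h4.ge]
  have hgle : ∑' n, g n ≤ (1+δ) * DD v b + 2 * (C2 * ∑ n ∈ Finset.range (N+2), (b n)^2 * v n) := by
    have hite : Summable fun n => (if n < N then C2 * ((b (n+1))^2 * v (n+1)) else 0) := by
      apply summable_of_ne_finset_zero (s := Finset.range N)
      intro n hn
      rw [Finset.mem_range] at hn
      simp [hn]
    have hsplit : ∑' n, g n = (1+δ) * (∑' n, (b (n+1))^2 * v (n+1))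
        + ∑' n, (if n < N then C2 * ((b (n+1))^2 * v (n+1)) else 0) := by
      rw [hgdef, Summable.tsum_add (hsh.mul_left _) hite, tsum_mul_left]
    have h5 : ∑' n, (b (n+1))^2 * v (n+1) ≤ DD v b :=
      Summable.tsum_le_tsum_of_inj (fun n => n + 1) (add_left_injective 1)
        (fun c _ => sq_weight_nonneg b hv c) (fun n => le_refl _) hsh hb
    have h6 : ∑' n, (if n < N then C2 * ((b (n+1))^2 * v (n+1)) else 0)
        = ∑ n ∈ Finset.range N, C2 * ((b (n+1))^2 * v (n+1)) := by
      rw [tsum_eq_sum (s := Finset.range N)]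
      · exact Finset.sum_congr rfl (fun n hn => by rw [Finset.mem_range] at hn; simp [hn])
      · intro n hn
        rw [Finset.mem_range] at hn
        simp [hn]
    have h7 : ∑ n ∈ Finset.range N, ((b (n+1))^2 * v (n+1)) ≤ ∑ n ∈ Finset.range (N+2), (b n)^2 * v n := by
      rw [Finset.sum_range_succ' (fun m => (b m)^2 * v m) (N+1)]
      have hsub : ∑ n ∈ Finset.range N, ((b (n+1))^2 * v (n+1))
          ≤ ∑ n ∈ Finset.range (N+1), ((b (n+1))^2 * v (n+1)) := by
        apply Finset.sum_le_sum_of_subset_of_nonneg (Finset.range_subset_range.2 (by omega))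
        intro i _ _
        exact sq_weight_nonneg b hv (i+1)
      have h0 : 0 ≤ (b 0)^2 * v 0 := sq_weight_nonneg b hv 0
      linarith
    have h8 : ∑ n ∈ Finset.range N, C2 * ((b (n+1))^2 * v (n+1))
        ≤ C2 * ∑ n ∈ Finset.range (N+2), (b n)^2 * v n := by
      rw [← Finset.mul_sum]
      exact mul_le_mul_of_nonneg_left h7 hC2b
    have hDDn : 0 ≤ DD v b := tsum_nonneg (sq_weight_nonneg b hv)
    have hHn : 0 ≤ C2 * ∑ n ∈ Finset.range (N+2), (b n)^2 * v n :=
      mul_nonneg hC2b (Finset.sum_nonneg (fun i _ => sq_weight_nonneg b hv i))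
    rw [hsplit, h6]
    nlinarith [h5, h8, hδ]
  have hDDn : 0 ≤ DD v b := tsum_nonneg (sq_weight_nonneg b hv)
  have hHn : 0 ≤ C2 * ∑ n ∈ Finset.range (N+2), (b n)^2 * v n :=
    mul_nonneg hC2b (Finset.sum_nonneg (fun i _ => sq_weight_nonneg b hv i))
  linarith
end head

section attain
variable {v : ℕ → ℝ}

lemma NN_signed {v : ℕ → ℝ} (hv : ∀ n, 0 < v n) {C : ℝ} (hC : ∀ n, v n ≤ C * v (n+1))
    {U : ℝ} (hU : 0 ≤ U)
    (hkey : ∀ b : ℕ → ℝ, (∀ n, 0 ≤ b n) → (Summable fun n => (b n)^2 * v n) → NN v b ≤ U * DD v b)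
    (f : ℕ → ℝ) (hfs : Summable fun n => (f n)^2 * v n) :
    (∑' n : ℕ, f n * f (n+1) * v n) ≤ U * DD v f := by
  have habss : Summable fun n => (|f n|)^2 * v n := hfs.congr (fun n => by rw [← sq_abs])
  have h5 := hkey (fun n => |f n|) (fun n => abs_nonneg _) habss
  have hDeq : DD v (fun n => |f n|) = DD v f := tsum_congr (fun n => by rw [sq_abs])
  have hc1 : Summable fun n => f n * f (n+1) * v n := summable_cross hv hC hfs hfs
  have hc2 : Summable fun n => |f n| * |f (n+1)| * v n :=
    summable_cross (b := fun n => |f n|) (b' := fun n => |f n|) hv hC habss habss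
  have h6 : (∑' n : ℕ, f n * f (n+1) * v n) ≤ ∑' n : ℕ, |f n| * |f (n+1)| * v n := by
    refine Summable.tsum_le_tsum (fun n => ?_) hc1 hc2
    have h7 := mul_le_mul_of_nonneg_right (le_abs_self (f n * f (n+1))) (hv n).le
    rw [abs_mul] at h7
    exact h7
  have h8 : NN v (fun n => |f n|) = ∑' n : ℕ, |f n| * |f (n+1)| * v n := rfl
  rw [h8, hDeq] at h5
  linarith

lemma attainment (hv : ∀ n, 0 < v n) {C : ℝ} (hC1 : 1 ≤ C) (hC : ∀ n, v n ≤ C * v (n+1))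
    (hεp : ∀ ε : ℝ, 0 < ε → ∃ N, ∀ n, N ≤ n → v n ≤ (1+ε) * v (n+1))
    {U : ℝ} (hU : 1 < U)
    (hkey : ∀ b : ℕ → ℝ, (∀ n, 0 ≤ b n) → (Summable fun n => (b n)^2 * v n) → NN v b ≤ U * DD v b)
    (x : ℕ → ℕ → ℝ) (hx0 : ∀ j n, 0 ≤ x j n) (hxs : ∀ j, Summable fun n => (x j n)^2 * v n)
    (hxD : ∀ j, DD v (x j) = 1) (hxN : Filter.Tendsto (fun j => NN v (x j)) Filter.atTop (nhds U)) :
    ∃ z : ℕ → ℝ, (∀ n, 0 ≤ z n) ∧ (Summable fun n => (z n)^2 * v n) ∧ 0 < DD v z ∧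
      U * DD v z ≤ NN v z := by
  classical
  -- uniform coordinate bounds
  set M : ℕ → ℝ := fun n => Real.sqrt (1 / v n) with hMdef
  have hxM : ∀ j n, x j n ∈ Set.Icc (0:ℝ) (M n) := by
    intro j n
    refine ⟨hx0 j n, ?_⟩
    have h1 : (x j n)^2 * v n ≤ 1 := by
      rw [← hxD j]
      exact Summable.le_tsum (hxs j) n (fun m _ => sq_weight_nonneg (x j) hv m)
    have h2 : (x j n)^2 ≤ 1 / v n := by
      rw [le_div_iff₀ (hv n)]
      linarith
    rw [hMdef]
    exact (Real.le_sqrt (hx0 j n) (div_nonneg zero_le_one (hv n).le)).2 h2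
  -- compact set
  have hK : IsCompact (Set.univ.pi (fun n => Set.Icc (0:ℝ) (M n))) :=
    isCompact_univ_pi (fun n => isCompact_Icc)
  have hxK : ∀ j, x j ∈ Set.univ.pi (fun n => Set.Icc (0:ℝ) (M n)) := by
    intro j
    rw [Set.mem_univ_pi]
    exact fun n => hxM j n
  obtain ⟨z, hzK, φ, hφ, hconv⟩ := hK.tendsto_subseq hxK
  have hpt : ∀ n, Filter.Tendsto (fun j => x (φ j) n) Filter.atTop (nhds (z n)) := by
    intro n
    exact tendsto_pi_nhds.1 hconv n
  set y : ℕ → ℕ → ℝ := fun j => x (φ j) with hydef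
  have hy0 : ∀ j n, 0 ≤ y j n := fun j n => hx0 (φ j) n
  have hys : ∀ j, Summable fun n => (y j n)^2 * v n := fun j => hxs (φ j)
  have hyD : ∀ j, DD v (y j) = 1 := fun j => hxD (φ j)
  have hyN : Filter.Tendsto (fun j => NN v (y j)) Filter.atTop (nhds U) :=
    hxN.comp (hφ.tendsto_atTop)
  have hpty : ∀ n, Filter.Tendsto (fun j => y j n) Filter.atTop (nhds (z n)) := hpt
  clear_value y
  have hz0 : ∀ n, 0 ≤ z n := by
    intro n
    rw [Set.mem_univ_pi] at hzK
    exact (hzK n).1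
  -- partial-sum limits
  have hfin : ∀ s : Finset ℕ, Filter.Tendsto (fun j => ∑ n ∈ s, (y j n)^2 * v n)
      Filter.atTop (nhds (∑ n ∈ s, (z n)^2 * v n)) := by
    intro s
    refine tendsto_finset_sum _ (fun n _ => ?_)
    exact ((hpty n).pow 2).mul_const (v n)
  have hzsum : Summable fun n => (z n)^2 * v n := by
    apply summable_of_sum_le (c := 1) (fun n => sq_weight_nonneg z hv n)
    intro s
    refine le_of_tendsto (hfin s) ?_
    filter_upwards with j
    rw [← hyD j]
    exact Summable.sum_le_tsum s (fun n _ => sq_weight_nonneg (y j) hv n) (hys j)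
  have hzD1 : DD v z ≤ 1 := by
    apply Summable.tsum_le_of_sum_le hzsum
    intro s
    refine le_of_tendsto (hfin s) ?_
    filter_upwards with j
    rw [← hyD j]
    exact Summable.sum_le_tsum s (fun n _ => sq_weight_nonneg (y j) hv n) (hys j)
  -- head mass
  set δ : ℝ := (U - 1)/2 with hδdef
  have hδ : 0 < δ := by rw [hδdef]; linarith
  obtain ⟨N, hN⟩ := hεp δ hδ
  set C2 : ℝ := C + U with hC2def
  have hC2b : 0 ≤ C2 := by rw [hC2def]; linarith
  have hC2a : ∀ n, v n ≤ C2 * v (n+1) := by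
    intro n
    calc v n ≤ C * v (n+1) := hC n
      _ ≤ C2 * v (n+1) := by
          rw [hC2def]
          nlinarith [hv (n+1), hU]
  set μ : ℝ := δ / C2 with hμdef
  have hμ : 0 < μ := div_pos hδ (by rw [hC2def]; linarith)
  clear_value δ C2 μ
  have hHj : ∀ᶠ j in Filter.atTop, μ ≤ ∑ n ∈ Finset.range (N+2), (y j n)^2 * v n := by
    have hev : ∀ᶠ j in Filter.atTop, U - δ/2 < NN v (y j) := by
      apply hyN.eventually
      exact eventually_gt_nhds (by linarith)
    filter_upwards [hev] with j hj
    have hb := head_bound hv hδ hC2b hC2a hN (y j) (hy0 j) (hys j)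
    rw [hyD j] at hb
    have hC2pos : 0 < C2 := by rw [hC2def]; linarith
    rw [hμdef, div_le_iff₀ hC2pos]
    have : U = 1 + 2*δ := by rw [hδdef]; ring
    nlinarith [hb, hj]
  have hzDpos : 0 < DD v z := by
    have hlim := hfin (Finset.range (N+2))
    have hzH : μ ≤ ∑ n ∈ Finset.range (N+2), (z n)^2 * v n :=
      ge_of_tendsto hlim hHj
    have : ∑ n ∈ Finset.range (N+2), (z n)^2 * v n ≤ DD v z :=
      Summable.sum_le_tsum _ (fun n _ => sq_weight_nonneg z hv n) hzsum
    linarith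
  -- error sequences
  set e : ℕ → ℕ → ℝ := fun j n => y j n - z n with hedef
  clear_value e
  have he0 : ∀ n, Filter.Tendsto (fun j => e j n) Filter.atTop (nhds 0) := by
    intro n
    have := (hpty n).sub_const (z n)
    simpa [hedef] using this
  have hes : ∀ j, Summable fun n => (e j n)^2 * v n := by
    intro j
    have hb : Summable fun n => 2*((y j n)^2 * v n) + 2*((z n)^2 * v n) :=
      ((hys j).mul_left 2).add (hzsum.mul_left 2)
    refine Summable.of_nonneg_of_le (fun n => sq_weight_nonneg (e j) hv n) ?_ hb
    intro n
    have : (e j n)^2 ≤ 2*(y j n)^2 + 2*(z n)^2 := by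
      simp only [hedef]
      nlinarith [sq_nonneg (y j n + z n)]
    nlinarith [(hv n).le, sq_nonneg (y j n), sq_nonneg (z n)]
  have heB : ∀ j, (∑' n : ℕ, (e j n)^2 * v n) ≤ 4 := by
    intro j
    have hb : Summable fun n => 2*((y j n)^2 * v n) + 2*((z n)^2 * v n) :=
      ((hys j).mul_left 2).add (hzsum.mul_left 2)
    have h1 : (∑' n : ℕ, (e j n)^2 * v n) ≤ ∑' n, (2*((y j n)^2 * v n) + 2*((z n)^2 * v n)) := by
      refine Summable.tsum_le_tsum ?_ (hes j) hb
      intro n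
      have : (e j n)^2 ≤ 2*(y j n)^2 + 2*(z n)^2 := by
        simp only [hedef]
        nlinarith [sq_nonneg (y j n + z n)]
      nlinarith [(hv n).le, sq_nonneg (y j n), sq_nonneg (z n)]
    have h2 : ∑' n, (2*((y j n)^2 * v n) + 2*((z n)^2 * v n))
        = 2 * DD v (y j) + 2 * DD v z := by
      rw [Summable.tsum_add ((hys j).mul_left 2) (hzsum.mul_left 2), tsum_mul_left, tsum_mul_left]
      rfl
    rw [hyD j] at h2
    linarith [h1, h2.le, h2.ge, hzD1]
  -- weak limits
  have hP : Filter.Tendsto (fun j => ∑' n : ℕ, e j n * z n * v n) Filter.atTop (nhds 0) :=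
    weak_lemma hv (by norm_num) e hes heB he0 z hzsum
  have hR1 : Filter.Tendsto (fun j => ∑' n : ℕ, e j n * z (n+1) * v n) Filter.atTop (nhds 0) := by
    have hz' : Summable fun n => (z (n+1))^2 * v n := summable_shift hv hC hzsum
    exact weak_lemma hv (by norm_num) e hes heB he0 (fun n => z (n+1)) hz'
  have hR2 : Filter.Tendsto (fun j => ∑' n : ℕ, z n * e j (n+1) * v n) Filter.atTop (nhds 0) := by
    have he' : ∀ j, Summable fun n => (e j (n+1))^2 * v n := fun j => summable_shift hv hC (hes j)
    have he'B : ∀ j, (∑' n : ℕ, (e j (n+1))^2 * v n) ≤ C * 4 := by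
      intro j
      have h1 : ∀ n, (e j (n+1))^2 * v n ≤ C * ((e j (n+1))^2 * v (n+1)) := by
        intro n
        calc (e j (n+1))^2 * v n ≤ (e j (n+1))^2 * (C * v (n+1)) :=
              mul_le_mul_of_nonneg_left (hC n) (sq_nonneg _)
          _ = C * ((e j (n+1))^2 * v (n+1)) := by ring
      have hsh : Summable fun n => (e j (n+1))^2 * v (n+1) := (summable_nat_add_iff 1).2 (hes j)
      have h2 := Summable.tsum_le_tsum h1 (he' j) (hsh.mul_left C)
      have h3 : ∑' n, C * ((e j (n+1))^2 * v (n+1)) = C * ∑' n, (e j (n+1))^2 * v (n+1) :=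
        tsum_mul_left
      have h4 : ∑' n, (e j (n+1))^2 * v (n+1) ≤ ∑' n, (e j n)^2 * v n :=
        Summable.tsum_le_tsum_of_inj (fun n => n + 1) (add_left_injective 1)
          (fun c _ => sq_weight_nonneg (e j) hv c) (fun n => le_refl _) hsh (hes j)
      have h5 := heB j
      have hC0 : 0 ≤ C := by linarith
      nlinarith [h2, h3.le, h3.ge, h4, h5]
    have hwl := weak_lemma hv (mul_pos (by linarith : (0:ℝ) < C) (by norm_num : (0:ℝ) < 4))
      (fun j n => e j (n+1)) he' he'B (fun n => he0 (n+1)) z hzsum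
    refine hwl.congr (fun j => tsum_congr (fun n => by ring))
  -- decompositions and final bound
  have hmain : ∀ θ : ℝ, 0 < θ → U * DD v z ≤ NN v z + θ := by
    intro θ hθ
    have hUpos : (0:ℝ) < U := by linarith
    set θ' : ℝ := θ / (2*U + 3) with hθ'def
    have hθ' : 0 < θ' := div_pos hθ (by linarith)
    clear_value θ'
    have hev1 : ∀ᶠ j in Filter.atTop, |∑' n : ℕ, e j n * z n * v n| < θ' := by
      have := hP
      rw [Metric.tendsto_atTop] at this
      obtain ⟨J, hJ⟩ := this θ' hθ'
      filter_upwards [Filter.eventually_ge_atTop J] with j hj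
      have := hJ j hj
      rwa [Real.dist_eq, sub_zero] at this
    have hev2 : ∀ᶠ j in Filter.atTop, |∑' n : ℕ, e j n * z (n+1) * v n| < θ' := by
      have := hR1
      rw [Metric.tendsto_atTop] at this
      obtain ⟨J, hJ⟩ := this θ' hθ'
      filter_upwards [Filter.eventually_ge_atTop J] with j hj
      have := hJ j hj
      rwa [Real.dist_eq, sub_zero] at this
    have hev3 : ∀ᶠ j in Filter.atTop, |∑' n : ℕ, z n * e j (n+1) * v n| < θ' := by
      have := hR2
      rw [Metric.tendsto_atTop] at this
      obtain ⟨J, hJ⟩ := this θ' hθ'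
      filter_upwards [Filter.eventually_ge_atTop J] with j hj
      have := hJ j hj
      rwa [Real.dist_eq, sub_zero] at this
    have hev4 : ∀ᶠ j in Filter.atTop, U - θ' < NN v (y j) :=
      hyN.eventually (eventually_gt_nhds (by linarith))
    obtain ⟨j, ⟨⟨h1, h2⟩, h3⟩, h4⟩ := (((hev1.and hev2).and hev3).and hev4).exists
    -- decomposition of DD
    have hcross : Summable fun n => e j n * z n * v n := summable_cross0 hv (hes j) hzsum
    have hDdec : DD v (y j) = DD v z + DD v (e j) + 2 * ∑' n : ℕ, e j n * z n * v n := by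
      have hpw : ∀ n, (y j n)^2 * v n
          = (z n)^2 * v n + ((e j n)^2 * v n + 2 * (e j n * z n * v n)) := by
        intro n
        have : y j n = z n + e j n := by simp only [hedef]; ring
        rw [this]; ring
      have hs2 : Summable fun n => (e j n)^2 * v n + 2 * (e j n * z n * v n) :=
        (hes j).add (hcross.mul_left 2)
      calc DD v (y j) = ∑' n, ((z n)^2 * v n + ((e j n)^2 * v n + 2 * (e j n * z n * v n))) :=
            tsum_congr hpw
        _ = DD v z + ∑' n, ((e j n)^2 * v n + 2 * (e j n * z n * v n)) := by
            rw [Summable.tsum_add hzsum hs2]; rfl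
        _ = DD v z + (DD v (e j) + 2 * ∑' n : ℕ, e j n * z n * v n) := by
            rw [Summable.tsum_add (hes j) (hcross.mul_left 2), tsum_mul_left]; rfl
        _ = DD v z + DD v (e j) + 2 * ∑' n : ℕ, e j n * z n * v n := by ring
    -- decomposition of NN
    have hc1 : Summable fun n => e j n * e j (n+1) * v n := summable_cross hv hC (hes j) (hes j)
    have hc2 : Summable fun n => e j n * z (n+1) * v n := summable_cross hv hC (hes j) hzsum
    have hc3 : Summable fun n => z n * e j (n+1) * v n := summable_cross hv hC hzsum (hes j)
    have hc4 : Summable fun n => z n * z (n+1) * v n := summable_cross hv hC hzsum hzsum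
    have hNdec : NN v (y j) = NN v z + (∑' n : ℕ, e j n * e j (n+1) * v n)
        + (∑' n : ℕ, e j n * z (n+1) * v n) + (∑' n : ℕ, z n * e j (n+1) * v n) := by
      have hpw : ∀ n, y j n * y j (n+1) * v n
          = z n * z (n+1) * v n + (e j n * e j (n+1) * v n
            + (e j n * z (n+1) * v n + z n * e j (n+1) * v n)) := by
        intro n
        have ha : y j n = z n + e j n := by simp only [hedef]; ring
        have hb : y j (n+1) = z (n+1) + e j (n+1) := by simp only [hedef]; ring
        rw [ha, hb]; ring
      calc NN v (y j) = ∑' n, (z n * z (n+1) * v n + (e j n * e j (n+1) * v n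
            + (e j n * z (n+1) * v n + z n * e j (n+1) * v n))) := tsum_congr hpw
        _ = NN v z + ∑' n, (e j n * e j (n+1) * v n
            + (e j n * z (n+1) * v n + z n * e j (n+1) * v n)) := by
            rw [Summable.tsum_add hc4 (hc1.add (hc2.add hc3))]; rfl
        _ = NN v z + ((∑' n : ℕ, e j n * e j (n+1) * v n)
            + ((∑' n : ℕ, e j n * z (n+1) * v n) + (∑' n : ℕ, z n * e j (n+1) * v n))) := by
            rw [Summable.tsum_add hc1 (hc2.add hc3), Summable.tsum_add hc2 hc3]
        _ = _ := by ring
    have hNe : (∑' n : ℕ, e j n * e j (n+1) * v n) ≤ U * DD v (e j) :=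
      NN_signed hv hC hUpos.le hkey (e j) (hes j)
    -- put it together
    have hDe : DD v (e j) ≤ 1 - DD v z + 2*θ' := by
      have := hDdec
      rw [hyD j] at this
      have habs := abs_lt.1 h1
      linarith [this.le, this.ge, habs.1, habs.2]
    have habs2 := abs_lt.1 h2
    have habs3 := abs_lt.1 h3
    have hNz : NN v z ≥ (U - θ') - U * (1 - DD v z + 2*θ') - θ' - θ' := by
      have h8 : NN v (y j) > U - θ' := h4
      have h9 := hNdec
      have h10 : (∑' n : ℕ, e j n * e j (n+1) * v n) ≤ U * (1 - DD v z + 2*θ') := by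
        refine le_trans hNe ?_
        exact mul_le_mul_of_nonneg_left hDe hUpos.le
      linarith [h9.le, h9.ge, habs2.1, habs3.1]
    have hfin2 : U * DD v z ≤ NN v z + (2*U + 3) * θ' := by nlinarith [hNz]
    have : (2*U + 3) * θ' = θ := by
      rw [hθ'def]
      field_simp
    linarith
  have : U * DD v z ≤ NN v z := by
    by_contra hcon
    push_neg at hcon
    obtain ⟨θ, hθ1, hθ2⟩ : ∃ θ : ℝ, 0 < θ ∧ NN v z + θ < U * DD v z :=
      ⟨(U * DD v z - NN v z)/2, by linarith, by linarith⟩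
    linarith [hmain θ hθ1]
  exact ⟨z, hz0, hzsum, hzDpos, this⟩
end attain

section bridge
variable {ω : ℕ → ℝ} {C : ℝ}

/-- B2 : real nonneg sequences give elements of S with value NN/DD. -/
lemma bridge2 (hpos : ∀ n, 0 < ω n) (hCa : ∀ n, ω n ≤ C * ω (n+1))
    (b : ℕ → ℝ) (hb0 : ∀ n, 0 ≤ b n) (hb : Summable fun n => (b n)^2 * ω (n+1))
    (m : ℕ) (hm : b m ≠ 0) :
    Admissible ω (fun n => (b n : ℂ)) ∧
      ‖theta ω (fun n => (b n : ℂ))‖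
        = NN (fun n => ω (n+1)) b / DD (fun n => ω (n+1)) b := by
  set v : ℕ → ℝ := fun n => ω (n+1) with hv
  have hveq : ∀ n, ‖(b n : ℂ)‖ = b n := fun n => by
    rw [Complex.norm_real]; exact abs_of_nonneg (hb0 n)
  have hsum1 : Summable (fun n => ‖(b n : ℂ)‖^2 * ω n) := by
    have : Summable (fun n => C * ((b n)^2 * v n)) := hb.mul_left C
    refine Summable.of_nonneg_of_le (fun n => mul_nonneg (sq_nonneg _) (hpos n).le) ?_ this
    intro n
    rw [hveq n]
    calc (b n)^2 * ω n ≤ (b n)^2 * (C * ω (n+1)) := mul_le_mul_of_nonneg_left (hCa n) (sq_nonneg _)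
      _ = C * ((b n)^2 * v n) := by ring
  have hpos1 : 0 < ∑' n, ‖(b n : ℂ)‖^2 * ω n := by
    refine Summable.tsum_pos hsum1 (fun n => mul_nonneg (sq_nonneg _) (hpos n).le) m ?_
    rw [hveq m]
    exact mul_pos (pow_pos (lt_of_le_of_ne (hb0 m) (Ne.symm hm)) 2) (hpos m)
  have hDen : thetaDen ω (fun n => (b n : ℂ)) = DD v b := by
    unfold thetaDen DD
    congr 1; funext n; rw [hveq n]
  have hNum : thetaNum ω (fun n => (b n : ℂ)) = (NN v b : ℂ) := by
    unfold thetaNum NN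
    rw [Complex.ofReal_tsum]
    congr 1; funext n
    rw [Complex.conj_ofReal]
    push_cast
    ring
  have hNn : 0 ≤ NN v b := tsum_nonneg (fun n => mul_nonneg (mul_nonneg (hb0 n) (hb0 (n+1))) (hpos (n+1)).le)
  have hDn : 0 ≤ DD v b := tsum_nonneg (sq_weight_nonneg b (fun n => hpos (n+1)))
  refine ⟨⟨hsum1, hpos1⟩, ?_⟩
  unfold theta
  rw [hNum, hDen, ← Complex.ofReal_div, Complex.norm_real, Real.norm_eq_abs]
  exact abs_of_nonneg (div_nonneg hNn hDn)

/-- B1 : every element of S is dominated by NN/DD of the modulus sequence. -/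
lemma bridge1 (hpos : ∀ n, 0 < ω n) (hCb : ∀ n, ω (n+1) ≤ C * ω n) (hCa : ∀ n, ω n ≤ C * ω (n+1))
    (a : ℕ → ℂ) (ha : Admissible ω a) :
    (Summable fun n => (‖a n‖)^2 * ω (n+1)) ∧ 0 < DD (fun n => ω (n+1)) (fun n => ‖a n‖) ∧
      ‖theta ω a‖ ≤ NN (fun n => ω (n+1)) (fun n => ‖a n‖) / DD (fun n => ω (n+1)) (fun n => ‖a n‖) := by
  set v : ℕ → ℝ := fun n => ω (n+1) with hv
  set b : ℕ → ℝ := fun n => ‖a n‖ with hbdef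
  have hvpos : ∀ n, 0 < v n := fun n => hpos (n+1)
  have hsum : Summable fun n => (b n)^2 * v n := by
    have : Summable (fun n => C * (‖a n‖^2 * ω n)) := ha.1.mul_left C
    refine Summable.of_nonneg_of_le (fun n => sq_weight_nonneg b hvpos n) ?_ this
    intro n
    calc (b n)^2 * v n ≤ (b n)^2 * (C * ω n) := mul_le_mul_of_nonneg_left (hCb n) (sq_nonneg _)
      _ = C * (‖a n‖^2 * ω n) := by ring
  have hex : ∃ m, a m ≠ 0 := by
    by_contra hc
    push_neg at hc
    have : ∀ n, ‖a n‖^2 * ω n = 0 := fun n => by rw [hc n]; simp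
    have h0 : (∑' n, ‖a n‖^2 * ω n) = 0 := by
      rw [tsum_congr this]; exact tsum_zero
    exact absurd h0 (ne_of_gt ha.2)
  obtain ⟨m, hm⟩ := hex
  have hDpos : 0 < DD v b := by
    refine Summable.tsum_pos hsum (sq_weight_nonneg b hvpos) m ?_
    exact mul_pos (pow_pos (norm_pos_iff.2 hm) 2) (hvpos m)
  refine ⟨hsum, hDpos, ?_⟩
  have hCv : ∀ n, v n ≤ C * v (n+1) := fun n => hCa (n+1)
  have hnorm : Summable fun n => ‖(starRingEnd ℂ) (a n) * a (n+1) * ((ω (n+1) : ℝ) : ℂ)‖ := by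
    have h1 := summable_cross_abs hvpos hCv hsum hsum
    refine h1.congr (fun n => ?_)
    rw [abs_of_nonneg (mul_nonneg (mul_nonneg (norm_nonneg _) (norm_nonneg _)) (hvpos n).le)]
    rw [norm_mul, norm_mul, RCLike.norm_conj, Complex.norm_real, Real.norm_eq_abs,
      abs_of_nonneg (hpos (n+1)).le]
  have hNumle : ‖thetaNum ω a‖ ≤ NN v b := by
    refine le_trans (norm_tsum_le_tsum_norm hnorm) (le_of_eq ?_)
    unfold NN
    refine tsum_congr (fun n => ?_)
    rw [norm_mul, norm_mul, RCLike.norm_conj, Complex.norm_real, Real.norm_eq_abs,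
      abs_of_nonneg (hpos (n+1)).le]
  have hDen : thetaDen ω a = DD v b := rfl
  unfold theta
  rw [norm_div, hDen, Complex.norm_real, Real.norm_eq_abs, abs_of_pos hDpos]
  exact (div_le_div_iff_of_pos_right hDpos).2 hNumle
end bridge


open Filter in
theorem stmt1 (ω : ℕ → ℝ) (hpos : ∀ n, 0 < ω n) (h0 : ω 0 = 1)
    (hlim : Filter.Tendsto (fun n => ω n / ω (n + 1)) Filter.atTop (nhds 1))
    (h : ∃ n k : ℕ, ω (k + n + 1) < ω (k + 1) / 4) :
    1 < Uomega ω ∧ ∃ a : ℕ → ℂ, Admissible ω a ∧ ‖theta ω a‖ = Uomega ω := by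
  classical
  obtain ⟨n, k, hnk⟩ := h
  set v : ℕ → ℝ := fun m => ω (m+1) with hvdef
  have hv : ∀ m, 0 < v m := fun m => hpos (m+1)
  -- uniform ratio bounds
  obtain ⟨c1, hc1⟩ := hlim.bddAbove_range
  have hinv : Tendsto (fun m => ω (m+1) / ω m) atTop (nhds 1) := by
    have h1 := hlim.inv₀ (one_ne_zero)
    simp only [inv_one] at h1
    refine h1.congr (fun m => ?_)
    rw [← one_div, one_div_div]
  obtain ⟨c2, hc2⟩ := hinv.bddAbove_range
  set C : ℝ := max (max c1 c2) 1 with hCdef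
  have hC1 : 1 ≤ C := le_max_right _ 1
  have hCa : ∀ m, ω m ≤ C * ω (m+1) := by
    intro m
    have h1 : ω m / ω (m+1) ≤ c1 := hc1 ⟨m, rfl⟩
    have h2 : c1 ≤ C := le_trans (le_max_left _ _) (le_max_left _ _)
    rw [div_le_iff₀ (hpos (m+1))] at h1
    nlinarith [hpos (m+1)]
  have hCb : ∀ m, ω (m+1) ≤ C * ω m := by
    intro m
    have h1 : ω (m+1) / ω m ≤ c2 := hc2 ⟨m, rfl⟩
    have h2 : c2 ≤ C := le_trans (le_max_right _ _) (le_max_left _ _)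
    rw [div_le_iff₀ (hpos m)] at h1
    nlinarith [hpos m]
  have hCv : ∀ m, v m ≤ C * v (m+1) := fun m => hCa (m+1)
  have hεp : ∀ ε : ℝ, 0 < ε → ∃ N, ∀ m, N ≤ m → v m ≤ (1+ε) * v (m+1) := by
    intro ε hε
    have hev : ∀ᶠ m in atTop, ω m / ω (m+1) < 1 + ε :=
      hlim.eventually (eventually_lt_nhds (by linarith))
    obtain ⟨N, hN⟩ := eventually_atTop.1 hev
    refine ⟨N, fun m hm => ?_⟩
    have h1 := hN (m+1) (by omega)
    rw [div_lt_iff₀ (hpos (m+2))] at h1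
    exact le_of_lt h1
  -- the set S
  set S : Set ℝ := {x : ℝ | ∃ a : ℕ → ℂ, Admissible ω a ∧ x = ‖theta ω a‖} with hSdef
  have hUdef : Uomega ω = sSup S := rfl
  -- S nonempty
  have hSne : S.Nonempty := by
    set a0 : ℕ → ℂ := fun m => if m = 0 then 1 else 0 with ha0
    have hsum0 : Summable (fun m => ‖a0 m‖^2 * ω m) := by
      apply summable_of_ne_finset_zero (s := {0})
      intro m hm
      simp only [Finset.mem_singleton] at hm
      simp [ha0, hm]
    have hpos0 : 0 < ∑' m, ‖a0 m‖^2 * ω m := by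
      refine Summable.tsum_pos hsum0 (fun m => mul_nonneg (sq_nonneg _) (hpos m).le) 0 ?_
      simp [ha0, hpos 0]
    exact ⟨‖theta ω a0‖, ⟨a0, ⟨hsum0, hpos0⟩, rfl⟩⟩
  -- S bounded above
  have hSbdd : BddAbove S := by
    refine ⟨(1+C)/2, fun x hx => ?_⟩
    obtain ⟨a, ha, rfl⟩ := hx
    obtain ⟨hsum, hDpos, hle⟩ := bridge1 hpos hCb hCa a ha
    refine le_trans hle ?_
    rw [div_le_iff₀ hDpos]
    exact NN_le_DD hv hCv (by linarith) (fun m => norm_nonneg _) hsum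
  -- key upper bound for all nonneg sequences
  have hkey : ∀ b : ℕ → ℝ, (∀ m, 0 ≤ b m) → (Summable fun m => (b m)^2 * v m) →
      NN v b ≤ sSup S * DD v b := by
    intro b hb0 hbs
    by_cases hz : ∀ m, b m = 0
    · have hN0 : NN v b = 0 := by
        unfold NN
        have he : (fun m => b m * b (m+1) * v m) = fun _ => (0:ℝ) :=
          funext fun m => by rw [hz m]; ring
        rw [he, tsum_zero]
      have hD0 : DD v b = 0 := by
        unfold DD
        have he : (fun m => (b m)^2 * v m) = fun _ => (0:ℝ) :=
          funext fun m => by rw [hz m]; ring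
        rw [he, tsum_zero]
      rw [hN0, hD0]
      simp
    · push_neg at hz
      obtain ⟨m, hm⟩ := hz
      have hDpos : 0 < DD v b :=
        Summable.tsum_pos hbs (sq_weight_nonneg b hv) m
          (mul_pos (pow_pos (lt_of_le_of_ne (hb0 m) (Ne.symm hm)) 2) (hv m))
      obtain ⟨hadm, hval⟩ := bridge2 hpos hCa b hb0 hbs m hm
      have hmem : NN v b / DD v b ∈ S := ⟨_, hadm, hval.symm⟩
      have := le_csSup hSbdd hmem
      rw [div_le_iff₀ hDpos] at this
      linarith
  -- U > 1
  have hUgt : 1 < sSup S := by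
    have hyp' : v (k+n) < v k / 4 := hnk
    obtain ⟨b, hb0, hbs, hDpos, hlt⟩ := exists_witness hv k n hyp'
    have hz : ∃ m, b m ≠ 0 := by
      by_contra hc
      push_neg at hc
      have : DD v b = 0 := by
        unfold DD
        have he : (fun m => (b m)^2 * v m) = fun _ => (0:ℝ) :=
          funext fun m => by rw [hc m]; ring
        rw [he, tsum_zero]
      linarith
    obtain ⟨m, hm⟩ := hz
    obtain ⟨hadm, hval⟩ := bridge2 hpos hCa b hb0 hbs m hm
    have hmem : NN v b / DD v b ∈ S := ⟨_, hadm, hval.symm⟩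
    have h1 : 1 < NN v b / DD v b := (one_lt_div hDpos).2 hlt
    exact lt_of_lt_of_le h1 (le_csSup hSbdd hmem)
  -- maximizing sequence
  obtain ⟨u, humono, hut, humem⟩ := exists_seq_tendsto_sSup hSne hSbdd
  have hxex : ∀ j, ∃ b : ℕ → ℝ, (∀ m, 0 ≤ b m) ∧ (Summable fun m => (b m)^2 * v m) ∧
      DD v b = 1 ∧ u j ≤ NN v b ∧ NN v b ≤ sSup S := by
    intro j
    obtain ⟨a, ha, hval⟩ := humem j
    obtain ⟨hsum, hDpos, hle⟩ := bridge1 hpos hCb hCa a ha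
    set b : ℕ → ℝ := fun m => ‖a m‖ with hbdef
    set r : ℝ := (Real.sqrt (DD v b))⁻¹ with hrdef
    have hr : 0 < r := by
      rw [hrdef]
      exact inv_pos.2 (Real.sqrt_pos.2 hDpos)
    have hr2 : r^2 = (DD v b)⁻¹ := by
      rw [hrdef, ← Real.sqrt_inv, Real.sq_sqrt (inv_nonneg.2 hDpos.le)]
    set b2 : ℕ → ℝ := fun m => r * b m with hb2def
    have hb20 : ∀ m, 0 ≤ b2 m := fun m => mul_nonneg hr.le (norm_nonneg _)
    have hb2s : Summable fun m => (b2 m)^2 * v m :=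
      (hsum.mul_left (r^2)).congr (fun m => by simp only [hb2def]; ring)
    have hb2D : DD v b2 = 1 := by
      have h9 : DD v b2 = r^2 * DD v b := by
        unfold DD
        rw [← tsum_mul_left]
        exact tsum_congr (fun m => by simp only [hb2def]; ring)
      rw [h9, hr2]
      exact inv_mul_cancel₀ hDpos.ne'
    have hb2N : u j ≤ NN v b2 := by
      have hNN : NN v b2 = r^2 * NN v b := by
        unfold NN
        rw [← tsum_mul_left]
        exact tsum_congr (fun m => by simp only [hb2def]; ring)
      rw [hNN, hr2]
      have h2 : u j ≤ NN v b / DD v b := by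
        rw [hval]; exact hle
      calc u j ≤ NN v b / DD v b := h2
        _ = (DD v b)⁻¹ * NN v b := by rw [div_eq_mul_inv]; ring
    have hb2hi : NN v b2 ≤ sSup S := by
      have h3 := hkey b2 hb20 hb2s
      rw [hb2D] at h3
      linarith
    exact ⟨b2, hb20, hb2s, hb2D, hb2N, hb2hi⟩
  choose x hx0 hxs hxD hxlo hxhi using hxex
  have hxN : Tendsto (fun j => NN v (x j)) atTop (nhds (sSup S)) :=
    tendsto_of_tendsto_of_tendsto_of_le_of_le hut tendsto_const_nhds hxlo hxhi
  -- attainment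
  obtain ⟨z, hz0, hzs, hzD, hzNN⟩ :=
    attainment hv hC1 hCv hεp hUgt hkey x hx0 hxs hxD hxN
  have hzNN2 : NN v z ≤ sSup S * DD v z := hkey z hz0 hzs
  have heq : NN v z / DD v z = sSup S := by
    rw [div_eq_iff hzD.ne']
    linarith
  have hzne : ∃ m, z m ≠ 0 := by
    by_contra hc
    push_neg at hc
    have : DD v z = 0 := by
      unfold DD
      have he : (fun m => (z m)^2 * v m) = fun _ => (0:ℝ) :=
        funext fun m => by rw [hc m]; ring
      rw [he, tsum_zero]
    linarith
  obtain ⟨m, hm⟩ := hzne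
  obtain ⟨hadm, hval⟩ := bridge2 hpos hCa z hz0 hzs m hm
  rw [heq] at hval
  exact ⟨hUgt, ⟨fun m => (z m : ℂ), hadm, hval⟩⟩
end

section
/- Let k ∈ ℕ and n ≥ 1. Define a : ℕ → ℂ by a k = 1, a (k+j) = 2 for 1 ≤ j ≤ n, and a m = 0 for all other m. Then a is admissible and Θ_ω(a) = 1 + (ω (k+1) − 4 · ω (n+k+1)) / (ω (k+1) + 4 · Σ_{t=1}^{n} ω (t+k+1)). -/
open scoped BigOperators

theorem stmt2 (ω : ℕ → ℝ) (hpos : ∀ n, 0 < ω n) (h0 : ω 0 = 1)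
    (hlim : Filter.Tendsto (fun n => ω n / ω (n + 1)) Filter.atTop (nhds 1))
    (k n : ℕ) (hn : 1 ≤ n) (a : ℕ → ℂ)
    (ha : ∀ m : ℕ, a m = if m = k then 1 else if k + 1 ≤ m ∧ m ≤ k + n then 2 else 0) :
    Admissible ω a ∧
      theta ω a = 1 + (((ω (k + 1) - 4 * ω (n + k + 1)) /
        (ω (k + 1) + 4 * ∑ t ∈ Finset.Icc 1 n, ω (t + k + 1)) : ℝ) : ℂ) := by
  obtain ⟨m, rfl⟩ : ∃ m, n = m + 1 := ⟨n - 1, (Nat.succ_pred_eq_of_pos hn).symm⟩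
  set N := m + 1 with hN
  have hz : ∀ j ∉ Finset.Icc k (k + N), a j = 0 := by
    intro j hj
    rw [ha]
    split_ifs with h1 h2
    · exact absurd (Finset.mem_Icc.mpr (by omega)) hj
    · exact absurd (Finset.mem_Icc.mpr (by omega)) hj
    · rfl
  have hak : a k = 1 := by rw [ha]; simp
  have ha2 : ∀ t, 1 ≤ t → t ≤ N → a (k + t) = 2 := by
    intro t h1 h2
    rw [ha]
    rw [if_neg (by omega), if_pos (by omega)]
  have hsum0 : Summable (fun j => ‖a j‖ ^ 2 * ω j) :=
    summable_of_ne_finset_zero (s := Finset.Icc k (k + N))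
      (fun j hj => by simp [hz j hj])
  have hsum1 : Summable (fun j => ‖a j‖ ^ 2 * ω (j + 1)) :=
    summable_of_ne_finset_zero (s := Finset.Icc k (k + N))
      (fun j hj => by simp [hz j hj])
  -- reindexing helper
  have key : ∀ g : ℕ → ℝ, (∑ t ∈ Finset.Icc 1 N, g (t + k + 1))
      = ∑ i ∈ Finset.range N, g (k + i + 2) := by
    intro g
    rw [← Finset.Ico_add_one_right_eq_Icc, Finset.sum_Ico_eq_sum_range]
    apply Finset.sum_congr (by norm_num)
    intro i _
    congr 1
    omega
  have hden : thetaDen ω a = ω (k + 1) + 4 * ∑ t ∈ Finset.Icc 1 N, ω (t + k + 1) := by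
    rw [thetaDen, tsum_eq_sum (s := Finset.Icc k (k + N)) (fun j hj => by simp [hz j hj])]
    rw [← Finset.Ico_add_one_right_eq_Icc, Finset.sum_Ico_eq_sum_range]
    have h1 : k + N + 1 - k = N + 1 := by omega
    rw [h1, Finset.sum_range_succ']
    have h2 : ∀ i ∈ Finset.range N,
        ‖a (k + (i + 1))‖ ^ 2 * ω (k + (i + 1) + 1) = 4 * ω (k + i + 2) := by
      intro i hi
      rw [ha2 (i + 1) (by omega) (by simp at hi; omega)]
      have : k + (i + 1) + 1 = k + i + 2 := by omega
      rw [this]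
      norm_num
    rw [Finset.sum_congr rfl h2, key, ← Finset.mul_sum]
    simp [hak]
    ring
  have hnum : thetaNum ω a
      = ((thetaDen ω a + (ω (k + 1) - 4 * ω (N + k + 1)) : ℝ) : ℂ) := by
    rw [thetaNum, tsum_eq_sum (s := Finset.Icc k (k + N))
      (fun j hj => by simp [hz j hj])]
    rw [← Finset.Ico_add_one_right_eq_Icc, Finset.sum_Ico_eq_sum_range]
    have h1 : k + N + 1 - k = N + 1 := by omega
    rw [h1, Finset.sum_range_succ']
    have h2 : ∀ i ∈ Finset.range N,
        (starRingEnd ℂ) (a (k + (i + 1))) * a (k + (i + 1) + 1) * (ω (k + (i + 1) + 1) : ℂ)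
          = (if i + 1 < N then (4 : ℂ) * (ω (k + i + 2) : ℂ) else 0) := by
      intro i hi
      simp only [Finset.mem_range] at hi
      rw [ha2 (i + 1) (by omega) (by omega)]
      by_cases hlt : i + 1 < N
      · rw [if_pos hlt]
        have e1 : k + (i + 1) + 1 = k + (i + 2) := by omega
        rw [e1, ha2 (i + 2) (by omega) (by omega)]
        have e2 : k + (i + 2) = k + i + 2 := by omega
        rw [e2]
        norm_num
        left
        rw [map_ofNat]
        norm_num
      · rw [if_neg hlt]
        have e1 : k + (i + 1) + 1 = k + N + 1 := by omega
        rw [e1]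
        have : a (k + N + 1) = 0 := hz _ (by simp only [Finset.mem_Icc, not_and, not_le]; omega)
        rw [this]
        ring
    rw [Finset.sum_congr rfl h2]
    have h3 : (∑ i ∈ Finset.range N, (if i + 1 < N then (4 : ℂ) * (ω (k + i + 2) : ℂ) else 0))
        = ∑ i ∈ Finset.range m, (4 : ℂ) * (ω (k + i + 2) : ℂ) := by
      rw [hN, Finset.sum_range_succ, if_neg (by omega)]
      rw [add_zero]
      apply Finset.sum_congr rfl
      intro i hi
      simp only [Finset.mem_range] at hi
      rw [if_pos (by omega)]
    rw [h3, hden, key]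
    have e0 : k + 0 = k := by omega
    have e1 : k + 0 + 1 = k + 1 := by omega
    rw [e0, e1, hak]
    have hk1 : a (k + 1) = 2 := by
      have := ha2 1 le_rfl (by omega); simpa using this
    rw [hk1]
    have hrange : (∑ i ∈ Finset.range N, ω (k + i + 2))
        = (∑ i ∈ Finset.range m, ω (k + i + 2)) + ω (N + k + 1) := by
      rw [hN, Finset.sum_range_succ]
      congr 2
      omega
    rw [hrange]
    simp only [map_one, one_mul]
    push_cast
    rw [← Finset.mul_sum]
    ring
  have hdenpos : 0 < thetaDen ω a := by
    rw [hden]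
    have : 0 ≤ ∑ t ∈ Finset.Icc 1 N, ω (t + k + 1) :=
      Finset.sum_nonneg (fun t _ => (hpos _).le)
    have := hpos (k + 1)
    linarith
  refine ⟨⟨hsum0, ?_⟩, ?_⟩
  · rw [tsum_eq_sum (s := Finset.Icc k (k + N)) (fun j hj => by simp [hz j hj])]
    apply Finset.sum_pos'
    · intro i _
      exact mul_nonneg (by positivity) (hpos i).le
    · refine ⟨k, Finset.mem_Icc.mpr (by omega), ?_⟩
      rw [hak]
      simpa using hpos k
  · rw [theta, hnum, hden]
    have hne : (((ω (k + 1) + 4 * ∑ t ∈ Finset.Icc 1 N, ω (t + k + 1)) : ℝ) : ℂ) ≠ 0 := by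
      rw [hden] at hdenpos
      exact_mod_cast hdenpos.ne'
    rw [Complex.ofReal_add, Complex.ofReal_sub, Complex.ofReal_div, Complex.ofReal_sub,
      add_div, div_self hne]
end

section
/- For every N ≥ 1 the supremum defining U_{ω,N} is attained by some nonzero tuple (a₀, …, a_N) ∈ ℝ^{N+1}, and U_ω = lim_{N→∞} U_{ω,N}. -/
open scoped BigOperators

/-- The finite-dimensional quotient (Σ_{n<N} aₙ aₙ₊₁ ω(n+1)) / (Σ_{n≤N} aₙ² ω(n+1)). -/
noncomputable def thetaFin (ω : ℕ → ℝ) (N : ℕ) (a : ℕ → ℝ) : ℝ :=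
  (∑ n ∈ Finset.range N, a n * a (n + 1) * ω (n + 1)) /
    ∑ n ∈ Finset.range (N + 1), a n ^ 2 * ω (n + 1)

/-- The finite-dimensional extremal quantity U_{ω,N}. -/
noncomputable def UomegaFin (ω : ℕ → ℝ) (N : ℕ) : ℝ :=
  sSup {x : ℝ | ∃ a : ℕ → ℝ, (∃ j, j ≤ N ∧ a j ≠ 0) ∧ x = thetaFin ω N a}


section Helpers
open Finset Filter

variable {ω : ℕ → ℝ} {C : ℝ}


lemma denFin_pos (hpos : ∀ n, 0 < ω n) {N : ℕ} {a : ℕ → ℝ} {j : ℕ} (hj : j ≤ N) (hja : a j ≠ 0) :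
    0 < ∑ n ∈ Finset.range (N + 1), a n ^ 2 * ω (n + 1) := by
  apply Finset.sum_pos' (fun i _ => mul_nonneg (sq_nonneg _) (hpos _).le)
  refine ⟨j, Finset.mem_range.2 (Nat.lt_succ_of_le hj), ?_⟩
  have h2 : 0 < a j ^ 2 := by positivity
  exact mul_pos h2 (hpos _)

lemma numFin_le (hpos : ∀ n, 0 < ω n) (hC : ∀ n, ω n ≤ C * ω (n + 1))
    (N : ℕ) (a : ℕ → ℝ) :
    ∑ n ∈ Finset.range N, a n * a (n + 1) * ω (n + 1)
      ≤ Real.sqrt C * ∑ n ∈ Finset.range (N + 1), a n ^ 2 * ω (n + 1) := by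
  have hCpos : 0 < C := by nlinarith [hpos 0, hpos 1, hC 0]
  set D := ∑ n ∈ Finset.range (N + 1), a n ^ 2 * ω (n + 1) with hD
  have hDnonneg : 0 ≤ D := Finset.sum_nonneg fun i _ => mul_nonneg (sq_nonneg _) (hpos _).le
  set Num := ∑ n ∈ Finset.range N, a n * a (n + 1) * ω (n + 1) with hNum
  have h1 : Num ^ 2 ≤ (∑ n ∈ Finset.range N, a n ^ 2 * ω (n + 1)) *
      (∑ n ∈ Finset.range N, a (n + 1) ^ 2 * ω (n + 1)) := by
    have h := Finset.sum_mul_sq_le_sq_mul_sq (Finset.range N)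
      (fun n => a n * Real.sqrt (ω (n + 1))) (fun n => a (n + 1) * Real.sqrt (ω (n + 1)))
    have e1 : ∑ n ∈ Finset.range N, (a n * Real.sqrt (ω (n+1))) * (a (n+1) * Real.sqrt (ω (n+1)))
        = Num := by
      refine Finset.sum_congr rfl fun n _ => ?_
      calc (a n * Real.sqrt (ω (n+1))) * (a (n+1) * Real.sqrt (ω (n+1)))
          = a n * a (n+1) * (Real.sqrt (ω (n+1)) * Real.sqrt (ω (n+1))) := by ring
        _ = a n * a (n+1) * ω (n+1) := by rw [Real.mul_self_sqrt (hpos _).le]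
    have e2 : ∑ n ∈ Finset.range N, (a n * Real.sqrt (ω (n+1))) ^ 2
        = ∑ n ∈ Finset.range N, a n ^ 2 * ω (n + 1) := by
      refine Finset.sum_congr rfl fun n _ => ?_
      rw [mul_pow, Real.sq_sqrt (hpos (n+1)).le]
    have e3 : ∑ n ∈ Finset.range N, (a (n+1) * Real.sqrt (ω (n+1))) ^ 2
        = ∑ n ∈ Finset.range N, a (n+1) ^ 2 * ω (n + 1) := by
      refine Finset.sum_congr rfl fun n _ => ?_
      rw [mul_pow, Real.sq_sqrt (hpos (n+1)).le]
    rw [e1, e2, e3] at h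
    exact h
  have h2 : ∑ n ∈ Finset.range N, a n ^ 2 * ω (n + 1) ≤ D :=
    Finset.sum_le_sum_of_subset_of_nonneg
      (Finset.range_subset_range.2 (Nat.le_succ N)) (fun i _ _ => mul_nonneg (sq_nonneg _) (hpos _).le)
  have h3 : ∑ n ∈ Finset.range N, a (n + 1) ^ 2 * ω (n + 1) ≤ C * D := by
    have s1 : ∑ n ∈ Finset.range N, a (n + 1) ^ 2 * ω (n + 1)
        ≤ ∑ n ∈ Finset.range N, a (n + 1) ^ 2 * (C * ω (n + 2)) :=
      Finset.sum_le_sum fun n _ => mul_le_mul_of_nonneg_left (hC (n+1)) (sq_nonneg _)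
    have s2 : ∑ n ∈ Finset.range N, a (n + 1) ^ 2 * (C * ω (n + 2))
        = C * ∑ n ∈ Finset.range N, a (n + 1) ^ 2 * ω (n + 2) := by
      rw [Finset.mul_sum]; exact Finset.sum_congr rfl fun n _ => by ring
    have s3 : ∑ n ∈ Finset.range N, a (n + 1) ^ 2 * ω (n + 2) ≤ D := by
      have := Finset.sum_range_succ' (fun n => a n ^ 2 * ω (n + 1)) N
      have h0 : 0 ≤ a 0 ^ 2 * ω 1 := mul_nonneg (sq_nonneg _) (hpos _).le
      rw [hD, this]
      nlinarith []
    calc ∑ n ∈ Finset.range N, a (n + 1) ^ 2 * ω (n + 1)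
        ≤ C * ∑ n ∈ Finset.range N, a (n + 1) ^ 2 * ω (n + 2) := by rw [← s2]; exact s1
      _ ≤ C * D := mul_le_mul_of_nonneg_left s3 hCpos.le
  have hsq : Num ^ 2 ≤ C * D ^ 2 := by
    have hb : 0 ≤ ∑ n ∈ Finset.range N, a (n+1) ^ 2 * ω (n + 1) :=
      Finset.sum_nonneg fun i _ => mul_nonneg (sq_nonneg _) (hpos _).le
    calc Num ^ 2 ≤ (∑ n ∈ Finset.range N, a n ^ 2 * ω (n + 1)) *
        (∑ n ∈ Finset.range N, a (n + 1) ^ 2 * ω (n + 1)) := h1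
      _ ≤ D * (C * D) := mul_le_mul h2 h3 hb hDnonneg
      _ = C * D ^ 2 := by ring
  rcases le_or_gt Num 0 with h | h
  · exact h.trans (mul_nonneg (Real.sqrt_nonneg _) hDnonneg)
  · have : Num = Real.sqrt (Num ^ 2) := (Real.sqrt_sq h.le).symm
    rw [this]
    calc Real.sqrt (Num ^ 2) ≤ Real.sqrt (C * D ^ 2) := Real.sqrt_le_sqrt hsq
      _ = Real.sqrt C * D := by
          rw [Real.sqrt_mul hCpos.le, Real.sqrt_sq hDnonneg]

lemma zero_mem_TN (N : ℕ) :
    (0 : ℝ) ∈ {x : ℝ | ∃ a : ℕ → ℝ, (∃ j, j ≤ N ∧ a j ≠ 0) ∧ x = thetaFin ω N a} := by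
  refine ⟨fun n => if n = 0 then 1 else 0, ⟨0, Nat.zero_le _, by simp⟩, ?_⟩
  have hnum : ∑ n ∈ Finset.range N, (if n = 0 then (1:ℝ) else 0) * (if n + 1 = 0 then (1:ℝ) else 0) * ω (n + 1) = 0 :=
    Finset.sum_eq_zero fun n _ => by simp
  simp [thetaFin, hnum]

lemma TN_bddAbove (hpos : ∀ n, 0 < ω n) (hC : ∀ n, ω n ≤ C * ω (n + 1)) (N : ℕ) :
    BddAbove {x : ℝ | ∃ a : ℕ → ℝ, (∃ j, j ≤ N ∧ a j ≠ 0) ∧ x = thetaFin ω N a} := by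
  refine ⟨Real.sqrt C, ?_⟩
  rintro x ⟨a, ⟨j, hj, hja⟩, rfl⟩
  rw [thetaFin, div_le_iff₀ (denFin_pos hpos hj hja)]
  exact numFin_le hpos hC N a

lemma UomegaFin_le_sqrt (hpos : ∀ n, 0 < ω n) (hC : ∀ n, ω n ≤ C * ω (n + 1)) (N : ℕ) :
    UomegaFin ω N ≤ Real.sqrt C :=
  csSup_le ⟨0, zero_mem_TN N⟩ (by
    rintro x ⟨a, ⟨j, hj, hja⟩, rfl⟩
    rw [thetaFin, div_le_iff₀ (denFin_pos hpos hj hja)]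
    exact numFin_le hpos hC N a)

lemma UomegaFin_nonneg (hpos : ∀ n, 0 < ω n) (hC : ∀ n, ω n ≤ C * ω (n + 1)) (N : ℕ) :
    0 ≤ UomegaFin ω N :=
  le_csSup (TN_bddAbove hpos hC N) (zero_mem_TN N)


lemma UomegaFin_mono (hpos : ∀ n, 0 < ω n) (hC : ∀ n, ω n ≤ C * ω (n + 1)) (N : ℕ) :
    UomegaFin ω N ≤ UomegaFin ω (N + 1) := by
  apply csSup_le ⟨0, zero_mem_TN N⟩
  rintro x ⟨a, ⟨j, hj, hja⟩, rfl⟩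
  apply le_csSup (TN_bddAbove hpos hC (N + 1))
  refine ⟨fun n => if n ≤ N then a n else 0, ⟨j, hj.trans (Nat.le_succ N), by simp [hj, hja]⟩, ?_⟩
  have hnum : ∑ n ∈ Finset.range (N + 1),
      (if n ≤ N then a n else 0) * (if n + 1 ≤ N then a (n + 1) else 0) * ω (n + 1)
      = ∑ n ∈ Finset.range N, a n * a (n + 1) * ω (n + 1) := by
    rw [Finset.sum_range_succ]
    have : (if N + 1 ≤ N then a (N + 1) else (0:ℝ)) = 0 := by simp
    rw [this]
    simp only [mul_zero, zero_mul, add_zero]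
    refine Finset.sum_congr rfl fun n hn => ?_
    have hn' := Finset.mem_range.1 hn
    rw [if_pos (by omega : n ≤ N), if_pos (by omega : n + 1 ≤ N)]
  have hden : ∑ n ∈ Finset.range (N + 2), (if n ≤ N then a n else 0) ^ 2 * ω (n + 1)
      = ∑ n ∈ Finset.range (N + 1), a n ^ 2 * ω (n + 1) := by
    rw [Finset.sum_range_succ]
    have : (if N + 1 ≤ N then a (N + 1) else (0:ℝ)) = 0 := by simp
    rw [this]
    simp only [ne_eq, OfNat.ofNat_ne_zero, not_false_eq_true, zero_pow, zero_mul, add_zero]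
    refine Finset.sum_congr rfl fun n hn => ?_
    have hn' := Finset.mem_range.1 hn
    rw [if_pos (by omega : n ≤ N)]
  rw [thetaFin, thetaFin, hnum, hden]

noncomputable def extFin (N : ℕ) (v : Fin (N + 1) → ℝ) : ℕ → ℝ :=
  fun n => if h : n < N + 1 then v ⟨n, h⟩ else 0

lemma extFin_lt {N n : ℕ} (v : Fin (N + 1) → ℝ) (h : n < N + 1) :
    extFin N v n = v ⟨n, h⟩ := dif_pos h

noncomputable def numF (ω : ℕ → ℝ) (N : ℕ) (v : Fin (N + 1) → ℝ) : ℝ :=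
  ∑ i : Fin N, v i.castSucc * v i.succ * ω (i.val + 1)

noncomputable def denF (ω : ℕ → ℝ) (N : ℕ) (v : Fin (N + 1) → ℝ) : ℝ :=
  ∑ i : Fin (N + 1), v i ^ 2 * ω (i.val + 1)

lemma num_ext (N : ℕ) (v : Fin (N + 1) → ℝ) :
    ∑ n ∈ Finset.range N, extFin N v n * extFin N v (n + 1) * ω (n + 1) = numF ω N v := by
  rw [numF, ← Fin.sum_univ_eq_sum_range (fun n => extFin N v n * extFin N v (n + 1) * ω (n + 1)) N]
  refine Finset.sum_congr rfl fun i _ => ?_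
  rw [extFin_lt v (by omega), extFin_lt v (by omega)]
  rfl

lemma den_ext (N : ℕ) (v : Fin (N + 1) → ℝ) :
    ∑ n ∈ Finset.range (N + 1), extFin N v n ^ 2 * ω (n + 1) = denF ω N v := by
  rw [denF, ← Fin.sum_univ_eq_sum_range (fun n => extFin N v n ^ 2 * ω (n + 1)) (N + 1)]
  refine Finset.sum_congr rfl fun i _ => ?_
  rw [extFin_lt v i.isLt]

lemma exists_max (hpos : ∀ n, 0 < ω n) (hC : ∀ n, ω n ≤ C * ω (n + 1)) (N : ℕ) :
    ∃ a : ℕ → ℝ, (∃ j, j ≤ N ∧ a j ≠ 0) ∧ thetaFin ω N a = UomegaFin ω N := by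
  have hnum_cont : Continuous (numF ω N) := by
    unfold numF
    exact continuous_finset_sum _ fun i _ =>
      ((continuous_apply i.castSucc).mul (continuous_apply i.succ)).mul continuous_const
  have hden_cont : Continuous (denF ω N) := by
    unfold denF
    exact continuous_finset_sum _ fun i _ =>
      ((continuous_apply i).pow 2).mul continuous_const
  set S : Set (Fin (N + 1) → ℝ) := {v | denF ω N v = 1} with hS
  -- S is compact
  have hclosed : IsClosed S := isClosed_eq hden_cont continuous_const
  have hsub : S ⊆ Set.univ.pi (fun i : Fin (N + 1) =>
      Set.Icc (-(Real.sqrt (1 / ω (i.val + 1)))) (Real.sqrt (1 / ω (i.val + 1)))) := by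
    intro v hv i _
    have hterm : v i ^ 2 * ω (i.val + 1) ≤ 1 := by
      have h1 : v i ^ 2 * ω (i.val + 1) ≤ denF ω N v :=
        Finset.single_le_sum (f := fun i : Fin (N+1) => v i ^ 2 * ω (i.val + 1))
          (fun j _ => mul_nonneg (sq_nonneg _) (hpos _).le) (Finset.mem_univ i)
      rw [hv] at h1; exact h1
    have h2 : v i ^ 2 ≤ 1 / ω (i.val + 1) := by
      rw [le_div_iff₀ (hpos _)]; exact hterm
    have h3 : |v i| ≤ Real.sqrt (1 / ω (i.val + 1)) := by
      rw [← Real.sqrt_sq_eq_abs]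
      exact Real.sqrt_le_sqrt h2
    exact abs_le.1 h3
  have hScompact : IsCompact S :=
    IsCompact.of_isClosed_subset (isCompact_univ_pi fun i => isCompact_Icc) hclosed hsub
  -- S is nonempty
  have hSne : S.Nonempty := by
    refine ⟨fun i => if i = 0 then Real.sqrt (1 / ω 1) else 0, ?_⟩
    show denF ω N _ = 1
    rw [denF, Finset.sum_eq_single 0]
    · rw [if_pos rfl, Real.sq_sqrt (one_div_pos.2 (hpos 1)).le]
      simp only [Fin.val_zero]
      rw [one_div, inv_mul_cancel₀ (hpos 1).ne']
    · intro i _ hi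
      simp [hi]
    · simp
  obtain ⟨v, hvS, hmax'⟩ := hScompact.exists_isMaxOn hSne hnum_cont.continuousOn
  have hmax : ∀ w ∈ S, numF ω N w ≤ numF ω N v := fun w hw => hmax' hw
  -- the maximizer
  set a : ℕ → ℝ := extFin N v with ha
  have hdv : denF ω N v = 1 := hvS
  have hvne : ∃ j, j ≤ N ∧ a j ≠ 0 := by
    by_contra h
    push_neg at h
    have : denF ω N v = 0 := by
      rw [← den_ext]
      refine Finset.sum_eq_zero fun n hn => ?_
      have hn' := Finset.mem_range.1 hn
      have : a n = 0 := h n (by omega)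
      rw [← ha] at *
      simp [this]
    rw [hdv] at this; norm_num at this
  have hth : thetaFin ω N a = numF ω N v := by
    rw [thetaFin, num_ext, den_ext, hdv, div_one]
  refine ⟨a, hvne, ?_⟩
  rw [hth]
  -- numF ω N v = sSup
  apply le_antisymm
  · apply le_csSup (TN_bddAbove hpos hC N)
    exact ⟨a, hvne, hth.symm⟩
  · apply csSup_le ⟨0, zero_mem_TN N⟩
    rintro x ⟨b, ⟨j, hj, hjb⟩, rfl⟩
    set d := ∑ n ∈ Finset.range (N + 1), b n ^ 2 * ω (n + 1) with hd
    have hdpos : 0 < d := by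
      apply Finset.sum_pos' (fun i _ => mul_nonneg (sq_nonneg _) (hpos _).le)
      exact ⟨j, Finset.mem_range.2 (Nat.lt_succ_of_le hj),
        mul_pos (by positivity) (hpos _)⟩
    set w : Fin (N + 1) → ℝ := fun i => b i.val / Real.sqrt d with hw
    have hextw : ∀ n (h : n < N + 1), extFin N w n = b n / Real.sqrt d := fun n h => by
      rw [extFin_lt w h]
    have hdenw : denF ω N w = 1 := by
      rw [← den_ext]
      have : ∀ n ∈ Finset.range (N + 1), extFin N w n ^ 2 * ω (n + 1)
          = b n ^ 2 * ω (n + 1) / d := by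
        intro n hn
        rw [hextw n (Finset.mem_range.1 hn), div_pow, Real.sq_sqrt hdpos.le]
        ring
      rw [Finset.sum_congr rfl this, ← Finset.sum_div, ← hd, div_self hdpos.ne']
    have hnumw : numF ω N w = thetaFin ω N b := by
      rw [← num_ext, thetaFin, ← hd]
      rw [Finset.sum_div]
      refine Finset.sum_congr rfl fun n hn => ?_
      have hn' := Finset.mem_range.1 hn
      rw [hextw n (by omega), hextw (n+1) (by omega)]
      rw [div_mul_div_comm, Real.mul_self_sqrt hdpos.le]
      ring
    calc thetaFin ω N b = numF ω N w := hnumw.symm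
      _ ≤ numF ω N v := hmax w hdenw

lemma tendsto_UomegaFin (ω : ℕ → ℝ) (hpos : ∀ n, 0 < ω n) (h0 : ω 0 = 1)
    (hlim : Filter.Tendsto (fun n => ω n / ω (n + 1)) Filter.atTop (nhds 1)) :
    Filter.Tendsto (fun N => UomegaFin ω N) Filter.atTop (nhds (Uomega ω)) := by
  obtain ⟨C, hC⟩ : ∃ C, ∀ n, ω n ≤ C * ω (n + 1) := by
    obtain ⟨C, hC⟩ := hlim.bddAbove_range
    refine ⟨C, fun n => ?_⟩
    have h1 : ω n / ω (n + 1) ≤ C := hC (Set.mem_range_self n)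
    rwa [div_le_iff₀ (hpos (n + 1))] at h1
  obtain ⟨C₂, hC₂⟩ : ∃ C₂, ∀ n, ω (n + 1) ≤ C₂ * ω n := by
    have h2 : Tendsto (fun n => ω (n + 1) / ω n) atTop (nhds 1) := by
      have := hlim.inv₀ one_ne_zero
      simp only [inv_div, inv_one] at this
      exact this
    obtain ⟨C₂, hC₂⟩ := h2.bddAbove_range
    refine ⟨C₂, fun n => ?_⟩
    have h1 : ω (n + 1) / ω n ≤ C₂ := hC₂ (Set.mem_range_self n)
    rwa [div_le_iff₀ (hpos n)] at h1
  have hbddL : BddAbove (Set.range fun N => UomegaFin ω N) :=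
    ⟨Real.sqrt C, by rintro x ⟨N, rfl⟩; exact UomegaFin_le_sqrt hpos hC N⟩
  set L := ⨆ N, UomegaFin ω N with hL
  have hL0 : 0 ≤ L := (UomegaFin_nonneg hpos hC 0).trans (le_ciSup hbddL 0)
  -- Step 6: admissible bound
  have hadm_bound : ∀ a : ℕ → ℂ, Admissible ω a → ‖theta ω a‖ ≤ L := by
    intro a ha
    obtain ⟨j₀, hj₀⟩ : ∃ j, a j ≠ 0 := by
      by_contra h
      push_neg at h
      have hz : ∑' n : ℕ, ‖a n‖ ^ 2 * ω n = 0 := by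
        have : ∀ n : ℕ, ‖a n‖ ^ 2 * ω n = 0 := fun n => by simp [h n]
        rw [tsum_congr this, tsum_zero]
      have h2 := ha.2
      rw [hz] at h2
      exact lt_irrefl 0 h2
    have hsum2 : Summable (fun n => ‖a n‖ ^ 2 * ω (n + 1)) := by
      have hcomp : ∀ n : ℕ, ‖a n‖ ^ 2 * ω (n + 1) ≤ C₂ * (‖a n‖ ^ 2 * ω n) := by
        intro n
        calc ‖a n‖ ^ 2 * ω (n + 1) ≤ ‖a n‖ ^ 2 * (C₂ * ω n) :=
              mul_le_mul_of_nonneg_left (hC₂ n) (sq_nonneg _)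
          _ = C₂ * (‖a n‖ ^ 2 * ω n) := by ring
      exact Summable.of_nonneg_of_le (fun n => mul_nonneg (sq_nonneg _) (hpos _).le)
        hcomp (ha.1.mul_left C₂)
    have hDpos : 0 < thetaDen ω a := by
      rw [thetaDen]
      exact Summable.tsum_pos hsum2 (fun n => mul_nonneg (sq_nonneg _) (hpos _).le) j₀
        (mul_pos (pow_pos (norm_pos_iff.2 hj₀) 2) (hpos _))
    set g : ℕ → ℝ := fun n => ‖a n‖ * ‖a (n + 1)‖ * ω (n + 1) with hgdef
    have hshift : Summable (fun n => ‖a (n + 1)‖ ^ 2 * ω (n + 1)) :=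
      (summable_nat_add_iff 1).2 ha.1
    have hg : Summable g := by
      have hcomp : ∀ n : ℕ, g n ≤ (‖a n‖ ^ 2 * ω (n + 1) + ‖a (n + 1)‖ ^ 2 * ω (n + 1)) / 2 := by
        intro n
        have h1 : 0 ≤ ω (n + 1) := (hpos _).le
        simp only [hgdef]
        nlinarith [mul_nonneg h1 (sq_nonneg (‖a n‖ - ‖a (n + 1)‖))]
      exact Summable.of_nonneg_of_le
        (fun n => mul_nonneg (mul_nonneg (norm_nonneg _) (norm_nonneg _)) (hpos _).le)
        hcomp ((hsum2.add hshift).div_const 2)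
    have hnormeq : ∀ n : ℕ, ‖(starRingEnd ℂ) (a n) * a (n + 1) * ((ω (n + 1) : ℝ) : ℂ)‖ = g n := by
      intro n
      rw [norm_mul, norm_mul, RCLike.norm_conj, Complex.norm_real, Real.norm_eq_abs,
        abs_of_pos (hpos _)]
    have habs : ‖thetaNum ω a‖ ≤ ∑' n, g n := by
      rw [thetaNum]
      calc ‖∑' n : ℕ, (starRingEnd ℂ) (a n) * a (n + 1) * ((ω (n + 1) : ℝ) : ℂ)‖
          ≤ ∑' n : ℕ, ‖(starRingEnd ℂ) (a n) * a (n + 1) * ((ω (n + 1) : ℝ) : ℂ)‖ :=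
            norm_tsum_le_tsum_norm (by simpa only [hnormeq] using hg)
        _ = ∑' n, g n := tsum_congr hnormeq
    have hpart : ∀ N, j₀ ≤ N → ∑ n ∈ Finset.range N, g n ≤ L * thetaDen ω a := by
      intro N hj₀N
      set b : ℕ → ℝ := fun n => ‖a n‖ with hb
      have hbj : b j₀ ≠ 0 := fun h => hj₀ (norm_eq_zero.1 h)
      set dN := ∑ n ∈ Finset.range (N + 1), b n ^ 2 * ω (n + 1) with hdN
      have hdNpos : 0 < dN := denFin_pos hpos hj₀N hbj
      have h1 : thetaFin ω N b ≤ UomegaFin ω N :=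
        le_csSup (TN_bddAbove hpos hC N) ⟨b, ⟨j₀, hj₀N, hbj⟩, rfl⟩
      have h2 : UomegaFin ω N ≤ L := le_ciSup hbddL N
      have hnum_eq : ∑ n ∈ Finset.range N, g n = thetaFin ω N b * dN := by
        rw [thetaFin, ← hdN, div_mul_cancel₀ _ hdNpos.ne']
      have hdN_le : dN ≤ thetaDen ω a := by
        rw [thetaDen]
        exact Summable.sum_le_tsum (Finset.range (N + 1))
          (fun n _ => mul_nonneg (sq_nonneg _) (hpos _).le) hsum2
      calc ∑ n ∈ Finset.range N, g n = thetaFin ω N b * dN := hnum_eq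
        _ ≤ L * dN := mul_le_mul_of_nonneg_right (h1.trans h2) hdNpos.le
        _ ≤ L * thetaDen ω a := mul_le_mul_of_nonneg_left hdN_le hL0
    have htsum_le : ∑' n, g n ≤ L * thetaDen ω a := by
      apply le_of_tendsto hg.hasSum.tendsto_sum_nat
      exact eventually_atTop.2 ⟨j₀, hpart⟩
    have : ‖theta ω a‖ = ‖thetaNum ω a‖ / thetaDen ω a := by
      rw [theta, norm_div, Complex.norm_real, Real.norm_eq_abs, abs_of_pos hDpos]
    rw [this, div_le_iff₀ hDpos]
    calc ‖thetaNum ω a‖ ≤ ∑' n, g n := habs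
      _ ≤ L * thetaDen ω a := htsum_le
  -- Step 4: each finite value ≤ Uomega
  have hUbdd : BddAbove {x : ℝ | ∃ a : ℕ → ℂ, Admissible ω a ∧ x = ‖theta ω a‖} := by
    refine ⟨L, ?_⟩
    rintro x ⟨a, ha, rfl⟩
    exact hadm_bound a ha
  have hfin_le_U : ∀ N, UomegaFin ω N ≤ Uomega ω := by
    intro N
    apply csSup_le ⟨0, zero_mem_TN N⟩
    rintro x ⟨a, ⟨j, hj, hja⟩, rfl⟩
    set b : ℕ → ℂ := fun n => if n ≤ N then (a n : ℂ) else 0 with hbdef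
    have hbz : ∀ n : ℕ, n ∉ Finset.range (N + 1) → b n = 0 := by
      intro n hn
      have : ¬ n ≤ N := by simpa [Finset.mem_range, Nat.lt_succ_iff] using hn
      simp [hbdef, this]
    have hadm : Admissible ω b := by
      constructor
      · apply summable_of_ne_finset_zero (s := Finset.range (N + 1))
        intro n hn
        rw [hbz n hn]
        simp
      · have hsum : Summable (fun n => ‖b n‖ ^ 2 * ω n) := by
          apply summable_of_ne_finset_zero (s := Finset.range (N + 1))
          intro n hn
          rw [hbz n hn]; simp
        apply Summable.tsum_pos hsum (fun n => mul_nonneg (sq_nonneg _) (hpos _).le) j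
        have hbj : b j = (a j : ℂ) := if_pos hj
        rw [hbj, Complex.norm_real, Real.norm_eq_abs]
        exact mul_pos (pow_pos (abs_pos.2 hja) 2) (hpos _)
    have hNum : thetaNum ω b = ((∑ n ∈ Finset.range N, a n * a (n + 1) * ω (n + 1) : ℝ) : ℂ) := by
      rw [thetaNum, tsum_eq_sum (s := Finset.range (N + 1))
        (fun n hn => by rw [hbz n hn]; simp)]
      rw [Finset.sum_range_succ]
      have hbN1 : b (N + 1) = 0 := by simp [hbdef]
      rw [hbN1]
      simp only [mul_zero, zero_mul, add_zero]
      push_cast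
      refine Finset.sum_congr rfl fun n hn => ?_
      have hn' := Finset.mem_range.1 hn
      have e1 : b n = (a n : ℂ) := if_pos (by omega)
      have e2 : b (n + 1) = (a (n + 1) : ℂ) := if_pos (by omega)
      rw [e1, e2, Complex.conj_ofReal]
    have hDen : thetaDen ω b = ∑ n ∈ Finset.range (N + 1), a n ^ 2 * ω (n + 1) := by
      rw [thetaDen, tsum_eq_sum (s := Finset.range (N + 1))
        (fun n hn => by rw [hbz n hn]; simp)]
      refine Finset.sum_congr rfl fun n hn => ?_
      have hn' := Finset.mem_range.1 hn
      have e1 : b n = (a n : ℂ) := if_pos (by omega)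
      rw [e1, Complex.norm_real, Real.norm_eq_abs, sq_abs]
    have habs_eq : ‖theta ω b‖ = |thetaFin ω N a| := by
      rw [theta, hNum, hDen, thetaFin, ← Complex.ofReal_div, Complex.norm_real, Real.norm_eq_abs]
    calc thetaFin ω N a ≤ |thetaFin ω N a| := le_abs_self _
      _ = ‖theta ω b‖ := habs_eq.symm
      _ ≤ Uomega ω := le_csSup hUbdd ⟨b, hadm, rfl⟩
  -- Uomega = L
  have hUeq : Uomega ω = L := by
    apply le_antisymm
    · apply csSup_le
      · refine ⟨‖theta ω (fun n => if n = 0 then 1 else 0)‖, ?_⟩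
        refine ⟨_, ⟨?_, ?_⟩, rfl⟩
        · apply summable_of_ne_finset_zero (s := {0})
          intro n hn
          simp only [Finset.mem_singleton] at hn
          simp [hn]
        · have hsum : Summable (fun n => ‖(fun n : ℕ => if n = 0 then (1:ℂ) else 0) n‖ ^ 2 * ω n) := by
            apply summable_of_ne_finset_zero (s := {0})
            intro n hn
            simp only [Finset.mem_singleton] at hn
            simp [hn]
          apply Summable.tsum_pos hsum (fun n => mul_nonneg (sq_nonneg _) (hpos _).le) 0
          simp [h0]
      · rintro x ⟨a, ha, rfl⟩
        exact hadm_bound a ha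
    · exact ciSup_le hfin_le_U
  have hmono : Monotone fun N => UomegaFin ω N :=
    monotone_nat_of_le_succ (fun N => UomegaFin_mono hpos hC N)
  rw [hUeq]
  exact tendsto_atTop_ciSup hmono hbddL

end Helpers

open Filter in
theorem stmt3 (ω : ℕ → ℝ) (hpos : ∀ n, 0 < ω n) (h0 : ω 0 = 1)
    (hlim : Filter.Tendsto (fun n => ω n / ω (n + 1)) Filter.atTop (nhds 1)) :
    (∀ N : ℕ, 1 ≤ N →
      ∃ a : ℕ → ℝ, (∃ j, j ≤ N ∧ a j ≠ 0) ∧ thetaFin ω N a = UomegaFin ω N) ∧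
    Filter.Tendsto (fun N => UomegaFin ω N) Filter.atTop (nhds (Uomega ω)) := by
  obtain ⟨C, hC⟩ : ∃ C, ∀ n, ω n ≤ C * ω (n + 1) := by
    obtain ⟨C, hC⟩ := hlim.bddAbove_range
    refine ⟨C, fun n => ?_⟩
    have h1 : ω n / ω (n + 1) ≤ C := hC (Set.mem_range_self n)
    rwa [div_le_iff₀ (hpos (n + 1))] at h1
  exact ⟨fun N _ => exists_max hpos hC N, tendsto_UomegaFin ω hpos h0 hlim⟩
end

section
/- Let N ≥ 1 and suppose (a₀, …, a_N) ∈ ℝ^{N+1} satisfies a₀ = 1, a_j > 0 for all j = 0, …, N, and (Σ_{n=0}^{N−1} aₙ aₙ₊₁ ω (n+1)) / (Σ_{n=0}^{N} aₙ² ω (n+1)) = U_{ω,N}. Then P (N+1) has at least one real zero, and setting λ := max{x ∈ ℝ : P (N+1) (x) = 0}, one has a_j = P j (λ) for every j = 0, …, N. -/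
open scoped BigOperators

/-- The monic orthogonal polynomials associated with ω:
P 0 = 1, P 1 = x, P (n+2) (x) = x · P (n+1) (x) − (ω (n+1) / ω (n+2)) · P n (x). -/
noncomputable def OP (ω : ℕ → ℝ) : ℕ → ℝ → ℝ
  | 0, _ => 1
  | 1, x => x
  | (n + 2), x => x * OP ω (n + 1) x - ω (n + 1) / ω (n + 2) * OP ω n x

lemma bddAbove_theta (ω : ℕ → ℝ) (hpos : ∀ n, 0 < ω n) (N : ℕ) :
    BddAbove {x : ℝ | ∃ a : ℕ → ℝ, (∃ j, j ≤ N ∧ a j ≠ 0) ∧ x = thetaFin ω N a} := by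
  set K : ℝ := ∑ m ∈ Finset.range (N+1), ω m / ω (m+1) with hK
  have hK0 : 0 ≤ K := Finset.sum_nonneg fun m _ => le_of_lt (div_pos (hpos m) (hpos (m+1)))
  refine ⟨(1 + K)/2, ?_⟩
  rintro x ⟨b, ⟨j, hj, hbj⟩, rfl⟩
  have hden : 0 < ∑ n ∈ Finset.range (N+1), b n ^ 2 * ω (n+1) := by
    apply Finset.sum_pos' (fun n _ => mul_nonneg (sq_nonneg _) (hpos _).le)
    exact ⟨j, Finset.mem_range.2 (Nat.lt_succ_of_le hj),
      mul_pos (lt_of_le_of_ne (sq_nonneg _) (Ne.symm (pow_ne_zero 2 hbj))) (hpos _)⟩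
  rw [thetaFin, div_le_iff₀ hden]
  have h1 : ∑ n ∈ Finset.range N, b n * b (n+1) * ω (n+1)
      ≤ (∑ n ∈ Finset.range N, b n ^2 * ω (n+1) + ∑ n ∈ Finset.range N, b (n+1) ^2 * ω (n+1)) / 2 := by
    rw [← Finset.sum_add_distrib, le_div_iff₀ (by norm_num : (0:ℝ) < 2), Finset.sum_mul]
    apply Finset.sum_le_sum
    intro n _
    nlinarith [hpos (n+1), sq_nonneg (b n - b (n+1))]
  have h2 : ∑ n ∈ Finset.range N, b n ^2 * ω (n+1) ≤ ∑ n ∈ Finset.range (N+1), b n ^2 * ω (n+1) := by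
    apply Finset.sum_le_sum_of_subset_of_nonneg (Finset.range_subset_range.2 (Nat.le_succ N))
    intro n _ _; exact mul_nonneg (sq_nonneg _) (hpos _).le
  have h3 : ∑ n ∈ Finset.range N, b (n+1) ^2 * ω (n+1) ≤ K * ∑ n ∈ Finset.range (N+1), b n ^2 * ω (n+1) := by
    have step1 : ∑ n ∈ Finset.range N, b (n+1) ^2 * ω (n+1)
        ≤ ∑ n ∈ Finset.range N, K * (b (n+1) ^2 * ω (n+1+1)) := by
      apply Finset.sum_le_sum
      intro n hn
      have hmem : n + 1 ∈ Finset.range (N+1) := by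
        simp at hn ⊢; omega
      have : ω (n+1) / ω (n+2) ≤ K :=
        Finset.single_le_sum (f := fun m => ω m / ω (m+1))
          (fun m _ => le_of_lt (div_pos (hpos m) (hpos (m+1)))) hmem
      have hw : ω (n+1) ≤ K * ω (n+2) := by
        rw [div_le_iff₀ (hpos (n+2))] at this; linarith
      nlinarith [sq_nonneg (b (n+1))]
    have step2 : ∑ n ∈ Finset.range N, K * (b (n+1) ^2 * ω (n+1+1))
        ≤ K * ∑ n ∈ Finset.range (N+1), b n ^2 * ω (n+1) := by
      rw [← Finset.mul_sum]
      apply mul_le_mul_of_nonneg_left _ hK0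
      rw [Finset.sum_range_succ' (fun n => b n ^2 * ω (n+1)) N]
      nlinarith [mul_nonneg (sq_nonneg (b 0)) (le_of_lt (hpos 1))]
    linarith
  nlinarith [hden]

lemma OP_pos_of_gt (ω : ℕ → ℝ) (hpos : ∀ n, 0 < ω n) (N : ℕ) (lam x : ℝ)
    (hlam : ∀ j, j ≤ N → 0 < OP ω j lam) (hx : lam < x) :
    ∀ j, j ≤ N → 0 < OP ω j x ∧
      0 < OP ω (j+1) x * OP ω j lam - OP ω (j+1) lam * OP ω j x := by
  intro j
  induction j with
  | zero =>
    intro _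
    constructor
    · show (0:ℝ) < 1; norm_num
    · show 0 < x * 1 - lam * 1; linarith
  | succ j ih =>
    intro hj
    obtain ⟨hPx, hQ⟩ := ih (Nat.le_of_succ_le hj)
    have hPl := hlam j (Nat.le_of_succ_le hj)
    have hPl1 := hlam (j+1) hj
    have hPx1 : 0 < OP ω (j+1) x := by nlinarith
    refine ⟨hPx1, ?_⟩
    have hc : 0 < ω (j+1) / ω (j+2) := div_pos (hpos _) (hpos _)
    have hrec : OP ω (j+2) x * OP ω (j+1) lam - OP ω (j+2) lam * OP ω (j+1) x
        = (x - lam) * (OP ω (j+1) x * OP ω (j+1) lam)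
          + (ω (j+1) / ω (j+2)) * (OP ω (j+1) x * OP ω j lam - OP ω (j+1) lam * OP ω j x) := by
      show (x * OP ω (j + 1) x - ω (j + 1) / ω (j + 2) * OP ω j x) * OP ω (j+1) lam
          - (lam * OP ω (j + 1) lam - ω (j + 1) / ω (j + 2) * OP ω j lam) * OP ω (j+1) x = _
      ring
    rw [hrec]
    have := mul_pos hPx1 hPl1
    nlinarith

theorem stmt5 (ω : ℕ → ℝ) (hpos : ∀ n, 0 < ω n) (h0 : ω 0 = 1)
    (hlim : Filter.Tendsto (fun n => ω n / ω (n + 1)) Filter.atTop (nhds 1))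
    (N : ℕ) (hN : 1 ≤ N) (a : ℕ → ℝ) (ha0 : a 0 = 1)
    (hapos : ∀ j, j ≤ N → 0 < a j)
    (hmax : thetaFin ω N a = UomegaFin ω N) :
    ∃ lam : ℝ, IsGreatest {x : ℝ | OP ω (N + 1) x = 0} lam ∧
      ∀ j, j ≤ N → a j = OP ω j lam := by
  classical
  set Nu := ∑ n ∈ Finset.range N, a n * a (n + 1) * ω (n + 1) with hNu_def
  set De := ∑ n ∈ Finset.range (N + 1), a n ^ 2 * ω (n + 1) with hDe_def
  have hDe : 0 < De := by
    rw [hDe_def]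
    refine Finset.sum_pos (fun n hn => ?_) ⟨0, Finset.mem_range.2 (by omega)⟩
    have hn' := Finset.mem_range.1 hn
    exact mul_pos (pow_pos (hapos n (by omega)) 2) (hpos _)
  have hNu : 0 < Nu := by
    rw [hNu_def]
    refine Finset.sum_pos (fun n hn => ?_) ⟨0, Finset.mem_range.2 (by omega)⟩
    have hn' := Finset.mem_range.1 hn
    exact mul_pos (mul_pos (hapos n (by omega)) (hapos (n+1) (by omega))) (hpos _)
  have htheta : thetaFin ω N a = Nu / De := by
    rw [thetaFin, hNu_def, hDe_def]
  -- the key variational inequality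
  have hkey : ∀ j, j ≤ N → ∀ t : ℝ,
      t * (((if j < N then a (j+1) * ω (j+1) else 0)
        + ∑ n ∈ Finset.range N, (if n + 1 = j then a n * ω (n+1) else 0)) * De
          - 2 * Nu * (a j * ω (j+1))) ≤ Nu * ω (j+1) * t^2 := by
    intro j hj t
    set u := Function.update a j (a j + t) with hu
    have hu_apply : ∀ n, u n = a n + (if n = j then t else 0) := by
      intro n; by_cases h : n = j <;> simp [hu, h, Function.update_apply]
    have hnum : ∑ n ∈ Finset.range N, u n * u (n+1) * ω (n+1)
        = Nu + t * ((if j < N then a (j+1) * ω (j+1) else 0)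
          + ∑ n ∈ Finset.range N, (if n + 1 = j then a n * ω (n+1) else 0)) := by
      have hterm : ∀ n, u n * u (n+1) * ω (n+1)
          = a n * a (n+1) * ω (n+1) + t * (if n = j then a (n+1) * ω (n+1) else 0)
            + t * (if n + 1 = j then a n * ω (n+1) else 0) := by
        intro n
        rcases eq_or_ne n j with h | h
        · have h2 : n + 1 ≠ j := by omega
          simp [hu_apply, h, h2]; ring
        · rcases eq_or_ne (n+1) j with h2 | h2
          · simp [hu_apply, h, h2]; ring
          · simp [hu_apply, h, h2]
      rw [Finset.sum_congr rfl (fun n _ => hterm n), Finset.sum_add_distrib,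
        Finset.sum_add_distrib, ← Finset.mul_sum, ← Finset.mul_sum,
        Finset.sum_ite_eq' (Finset.range N) j (fun n => a (n+1) * ω (n+1)),
        ← hNu_def]
      simp only [Finset.mem_range]
      ring
    have hden : ∑ n ∈ Finset.range (N+1), u n ^ 2 * ω (n+1)
        = De + (2 * a j * t + t^2) * ω (j+1) := by
      have hterm : ∀ n, u n ^ 2 * ω (n+1)
          = a n ^ 2 * ω (n+1) + (if n = j then (2 * a n * t + t^2) * ω (n+1) else 0) := by
        intro n
        rcases eq_or_ne n j with h | h
        · simp [hu_apply, h]; ring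
        · simp [hu_apply, h]
      rw [Finset.sum_congr rfl (fun n _ => hterm n), Finset.sum_add_distrib,
        Finset.sum_ite_eq' (Finset.range (N+1)) j (fun n => (2 * a n * t + t^2) * ω (n+1)),
        if_pos (Finset.mem_range.2 (by omega)), ← hDe_def]
    obtain ⟨j', hj'N, hj'j⟩ : ∃ j', j' ≤ N ∧ j' ≠ j := by
      rcases eq_or_ne j 0 with h | h
      · exact ⟨1, hN, by omega⟩
      · exact ⟨0, by omega, by omega⟩
    have huj' : u j' = a j' := Function.update_of_ne hj'j _ a
    have hDu : 0 < ∑ n ∈ Finset.range (N+1), u n ^ 2 * ω (n+1) := by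
      apply Finset.sum_pos' (fun n _ => mul_nonneg (sq_nonneg _) (hpos _).le)
      refine ⟨j', Finset.mem_range.2 (by omega), ?_⟩
      rw [huj']
      exact mul_pos (pow_pos (hapos j' hj'N) 2) (hpos _)
    have hle : thetaFin ω N u ≤ UomegaFin ω N := by
      rw [UomegaFin]
      refine le_csSup (bddAbove_theta ω hpos N) ⟨u, ⟨j', hj'N, ?_⟩, rfl⟩
      rw [huj']; exact (hapos j' hj'N).ne'
    rw [← hmax, htheta] at hle
    have hthetau : thetaFin ω N u
        = (Nu + t * ((if j < N then a (j+1) * ω (j+1) else 0)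
          + ∑ n ∈ Finset.range N, (if n + 1 = j then a n * ω (n+1) else 0)))
          / (De + (2 * a j * t + t^2) * ω (j+1)) := by
      rw [thetaFin, hnum, hden]
    rw [hthetau] at hle
    rw [hden] at hDu
    rw [div_le_div_iff₀ hDu hDe] at hle
    nlinarith [hle]
  -- the Euler-Lagrange equations
  set lam := 2 * Nu / De with hlam_def
  have hEuler : ∀ j, j ≤ N →
      (if j < N then a (j+1) * ω (j+1) else 0)
        + (∑ n ∈ Finset.range N, (if n + 1 = j then a n * ω (n+1) else 0))
      = lam * (a j * ω (j+1)) := by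
    intro j hj
    set B := (if j < N then a (j+1) * ω (j+1) else 0)
      + ∑ n ∈ Finset.range N, (if n + 1 = j then a n * ω (n+1) else 0) with hB
    set c := B * De - 2 * Nu * (a j * ω (j+1)) with hc
    have hA : 0 < Nu * ω (j+1) := mul_pos hNu (hpos _)
    have hc0 : c = 0 := by
      set t0 := c / (2 * (Nu * ω (j+1))) with ht0
      have e1 : c = 2 * (Nu * ω (j+1)) * t0 := by
        rw [ht0]; field_simp [(hpos (j+1)).ne']
      have h := hkey j hj t0
      rw [← hc, e1] at h
      have hsq : t0 ^ 2 ≤ 0 := by nlinarith [h, hA]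
      have ht00 : t0 = 0 := pow_eq_zero_iff two_ne_zero |>.1 (le_antisymm hsq (sq_nonneg t0))
      rw [e1, ht00]; ring
    have hBDe : B * De = 2 * Nu * (a j * ω (j+1)) := by
      have := hc0; rw [hc] at this; linarith
    have : B = 2 * Nu * (a j * ω (j+1)) / De := by
      rw [eq_div_iff hDe.ne']; exact hBDe
    rw [this, hlam_def]; ring
  -- specializations
  have hE1 : a 1 = lam := by
    have h := hEuler 0 (by omega)
    rw [if_pos (by omega : 0 < N)] at h
    simp only [Nat.succ_ne_zero, if_false, Finset.sum_const_zero, add_zero] at h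
    rw [ha0] at h
    have hw := (hpos 1).ne'
    have : a 1 * ω 1 = lam * ω 1 := by linarith [h]
    exact mul_right_cancel₀ hw this
  have hEmid : ∀ i, i + 1 < N → a (i+2) = lam * a (i+1) - ω (i+1) / ω (i+2) * a i := by
    intro i hi
    have h := hEuler (i+1) (by omega)
    rw [if_pos (by omega : i + 1 < N)] at h
    simp only [add_left_inj] at h
    rw [Finset.sum_ite_eq' (Finset.range N) i (fun n => a n * ω (n+1)),
      if_pos (Finset.mem_range.2 (by omega))] at h
    have hw : ω (i+2) ≠ 0 := (hpos (i+2)).ne'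
    field_simp
    linear_combination h
  -- a j = OP j lam
  have hOP : ∀ j, j ≤ N → a j = OP ω j lam := by
    intro j
    induction j using Nat.strong_induction_on with
    | _ j ih =>
      match j with
      | 0 => intro _; exact ha0
      | 1 => intro _; exact hE1
      | (i+2) =>
        intro hj
        have e1 := ih (i+1) (by omega) (by omega)
        have e0 := ih i (by omega) (by omega)
        have hm := hEmid i (by omega)
        show a (i+2) = lam * OP ω (i+1) lam - ω (i+1) / ω (i+2) * OP ω i lam
        rw [← e1, ← e0]; exact hm
  obtain ⟨M, rfl⟩ : ∃ M, N = M + 1 := ⟨N - 1, by omega⟩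
  -- boundary equation at j = N
  have hEN : a M * ω (M+1) = lam * (a (M+1) * ω (M+2)) := by
    have h := hEuler (M+1) le_rfl
    rw [if_neg (by omega)] at h
    simp only [add_left_inj] at h
    rw [Finset.sum_ite_eq' (Finset.range (M+1)) M (fun n => a n * ω (n+1)),
      if_pos (Finset.mem_range.2 (by omega))] at h
    linarith [h]
  have hroot : OP ω (M+2) lam = 0 := by
    show lam * OP ω (M+1) lam - ω (M+1) / ω (M+2) * OP ω M lam = 0
    rw [← hOP (M+1) le_rfl, ← hOP M (by omega)]
    have hw : ω (M+2) ≠ 0 := (hpos (M+2)).ne'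
    rw [sub_eq_zero, eq_comm, div_mul_eq_mul_div, div_eq_iff hw]
    linear_combination hEN
  refine ⟨lam, ⟨hroot, ?_⟩, hOP⟩
  intro x hx
  by_contra hlt
  push_neg at hlt
  have hlampos : ∀ j, j ≤ M + 1 → 0 < OP ω j lam := fun j hj => hOP j hj ▸ hapos j hj
  have hQ := (OP_pos_of_gt ω hpos (M+1) lam x hlampos hlt (M+1) le_rfl).2
  rw [show OP ω (M+1+1) x = 0 from hx, hroot] at hQ
  simp at hQ
end

section
/- For every N ≥ 1, the polynomial P (N+1) has at least one real zero and U_{ω,N} = (1/2) · max{x ∈ ℝ : P (N+1) (x) = 0}. -/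
open scoped BigOperators

noncomputable def cseq (ω : ℕ → ℝ) (n : ℕ) : ℝ := Real.sqrt (ω (n+1) / ω (n+2))

noncomputable def Jmat (ω : ℕ → ℝ) (k : ℕ) : Matrix (Fin k) (Fin k) ℝ :=
  fun i j => if (i:ℕ)+1 = j then cseq ω i else if (j:ℕ)+1 = i then cseq ω j else 0

lemma Amat_entry (ω : ℕ → ℝ) (x : ℝ) (m : ℕ) (i j : Fin m) :
    (x • (1 : Matrix (Fin m) (Fin m) ℝ) - Jmat ω m) i j =
      (if (i:ℕ) = j then x else 0) -
        (if (i:ℕ)+1 = j then cseq ω i else if (j:ℕ)+1 = i then cseq ω j else 0) := by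
  simp [Jmat, Matrix.one_apply, Fin.ext_iff, mul_ite]

lemma detJ (ω : ℕ → ℝ) (hpos : ∀ n, 0 < ω n) (x : ℝ) :
    ∀ k, (x • (1 : Matrix (Fin k) (Fin k) ℝ) - Jmat ω k).det = OP ω k x := by
  intro k
  induction k using Nat.twoStepInduction with
  | zero => simp [OP]
  | one =>
    rw [Matrix.det_fin_one]
    simp [OP, Jmat, Matrix.one_apply]
  | more k ih0 ih1 =>
    set A := x • (1 : Matrix (Fin (k+2)) (Fin (k+2)) ℝ) - Jmat ω (k+2) with hAdef
    set c := cseq ω k with hc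
    have hsub1 : A.submatrix Fin.castSucc Fin.castSucc
        = x • (1 : Matrix (Fin (k+1)) (Fin (k+1)) ℝ) - Jmat ω (k+1) := by
      ext i j
      rw [Matrix.submatrix_apply, hAdef, Amat_entry, Amat_entry]
      simp
    have hp : ∀ j : Fin k, (Fin.castSucc (Fin.last k)).succAbove (Fin.castSucc j)
        = Fin.castSucc (Fin.castSucc j) := by
      intro j
      apply Fin.succAbove_of_castSucc_lt
      simp [Fin.lt_def, j.isLt]
    have hp2 : (Fin.castSucc (Fin.last k)).succAbove (Fin.last k) = Fin.last (k+1) := by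
      apply Fin.ext
      rw [Fin.succAbove_of_le_castSucc _ _ (le_refl _)]
      simp
    rw [Matrix.det_succ_row A (Fin.last (k+1)), Fin.sum_univ_castSucc, Fin.sum_univ_castSucc]
    have hzero : ∀ j : Fin k,
        (-1 : ℝ) ^ ((Fin.last (k+1) : ℕ) + ((j.castSucc.castSucc : Fin (k+2)) : ℕ)) *
          A (Fin.last (k+1)) j.castSucc.castSucc *
          (A.submatrix (Fin.last (k+1)).succAbove j.castSucc.castSucc.succAbove).det = 0 := by
      intro j
      have : A (Fin.last (k+1)) j.castSucc.castSucc = 0 := by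
        rw [hAdef, Amat_entry]
        have h1 : (j : ℕ) < k := j.isLt
        simp only [Fin.val_last, Fin.coe_castSucc]
        rw [if_neg (by omega), if_neg (by omega), if_neg (by omega)]
        ring
      rw [this]; ring
    rw [Finset.sum_eq_zero fun j _ => hzero j, Fin.succAbove_last, hsub1]
    have hentry1 : A (Fin.last (k+1)) (Fin.castSucc (Fin.last k)) = -c := by
      rw [hAdef, Amat_entry]
      simp only [Fin.val_last, Fin.coe_castSucc]
      rw [if_neg (by omega), if_neg (by omega)]
      simp [hc]
    have hminor1 : (A.submatrix Fin.castSucc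
        (Fin.castSucc (Fin.last k)).succAbove).det = -c * OP ω k x := by
      set B := A.submatrix Fin.castSucc (Fin.castSucc (Fin.last k)).succAbove with hB
      rw [Matrix.det_succ_column B (Fin.last k), Fin.sum_univ_castSucc]
      have hz2 : ∀ i : Fin k,
          (-1 : ℝ) ^ (((i.castSucc : Fin (k+1)) : ℕ) + ((Fin.last k : Fin (k+1)) : ℕ)) *
            B i.castSucc (Fin.last k) *
            (B.submatrix i.castSucc.succAbove (Fin.last k).succAbove).det = 0 := by
        intro i
        have : B i.castSucc (Fin.last k) = 0 := by
          rw [hB, Matrix.submatrix_apply, hp2, hAdef, Amat_entry]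
          have h1 : (i : ℕ) < k := i.isLt
          simp only [Fin.coe_castSucc, Fin.val_last]
          rw [if_neg (by omega), if_neg (by omega), if_neg (by omega)]
          ring
        rw [this]; ring
      rw [Finset.sum_eq_zero fun i _ => hz2 i, zero_add]
      have hBll : B (Fin.last k) (Fin.last k) = -c := by
        rw [hB, Matrix.submatrix_apply, hp2, hAdef, Amat_entry]
        simp only [Fin.coe_castSucc, Fin.val_last]
        rw [if_neg (by omega)]
        simp [hc]
      have hBsub : B.submatrix (Fin.last k).succAbove (Fin.last k).succAbove
          = x • (1 : Matrix (Fin k) (Fin k) ℝ) - Jmat ω k := by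
        rw [Fin.succAbove_last]
        ext i j
        rw [Matrix.submatrix_apply, hB, Matrix.submatrix_apply, hp, hAdef,
          Amat_entry, Amat_entry]
        simp
      rw [hBll, hBsub, ih0]
      rw [Fin.val_last, ← two_mul, pow_mul]
      norm_num
    rw [hentry1, hminor1, ih1]
    have hAll : A (Fin.last (k+1)) (Fin.last (k+1)) = x := by
      rw [hAdef, Amat_entry]
      simp only [Fin.val_last]
      norm_num
    rw [hAll]
    have hcsq : c * c = ω (k+1) / ω (k+2) := by
      rw [hc, cseq, Real.mul_self_sqrt (div_nonneg (hpos _).le (hpos _).le)]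
    show _ = OP ω (k+2) x
    simp only [OP, Fin.val_last, Fin.coe_castSucc]
    rw [show (-1:ℝ)^(k+1+k) = -1 by
        rw [show k+1+k = 2*k+1 by omega, pow_succ, pow_mul]; norm_num,
      show (-1:ℝ)^(k+1+(k+1)) = 1 by
        rw [show k+1+(k+1) = 2*(k+1) by omega, pow_mul]; norm_num,
      ← hcsq]
    ring

/-- Pure `ℕ`-indexed double-sum identity for the tridiagonal quadratic form. -/
lemma tridiag_sum (c β : ℕ → ℝ) : ∀ K : ℕ,
    (∑ n ∈ Finset.range (K+1), ∑ m ∈ Finset.range (K+1),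
      (if n+1 = m then c n else if m+1 = n then c m else 0) * β m * β n)
    = 2 * ∑ n ∈ Finset.range K, c n * β n * β (n+1) := by
  intro K
  induction K with
  | zero => simp
  | succ K ih =>
    rw [Finset.sum_range_succ (fun n => ∑ m ∈ Finset.range (K+1+1),
      (if n+1 = m then c n else if m+1 = n then c m else 0) * β m * β n)]
    have hrow : (∑ m ∈ Finset.range (K+1+1),
        (if (K+1)+1 = m then c (K+1) else if m+1 = K+1 then c m else 0) * β m * β (K+1))
        = c K * β K * β (K+1) := by
      have : ∀ m ∈ Finset.range (K+2),
          (if (K+1)+1 = m then c (K+1) else if m+1 = K+1 then c m else 0) * β m * β (K+1)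
          = if m = K then c m * β m * β (K+1) else 0 := by
        intro m hm
        rw [Finset.mem_range] at hm
        rcases eq_or_ne m K with rfl | hmk
        · rw [if_neg (by omega), if_pos (by omega), if_pos rfl]
        · rw [if_neg (by omega), if_neg (by omega), if_neg hmk]; ring
      rw [Finset.sum_congr rfl this, Finset.sum_ite_eq' (Finset.range (K+2)) K
        (fun m => c m * β m * β (K+1)), if_pos (by simp)]
    have hcol : ∀ n ∈ Finset.range (K+1),
        (∑ m ∈ Finset.range (K+1+1),
          (if n+1 = m then c n else if m+1 = n then c m else 0) * β m * β n)
        = (∑ m ∈ Finset.range (K+1),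
          (if n+1 = m then c n else if m+1 = n then c m else 0) * β m * β n)
          + (if n = K then c n * β (K+1) * β n else 0) := by
      intro n hn
      rw [Finset.mem_range] at hn
      rw [Finset.sum_range_succ]
      congr 1
      rcases eq_or_ne n K with rfl | hnk
      · rw [if_pos (by omega), if_pos rfl]
      · rw [if_neg (by omega), if_neg (by omega), if_neg hnk]; ring
    rw [Finset.sum_congr rfl hcol, Finset.sum_add_distrib, ih,
      Finset.sum_ite_eq' (Finset.range (K+1)) K (fun n => c n * β (K+1) * β n),
      if_pos (by simp), hrow, Finset.sum_range_succ]
    ring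

theorem stmt6 (ω : ℕ → ℝ) (hpos : ∀ n, 0 < ω n) (h0 : ω 0 = 1)
    (hlim : Filter.Tendsto (fun n => ω n / ω (n + 1)) Filter.atTop (nhds 1))
    (N : ℕ) (hN : 1 ≤ N) :
    ∃ lam : ℝ, IsGreatest {x : ℝ | OP ω (N + 1) x = 0} lam ∧
      UomegaFin ω N = lam / 2 := by
  classical
  set E := EuclideanSpace ℝ (Fin (N+1)) with hE
  set M := Jmat ω (N+1) with hM
  set T : E →ₗ[ℝ] E := Matrix.toEuclideanLin M with hT
  have hherm : M.IsHermitian := by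
    rw [Matrix.IsHermitian]
    ext i j
    simp only [Matrix.conjTranspose_apply, hM, Jmat, star_trivial]
    split_ifs <;> first | rfl | omega
  have hsymm : T.IsSymmetric := Matrix.isHermitian_iff_isSymmetric.mp hherm
  haveI : Nontrivial E := by
    refine nontrivial_of_ne (EuclideanSpace.single 0 1) 0 ?_
    intro h
    have h1 := congrArg (fun v : E => v 0) h
    simp only [EuclideanSpace.single_apply, if_pos rfl] at h1
    exact one_ne_zero (α := ℝ) h1
  -- T applied: it is mulVec
  have hTapp : ∀ (v : E) (i : Fin (N+1)), (T v) i = ∑ j, M i j * v j := by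
    intro v i
    rfl
  -- eigenvalues are exactly the roots of OP (N+1)
  have heig : ∀ μ : ℝ, Module.End.HasEigenvalue T μ ↔ OP ω (N+1) μ = 0 := by
    intro μ
    rw [← detJ ω hpos μ (N+1), ← Matrix.exists_mulVec_eq_zero_iff (M := μ • 1 - M)]
    constructor
    · intro h
      obtain ⟨v, hv⟩ := h.exists_hasEigenvector
      refine ⟨v, fun h0' => hv.2 (by ext i; exact congrFun h0' i), ?_⟩
      have hv1 : T v = μ • v := Module.End.mem_eigenspace_iff.mp hv.1
      funext i
      have : (T v) i = μ * v i := by rw [hv1]; rfl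
      rw [hTapp] at this
      simp only [Matrix.sub_mulVec, Matrix.smul_mulVec, Matrix.one_mulVec]
      show μ * v i - ∑ j, M i j * v j = 0
      rw [this]; ring
    · rintro ⟨v, hv0, hv⟩
      refine Module.End.hasEigenvalue_of_hasEigenvector (x := WithLp.toLp 2 v) ⟨Module.End.mem_eigenspace_iff.mpr ?_, fun h => hv0 (congrArg WithLp.ofLp h)⟩
      ext i
      have := congrFun hv i
      simp only [Matrix.sub_mulVec, Matrix.smul_mulVec, Matrix.one_mulVec] at this
      have h2 : μ * v i - ∑ j, M i j * v j = 0 := this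
      show (T (WithLp.toLp 2 v)) i = μ * v i
      rw [hTapp]
      linarith
  -- the Rayleigh quotient function
  set g : {x : E // x ≠ 0} → ℝ :=
    fun x => RCLike.re (inner (𝕜 := ℝ) (T x) (x : E)) / ‖(x : E)‖ ^ 2 with hg
  set lam : ℝ := ⨆ x : {x : E // x ≠ 0}, g x with hlam
  -- boundedness of the Rayleigh quotient
  obtain ⟨C, hC⟩ : ∃ C : ℝ, ∀ x : {x : E // x ≠ 0}, g x ≤ C := by
    set Tc := LinearMap.toContinuousLinearMap T with hTc
    refine ⟨‖Tc‖, fun x => ?_⟩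
    have hx : 0 < ‖(x : E)‖ ^ 2 := pow_pos (norm_pos_iff.mpr x.2) 2
    rw [hg, div_le_iff₀ hx]
    have h1 : (inner (𝕜 := ℝ) (T x) (x : E)) ≤ ‖T (x : E)‖ * ‖(x : E)‖ :=
      real_inner_le_norm _ _
    have h2 : ‖T (x : E)‖ ≤ ‖Tc‖ * ‖(x : E)‖ := Tc.le_opNorm _
    have h3 : (0:ℝ) ≤ ‖(x : E)‖ := norm_nonneg _
    simp only [RCLike.re_to_real]
    nlinarith
  have hbdd : BddAbove (Set.range g) := ⟨C, by rintro y ⟨x, rfl⟩; exact hC x⟩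
  have hne : Nonempty {x : E // x ≠ 0} := by
    obtain ⟨x, hx⟩ := exists_ne (0 : E)
    exact ⟨⟨x, hx⟩⟩
  -- lam is an eigenvalue
  have hlam_eig : Module.End.HasEigenvalue T lam := by
    have := hsymm.hasEigenvalue_iSup_of_finiteDimensional
    simpa [hlam, hg] using this
  -- every eigenvalue is at most lam
  have heig_le : ∀ μ : ℝ, Module.End.HasEigenvalue T μ → μ ≤ lam := by
    intro μ hμ
    obtain ⟨v, hv⟩ := hμ.exists_hasEigenvector
    have hv1 : T v = μ • v := Module.End.mem_eigenspace_iff.mp hv.1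
    have hgv : g ⟨v, hv.2⟩ = μ := by
      rw [hg]
      simp only [hv1, real_inner_smul_left, RCLike.re_to_real]
      rw [real_inner_self_eq_norm_sq, mul_div_assoc,
        div_self (pow_ne_zero 2 (norm_ne_zero_iff.mpr hv.2)), mul_one]
    rw [← hgv]
    exact le_ciSup hbdd _
  refine ⟨lam, ⟨(heig _).mp hlam_eig, fun μ hμ => heig_le μ ((heig _).mpr hμ)⟩, ?_⟩
  -- Now the value of UomegaFin
  set vec : (ℕ → ℝ) → E := fun β => WithLp.toLp 2 (fun i : Fin (N+1) => β ↑i)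
    with hvec
  set bfun : (ℕ → ℝ) → (ℕ → ℝ) := fun a n => a n * Real.sqrt (ω (n+1)) with hbfun
  have hsqrt_ne : ∀ n : ℕ, Real.sqrt (ω n) ≠ 0 :=
    fun n => ne_of_gt (Real.sqrt_pos.mpr (hpos n))
  -- the quadratic form
  have hK1 : ∀ β : ℕ → ℝ, (inner (𝕜 := ℝ) (T (vec β)) (vec β) : ℝ)
      = 2 * ∑ n ∈ Finset.range N, cseq ω n * β n * β (n+1) := by
    intro β
    have h1 : (inner (𝕜 := ℝ) (T (vec β)) (vec β) : ℝ)
        = ∑ i : Fin (N+1), (T (vec β)) i * (vec β) i := by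
      rw [PiLp.inner_apply]
      simp [RCLike.inner_apply, mul_comm]
    rw [h1]
    have h2 : ∀ i : Fin (N+1), (T (vec β)) i * (vec β) i
        = ∑ j : Fin (N+1),
            ((if (i:ℕ)+1 = (j:ℕ) then cseq ω i else if (j:ℕ)+1 = (i:ℕ) then cseq ω j else 0)
              * β j) * β i := by
      intro i
      rw [hTapp, Finset.sum_mul]
      exact Finset.sum_congr rfl fun j _ => rfl
    rw [Finset.sum_congr rfl fun i _ => h2 i]
    have h3 : ∀ i : Fin (N+1), (∑ j : Fin (N+1),
        ((if (i:ℕ)+1 = (j:ℕ) then cseq ω i else if (j:ℕ)+1 = (i:ℕ) then cseq ω j else 0)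
          * β j) * β i)
        = ∑ m ∈ Finset.range (N+1),
            ((if (i:ℕ)+1 = m then cseq ω i else if m+1 = (i:ℕ) then cseq ω m else 0)
              * β m) * β i := by
      intro i
      exact Fin.sum_univ_eq_sum_range
        (fun m => ((if (i:ℕ)+1 = m then cseq ω i else if m+1 = (i:ℕ) then cseq ω m else 0)
          * β m) * β i) (N+1)
    rw [Finset.sum_congr rfl fun i _ => h3 i]
    rw [Fin.sum_univ_eq_sum_range (fun n => ∑ m ∈ Finset.range (N+1),
      ((if n+1 = m then cseq ω n else if m+1 = n then cseq ω m else 0) * β m) * β n) (N+1)]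
    have := tridiag_sum (cseq ω) β N
    calc ∑ n ∈ Finset.range (N+1), ∑ m ∈ Finset.range (N+1),
          ((if n+1 = m then cseq ω n else if m+1 = n then cseq ω m else 0) * β m) * β n
        = ∑ n ∈ Finset.range (N+1), ∑ m ∈ Finset.range (N+1),
          (if n+1 = m then cseq ω n else if m+1 = n then cseq ω m else 0) * β m * β n := by
          refine Finset.sum_congr rfl fun n _ => Finset.sum_congr rfl fun m _ => by ring
      _ = 2 * ∑ n ∈ Finset.range N, cseq ω n * β n * β (n+1) := this
  -- the norm
  have hK2 : ∀ β : ℕ → ℝ, ‖vec β‖ ^ 2 = ∑ n ∈ Finset.range (N+1), β n ^ 2 := by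
    intro β
    rw [← real_inner_self_eq_norm_sq, PiLp.inner_apply]
    simp only [RCLike.inner_apply, conj_trivial]
    rw [Fin.sum_univ_eq_sum_range (fun n => β n * β n) (N+1)]
    exact Finset.sum_congr rfl fun n _ => by ring
  -- thetaFin as half the Rayleigh quotient
  have htheta : ∀ a : ℕ → ℝ, thetaFin ω N a
      = (inner (𝕜 := ℝ) (T (vec (bfun a))) (vec (bfun a)) : ℝ) / ‖vec (bfun a)‖ ^ 2 / 2 := by
    intro a
    have hnum : ∑ n ∈ Finset.range N, a n * a (n+1) * ω (n+1)
        = ∑ n ∈ Finset.range N, cseq ω n * bfun a n * bfun a (n+1) := by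
      refine Finset.sum_congr rfl fun n _ => ?_
      rw [hbfun, cseq, Real.sqrt_div (hpos (n+1)).le]
      simp only [show n+1+1 = n+2 from rfl]
      have h2 : Real.sqrt (ω (n+1)) * Real.sqrt (ω (n+1)) = ω (n+1) :=
        Real.mul_self_sqrt (hpos _).le
      have h4 : Real.sqrt (ω (n+1)) / Real.sqrt (ω (n+2)) * (a n * Real.sqrt (ω (n+1)))
          * (a (n+1) * Real.sqrt (ω (n+2)))
          = Real.sqrt (ω (n+1)) * Real.sqrt (ω (n+1))
            * (Real.sqrt (ω (n+2)) / Real.sqrt (ω (n+2))) * (a n * a (n+1)) := by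
        ring
      rw [h4, h2, div_self (hsqrt_ne (n+2))]
      ring
    have hden : ∑ n ∈ Finset.range (N+1), a n ^ 2 * ω (n+1)
        = ∑ n ∈ Finset.range (N+1), (bfun a n) ^ 2 := by
      refine Finset.sum_congr rfl fun n _ => ?_
      rw [hbfun, mul_pow, Real.sq_sqrt (hpos _).le]
    rw [thetaFin, hnum, hden, hK1 (bfun a), hK2 (bfun a)]
    ring
  -- identification of the two sets
  have hSeq : {x : ℝ | ∃ a : ℕ → ℝ, (∃ j, j ≤ N ∧ a j ≠ 0) ∧ x = thetaFin ω N a}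
      = (fun y => y / 2) '' Set.range g := by
    ext x
    constructor
    · rintro ⟨a, ⟨j, hj, haj⟩, rfl⟩
      have hjlt : j < N+1 := by omega
      have hv : vec (bfun a) ≠ 0 := by
        intro h
        have h1 : a j * Real.sqrt (ω (j+1)) = 0 := congrArg (fun w : E => w ⟨j, hjlt⟩) h
        exact (mul_ne_zero haj (hsqrt_ne (j+1))) h1
      refine ⟨g ⟨_, hv⟩, ⟨⟨_, hv⟩, rfl⟩, ?_⟩
      rw [htheta a, hg]
      simp only [RCLike.re_to_real]
    · rintro ⟨y, ⟨⟨v, hv⟩, rfl⟩, rfl⟩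
      set a : ℕ → ℝ := fun n => if h : n < N+1 then v ⟨n, h⟩ / Real.sqrt (ω (n+1)) else 0
        with ha
      have hveq : vec (bfun a) = v := by
        ext i
        show bfun a ↑i = v i
        rw [hbfun, ha]
        simp only [Fin.is_lt, dif_pos, Fin.eta]
        exact div_mul_cancel₀ _ (hsqrt_ne _)
      obtain ⟨i, hi⟩ : ∃ i, v i ≠ 0 := by
        by_contra h
        push_neg at h
        exact hv (by ext i; exact h i)
      refine ⟨a, ⟨i, by omega, ?_⟩, ?_⟩
      · rw [ha]
        simp only [Fin.is_lt, dif_pos, Fin.eta]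
        exact div_ne_zero hi (hsqrt_ne _)
      · rw [htheta a, hveq, hg]
        simp only [RCLike.re_to_real]
    -- wrap up
  rw [UomegaFin, hSeq]
  have x0 := hne.some
  have hmem0 : g x0 / 2 ∈ (fun y => y / 2) '' Set.range g := ⟨g x0, ⟨x0, rfl⟩, rfl⟩
  have hbddS : BddAbove ((fun y => y / 2) '' Set.range g) := by
    refine ⟨C / 2, ?_⟩
    rintro _ ⟨y, ⟨x, rfl⟩, rfl⟩
    have := hC x
    simp only
    linarith
  apply le_antisymm
  · apply csSup_le ⟨_, hmem0⟩
    rintro _ ⟨y, ⟨x, rfl⟩, rfl⟩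
    have h1 : g x ≤ lam := le_ciSup hbdd x
    simp only
    linarith
  · have h1 : ∀ x : {x : E // x ≠ 0}, g x / 2 ≤ sSup ((fun y => y / 2) '' Set.range g) :=
      fun x => le_csSup hbddS ⟨g x, ⟨x, rfl⟩, rfl⟩
    have h2 : lam ≤ 2 * sSup ((fun y => y / 2) '' Set.range g) := by
      rw [hlam]
      exact ciSup_le fun x => by linarith [h1 x]
    linarith
end

section
/- Suppose ω (n+1) ≥ ω n for all n ∈ ℕ. Then for every sequence a : ℕ → ℂ with 0 < Σₙ |a n|² ω n < ∞ and a 0 ≠ 0, every n ∈ ℕ, every optimal approximant (p₀, …, pₙ) of order n to 1/f, and every z₀ ∈ ℂ with Σ_{k=0}^{n} p_k · z₀^k = 0, one has |z₀| > 1. -/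
open scoped BigOperators ENNReal

/-- The squared error ‖pf − 1‖²_ω, where `p` is a polynomial of degree at most `n`
with coefficients `p 0, …, p n` and `f` has Maclaurin coefficients `a`. -/
noncomputable def approxErr (ω : ℕ → ℝ) (a : ℕ → ℂ) (n : ℕ) (p : ℕ → ℂ) : ℝ :=
  ∑' m : ℕ, ‖(∑ k ∈ Finset.range (min m n + 1), p k * a (m - k)) -
      (if m = 0 then 1 else 0)‖ ^ 2 * ω m

/-- `p 0, …, p n` are the coefficients of an optimal approximant of order `n` to `1/f`. -/
def IsOptApprox (ω : ℕ → ℝ) (a : ℕ → ℂ) (n : ℕ) (p : ℕ → ℂ) : Prop :=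
  ∀ q : ℕ → ℂ, approxErr ω a n p ≤ approxErr ω a n q

/-! ### Auxiliary definitions and lemmas -/

/-- Coefficients of the product of the polynomial with coefficients `q 0,…,q n` and the
power series with coefficients `a`. -/
noncomputable def Lmap (a : ℕ → ℂ) (n : ℕ) (q : ℕ → ℂ) (m : ℕ) : ℂ :=
  ∑ k ∈ Finset.range (min m n + 1), q k * a (m - k)

lemma Lmap_eq_range (a : ℕ → ℂ) (n : ℕ) (q : ℕ → ℂ) (m : ℕ) :
    Lmap a n q m = ∑ k ∈ Finset.range (n + 1), q k * (if k ≤ m then a (m - k) else 0) := by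
  rw [Lmap, show (∑ k ∈ Finset.range (min m n + 1), q k * a (m - k)) =
      ∑ k ∈ Finset.range (min m n + 1), q k * (if k ≤ m then a (m - k) else 0) from
    Finset.sum_congr rfl fun k hk => by
      simp only [Finset.mem_range] at hk
      rw [if_pos (by omega)]]
  apply Finset.sum_subset
  · exact Finset.range_subset_range.2 (by omega)
  · intro k hk hk'
    simp only [Finset.mem_range] at hk hk'
    rw [if_neg (by omega), mul_zero]

lemma Lmap_add_smul (a : ℕ → ℂ) (n : ℕ) (p r : ℕ → ℂ) (c : ℂ) (m : ℕ) :
    Lmap a n (fun k => p k + c * r k) m = Lmap a n p m + c * Lmap a n r m := by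
  simp only [Lmap, Finset.mul_sum, ← Finset.sum_add_distrib]
  exact Finset.sum_congr rfl fun k _ => by ring

lemma Lmap_factor (a : ℕ → ℂ) (n : ℕ) (p q : ℕ → ℂ) (z₀ : ℂ)
    (hfact : ∀ k, k ≤ n → p k = (if k = 0 then 0 else q (k - 1)) - z₀ * q k) (m : ℕ) :
    Lmap a n p m
      = Lmap a n (fun k => if k = 0 then 0 else q (k - 1)) m - z₀ * Lmap a n q m := by
  simp only [Lmap, Finset.mul_sum, ← Finset.sum_sub_distrib]
  refine Finset.sum_congr rfl fun k hk => ?_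
  simp only [Finset.mem_range] at hk
  rw [hfact k (by omega)]
  ring

lemma Lmap_shift (a : ℕ → ℂ) (n : ℕ) (q : ℕ → ℂ) (hq : ∀ k, n ≤ k → q k = 0) (m : ℕ) :
    Lmap a n (fun k => if k = 0 then 0 else q (k - 1)) m
      = if m = 0 then 0 else Lmap a n q (m - 1) := by
  rcases m with _ | t
  · simp [Lmap]
  · rw [if_neg (Nat.succ_ne_zero t), Nat.succ_sub_one]
    rw [Lmap_eq_range, Lmap_eq_range, Finset.sum_range_succ', Finset.sum_range_succ,
      hq n le_rfl, zero_mul, add_zero]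
    have hlast : ((fun k => if k = 0 then (0 : ℂ) else q (k - 1)) 0) *
        (if 0 ≤ t + 1 then a (t + 1 - 0) else 0) = 0 := by simp
    rw [hlast, add_zero]
    refine Finset.sum_congr rfl fun i _ => ?_
    show (if i + 1 = 0 then (0 : ℂ) else q (i + 1 - 1)) *
        (if i + 1 ≤ t + 1 then a (t + 1 - (i + 1)) else 0) = _
    rw [if_neg (Nat.succ_ne_zero i), Nat.add_sub_cancel,
      show t + 1 - (i + 1) = t - i from by omega]
    by_cases h : i ≤ t
    · rw [if_pos (by omega), if_pos h]
    · rw [if_neg (by omega), if_neg h]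

lemma exists_ratio_bound (ω : ℕ → ℝ) (hpos : ∀ n, 0 < ω n)
    (hlim : Filter.Tendsto (fun n => ω n / ω (n + 1)) Filter.atTop (nhds 1)) :
    ∃ M : ℝ, 1 ≤ M ∧ ∀ m, ω (m + 1) ≤ M * ω m := by
  have h1 : ∀ᶠ m in Filter.atTop, (1 : ℝ) / 2 < ω m / ω (m + 1) :=
    hlim.eventually (eventually_gt_nhds (by norm_num))
  rw [Filter.eventually_atTop] at h1
  obtain ⟨N, hN⟩ := h1
  have hsum0 : (0 : ℝ) ≤ ∑ k ∈ Finset.range N, ω (k + 1) / ω k :=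
    Finset.sum_nonneg fun k _ => div_nonneg (hpos _).le (hpos _).le
  refine ⟨2 + ∑ k ∈ Finset.range N, ω (k + 1) / ω k, by linarith, fun m => ?_⟩
  rcases le_or_gt N m with hm | hm
  · have h2 := hN m hm
    rw [lt_div_iff₀ (hpos (m + 1))] at h2
    nlinarith [hpos m, hpos (m + 1)]
  · have hle : ω (m + 1) / ω m ≤ ∑ k ∈ Finset.range N, ω (k + 1) / ω k :=
      Finset.single_le_sum (f := fun k => ω (k + 1) / ω k)
        (fun k _ => div_nonneg (hpos _).le (hpos _).le) (Finset.mem_range.2 hm)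
    rw [div_le_iff₀ (hpos m)] at hle
    nlinarith [hpos m]

lemma summable_ind (ω : ℕ → ℝ) (hpos : ∀ n, 0 < ω n) {M : ℝ} (hM1 : 1 ≤ M)
    (hM : ∀ m, ω (m + 1) ≤ M * ω m)
    (a : ℕ → ℂ) (hsum : Summable fun m => ‖a m‖ ^ 2 * ω m) (k : ℕ) :
    Summable fun m => (if k ≤ m then ‖a (m - k)‖ ^ 2 else 0) * ω m := by
  induction k with
  | zero => simpa using hsum
  | succ k ih =>
    have hM0 : (0 : ℝ) ≤ M := by linarith
    have hnn : ∀ j i, (0 : ℝ) ≤ (if k ≤ j then ‖a (j - k)‖ ^ 2 else 0) * ω i := by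
      intro j i
      refine mul_nonneg ?_ (hpos i).le
      split_ifs <;> positivity
    have hF : Summable fun m => (if k ≤ m - 1 then ‖a ((m - 1) - k)‖ ^ 2 else 0) * ω (m - 1) := by
      apply (summable_nat_add_iff 1).1
      simpa using ih
    apply Summable.of_nonneg_of_le (fun m => ?_) (fun m => ?_) (hF.mul_left M)
    · refine mul_nonneg ?_ (hpos m).le
      split_ifs <;> positivity
    · rcases m with _ | j
      · rw [if_neg (by omega : ¬ k + 1 ≤ 0), zero_mul]
        exact mul_nonneg hM0 (hnn 0 0)
      · simp only [Nat.add_sub_cancel]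
        by_cases hkj : k ≤ j
        · rw [if_pos (by omega), if_pos hkj, show j + 1 - (k + 1) = j - k from by omega]
          calc ‖a (j - k)‖ ^ 2 * ω (j + 1) ≤ ‖a (j - k)‖ ^ 2 * (M * ω j) :=
                mul_le_mul_of_nonneg_left (hM j) (by positivity)
            _ = M * (‖a (j - k)‖ ^ 2 * ω j) := by ring
        · rw [if_neg (by omega), if_neg hkj]
          simp

lemma summable_Lmap (ω : ℕ → ℝ) (hpos : ∀ n, 0 < ω n) {M : ℝ} (hM1 : 1 ≤ M)
    (hM : ∀ m, ω (m + 1) ≤ M * ω m)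
    (a : ℕ → ℂ) (hsum : Summable fun m => ‖a m‖ ^ 2 * ω m) (n : ℕ) (q : ℕ → ℂ) :
    Summable fun m => ‖Lmap a n q m‖ ^ 2 * ω m := by
  have hbound : ∀ m, ‖Lmap a n q m‖ ^ 2 * ω m ≤
      (n + 1 : ℝ) * ∑ k ∈ Finset.range (n + 1),
        ‖q k‖ ^ 2 * ((if k ≤ m then ‖a (m - k)‖ ^ 2 else 0) * ω m) := by
    intro m
    have h1 : ‖Lmap a n q m‖ ^ 2 ≤ (n + 1 : ℝ) *
        ∑ k ∈ Finset.range (n + 1), ‖q k * (if k ≤ m then a (m - k) else 0)‖ ^ 2 := by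
      rw [Lmap_eq_range]
      calc ‖∑ k ∈ Finset.range (n + 1), q k * (if k ≤ m then a (m - k) else 0)‖ ^ 2
          ≤ (∑ k ∈ Finset.range (n + 1), ‖q k * (if k ≤ m then a (m - k) else 0)‖) ^ 2 := by
            apply pow_le_pow_left₀ (norm_nonneg _) (norm_sum_le _ _)
        _ ≤ (Finset.range (n + 1)).card *
            ∑ k ∈ Finset.range (n + 1), ‖q k * (if k ≤ m then a (m - k) else 0)‖ ^ 2 :=
            sq_sum_le_card_mul_sum_sq
        _ = (n + 1 : ℝ) * ∑ k ∈ Finset.range (n + 1),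
              ‖q k * (if k ≤ m then a (m - k) else 0)‖ ^ 2 := by
            rw [Finset.card_range]; norm_num
    calc ‖Lmap a n q m‖ ^ 2 * ω m
        ≤ ((n + 1 : ℝ) * ∑ k ∈ Finset.range (n + 1),
            ‖q k * (if k ≤ m then a (m - k) else 0)‖ ^ 2) * ω m :=
          mul_le_mul_of_nonneg_right h1 (hpos m).le
      _ = (n + 1 : ℝ) * ∑ k ∈ Finset.range (n + 1),
            ‖q k‖ ^ 2 * ((if k ≤ m then ‖a (m - k)‖ ^ 2 else 0) * ω m) := by
          rw [mul_assoc, Finset.sum_mul]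
          congr 1
          refine Finset.sum_congr rfl fun k _ => ?_
          by_cases hk : k ≤ m <;> simp [hk, norm_mul, mul_pow] <;> ring
  have hsummable : Summable fun m => (n + 1 : ℝ) * ∑ k ∈ Finset.range (n + 1),
      ‖q k‖ ^ 2 * ((if k ≤ m then ‖a (m - k)‖ ^ 2 else 0) * ω m) := by
    apply Summable.mul_left
    apply summable_sum
    intro k _
    exact (summable_ind ω hpos hM1 hM a hsum k).mul_left _
  exact Summable.of_nonneg_of_le (fun m => mul_nonneg (by positivity) (hpos m).le) hbound hsummable

lemma variational {E : Type*} [NormedAddCommGroup E] [InnerProductSpace ℂ E]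
    (x v : E) (h : ∀ c : ℂ, ‖x‖ ^ 2 ≤ ‖x + c • v‖ ^ 2) : (inner ℂ x v : ℂ) = 0 := by
  by_contra hI
  set I : ℂ := (inner ℂ x v : ℂ) with hIdef
  have hIpos : 0 < ‖I‖ := norm_pos_iff.2 hI
  set t : ℝ := 1 / (‖v‖ ^ 2 + 1) with ht
  have htpos : 0 < t := by positivity
  have htv : t * ‖v‖ ^ 2 < 1 := by
    rw [ht, div_mul_eq_mul_div, one_mul, div_lt_one (by positivity)]
    linarith
  have h2 := h (-(t : ℂ) * (starRingEnd ℂ) I)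
  rw [norm_add_sq (𝕜 := ℂ)] at h2
  have h3 : (inner ℂ x ((-(t : ℂ) * (starRingEnd ℂ) I) • v) : ℂ)
      = ((-t * ‖I‖ ^ 2 : ℝ) : ℂ) := by
    rw [inner_smul_right, ← hIdef]
    have hc : (starRingEnd ℂ) I * I = ((‖I‖ : ℂ)) ^ 2 := by
      rw [mul_comm, Complex.mul_conj']
    rw [mul_assoc, hc]
    push_cast
    ring
  have h4 : RCLike.re (inner ℂ x ((-(t : ℂ) * (starRingEnd ℂ) I) • v) : ℂ) = -t * ‖I‖ ^ 2 := by
    rw [h3]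
    exact Complex.ofReal_re _
  have h5 : ‖(-(t : ℂ) * (starRingEnd ℂ) I) • v‖ = t * ‖I‖ * ‖v‖ := by
    rw [norm_smul, norm_mul, norm_neg, RCLike.norm_conj, Complex.norm_real,
      Real.norm_eq_abs, abs_of_pos htpos]
  rw [h4, h5] at h2
  have hA : 0 < t * ‖I‖ ^ 2 := by positivity
  have key : t * ‖I‖ ^ 2 * (t * ‖v‖ ^ 2) < t * ‖I‖ ^ 2 * 1 := by
    exact mul_lt_mul_of_pos_left htv hA
  nlinarith [key, hA]

lemma exists_factor (n : ℕ) (p : ℕ → ℂ) (z₀ : ℂ)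
    (hz : ∑ k ∈ Finset.range (n + 1), p k * z₀ ^ k = 0) :
    ∃ q : ℕ → ℂ, (∀ k, n ≤ k → q k = 0) ∧
      ∀ k, k ≤ n → p k = (if k = 0 then 0 else q (k - 1)) - z₀ * q k := by
  classical
  set P : Polynomial ℂ := ∑ k ∈ Finset.range (n + 1), Polynomial.C (p k) * Polynomial.X ^ k
    with hP
  have hcoeff : ∀ k, k ≤ n → P.coeff k = p k := by
    intro k hk
    rw [hP, Polynomial.finset_sum_coeff]
    rw [Finset.sum_congr rfl fun j _ => Polynomial.coeff_C_mul_X_pow (p j) j k]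
    rw [Finset.sum_ite_eq (Finset.range (n + 1)) k p]
    rw [if_pos (Finset.mem_range.2 (by omega))]
  have heval : P.eval z₀ = 0 := by
    rw [hP]
    rw [Polynomial.eval_finset_sum]
    simpa using hz
  obtain ⟨Q, hQ⟩ := (Polynomial.dvd_iff_isRoot.2 heval)
  have hPdeg : P.natDegree ≤ n := by
    apply Polynomial.natDegree_sum_le_of_forall_le
    intro i hi
    simp only [Finset.mem_range] at hi
    calc (Polynomial.C (p i) * Polynomial.X ^ i).natDegree
        ≤ (Polynomial.X ^ i : Polynomial ℂ).natDegree := Polynomial.natDegree_C_mul_le _ _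
      _ ≤ n := by rw [Polynomial.natDegree_X_pow]; omega
  have hQ0 : ∀ k, n ≤ k → Q.coeff k = 0 := by
    intro k hk
    by_cases hQz : Q = 0
    · simp [hQz]
    · apply Polynomial.coeff_eq_zero_of_natDegree_lt
      have hXC : (Polynomial.X - Polynomial.C z₀ : Polynomial ℂ) ≠ 0 :=
        Polynomial.X_sub_C_ne_zero z₀
      have := Polynomial.natDegree_mul hXC hQz
      rw [← hQ, Polynomial.natDegree_X_sub_C] at this
      omega
  refine ⟨fun k => Q.coeff k, hQ0, fun k hk => ?_⟩
  have h1 : P.coeff k = (Polynomial.X * Q).coeff k - z₀ * Q.coeff k := by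
    rw [hQ, sub_mul, Polynomial.coeff_sub, Polynomial.coeff_C_mul]
  rw [← hcoeff k hk, h1]
  congr 1
  rcases k with _ | j
  · rw [Polynomial.mul_coeff_zero, Polynomial.coeff_X_zero, zero_mul, if_pos rfl]
  · rw [Polynomial.coeff_X_mul, if_neg (Nat.succ_ne_zero j), Nat.succ_sub_one]

theorem stmt9 (ω : ℕ → ℝ) (hpos : ∀ n, 0 < ω n) (h0 : ω 0 = 1)
    (hlim : Filter.Tendsto (fun n => ω n / ω (n + 1)) Filter.atTop (nhds 1))
    (hmono : ∀ n, ω n ≤ ω (n + 1))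
    (a : ℕ → ℂ) (hsum : Summable (fun n => ‖a n‖ ^ 2 * ω n))
    (hne : 0 < ∑' n : ℕ, ‖a n‖ ^ 2 * ω n) (ha0 : a 0 ≠ 0)
    (n : ℕ) (p : ℕ → ℂ) (hp : IsOptApprox ω a n p)
    (z₀ : ℂ) (hz : ∑ k ∈ Finset.range (n + 1), p k * z₀ ^ k = 0) :
    1 < ‖z₀‖ := by
  classical
  obtain ⟨M, hM1, hM⟩ := exists_ratio_bound ω hpos hlim
  have hsumL : ∀ q : ℕ → ℂ, Summable fun m => ‖Lmap a n q m‖ ^ 2 * ω m :=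
    fun q => summable_Lmap ω hpos hM1 hM a hsum n q
  have hw0 : Real.sqrt (ω 0) = 1 := by rw [h0, Real.sqrt_one]
  have hwsq : ∀ m, Real.sqrt (ω m) ^ 2 = ω m := fun m => Real.sq_sqrt (hpos m).le
  -- coordinate norms
  have hcoordnorm : ∀ (q : ℕ → ℂ) (m : ℕ),
      ‖Lmap a n q m * (Real.sqrt (ω m) : ℂ)‖ ^ 2 = ‖Lmap a n q m‖ ^ 2 * ω m := by
    intro q m
    rw [norm_mul, mul_pow, Complex.norm_real, Real.norm_eq_abs,
      abs_of_nonneg (Real.sqrt_nonneg _), hwsq]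
  have hmem : ∀ q : ℕ → ℂ, Memℓp (fun m => Lmap a n q m * (Real.sqrt (ω m) : ℂ)) 2 := by
    intro q
    apply memℓp_gen
    have h2 : ((2 : ℝ≥0∞)).toReal = ((2 : ℕ) : ℝ) := by simp
    rw [h2]
    simp only [Real.rpow_natCast]
    exact (hsumL q).congr fun m => (hcoordnorm q m).symm
  set V : (ℕ → ℂ) → lp (fun _ : ℕ => ℂ) 2 :=
    fun q => ⟨fun m => Lmap a n q m * (Real.sqrt (ω m) : ℂ), hmem q⟩ with hVdef
  have hVapp : ∀ (q : ℕ → ℂ) (m : ℕ),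
      (V q : ∀ _ : ℕ, ℂ) m = Lmap a n q m * (Real.sqrt (ω m) : ℂ) := fun q m => rfl
  set One : lp (fun _ : ℕ => ℂ) 2 := lp.single 2 0 (1 : ℂ) with hOnedef
  have hOneapp : ∀ m : ℕ, (One : ∀ _ : ℕ, ℂ) m = if m = 0 then 1 else 0 := by
    intro m
    rw [hOnedef, lp.single_apply]
    split_ifs with h
    · subst h; rfl
    · exact Pi.single_eq_of_ne h _
  -- norm-squared formula
  have hnormsq : ∀ x : lp (fun _ : ℕ => ℂ) 2, ‖x‖ ^ 2 = ∑' m, ‖(x : ∀ _ : ℕ, ℂ) m‖ ^ 2 := by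
    intro x
    have h2 : ((2 : ℝ≥0∞)).toReal = ((2 : ℕ) : ℝ) := by simp
    have := lp.norm_rpow_eq_tsum (p := 2) (by rw [h2]; norm_num) x
    rw [h2] at this
    simpa only [Real.rpow_natCast] using this
  have hVnorm : ∀ q : ℕ → ℂ, ‖V q‖ ^ 2 = ∑' m, ‖Lmap a n q m‖ ^ 2 * ω m := by
    intro q
    rw [hnormsq]
    exact tsum_congr fun m => by rw [hVapp, hcoordnorm]
  -- identification of approxErr
  have hErr : ∀ q : ℕ → ℂ, approxErr ω a n q = ‖V q - One‖ ^ 2 := by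
    intro q
    rw [hnormsq, approxErr]
    refine tsum_congr fun m => ?_
    have hsub : ((V q - One : lp (fun _ : ℕ => ℂ) 2) : ∀ _ : ℕ, ℂ) m
        = Lmap a n q m * (Real.sqrt (ω m) : ℂ) - (if m = 0 then 1 else 0) := by
      rw [lp.coeFn_sub, Pi.sub_apply, hVapp, hOneapp]
    rw [hsub]
    show ‖Lmap a n q m - (if m = 0 then 1 else 0)‖ ^ 2 * ω m = _
    rcases m with _ | j
    · rw [hw0]
      norm_num [h0]
    · rw [if_neg (Nat.succ_ne_zero j)]
      simp only [sub_zero]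
      rw [hcoordnorm]
  -- orthogonality relations
  have hopt : ∀ r : ℕ → ℂ, (inner ℂ (V p - One) (V r) : ℂ) = 0 := by
    intro r
    apply variational
    intro c
    have h1 : V (fun k => p k + c * r k) = V p + c • V r := by
      apply lp.ext
      funext m
      rw [hVapp, Lmap_add_smul]
      have : ((V p + c • V r : lp (fun _ : ℕ => ℂ) 2) : ∀ _ : ℕ, ℂ) m
          = (V p : ∀ _ : ℕ, ℂ) m + c * (V r : ∀ _ : ℕ, ℂ) m := by
        rw [lp.coeFn_add, Pi.add_apply, lp.coeFn_smul, Pi.smul_apply, smul_eq_mul]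
      rw [this, hVapp, hVapp]
      ring
    have h2 := hp (fun k => p k + c * r k)
    rw [hErr, hErr, h1] at h2
    have h3 : V p + c • V r - One = V p - One + c • V r := by abel
    rw [h3] at h2
    exact h2
  -- the factorization
  obtain ⟨q, hqn, hfact⟩ := exists_factor n p z₀ hz
  set sq : ℕ → ℂ := fun k => if k = 0 then 0 else q (k - 1) with hsqdef
  have hLsq : ∀ m, Lmap a n sq m = if m = 0 then 0 else Lmap a n q (m - 1) :=
    Lmap_shift a n q hqn
  have hVfact : V p = V sq - z₀ • V q := by
    apply lp.ext
    funext m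
    have : ((V sq - z₀ • V q : lp (fun _ : ℕ => ℂ) 2) : ∀ _ : ℕ, ℂ) m
        = (V sq : ∀ _ : ℕ, ℂ) m - z₀ * (V q : ∀ _ : ℕ, ℂ) m := by
      rw [lp.coeFn_sub, Pi.sub_apply, lp.coeFn_smul, Pi.smul_apply, smul_eq_mul]
    rw [this, hVapp, hVapp, hVapp, Lmap_factor a n p q z₀ hfact]
    ring
  -- inner products with One
  have hinner_One : ∀ x : lp (fun _ : ℕ => ℂ) 2, (inner ℂ One x : ℂ) = (x : ∀ _ : ℕ, ℂ) 0 := by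
    intro x
    rw [hOnedef]
    rw [lp.inner_single_left]
    simp
  -- ⟪V sq, V p⟫ = 0
  have hsq0 : (V sq : ∀ _ : ℕ, ℂ) 0 = 0 := by
    rw [hVapp, hLsq 0, if_pos rfl, zero_mul]
  have hOneVsq : (inner ℂ One (V sq) : ℂ) = 0 := by rw [hinner_One, hsq0]
  have hVpVsq : (inner ℂ (V p) (V sq) : ℂ) = 0 := by
    have := hopt sq
    rw [inner_sub_left, hOneVsq, sub_zero] at this
    exact this
  have hVsqVp : (inner ℂ (V sq) (V p) : ℂ) = 0 := by
    rw [← inner_conj_symm, hVpVsq, map_zero]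
  -- Pythagoras
  have hpyth : ‖z₀‖ ^ 2 * ‖V q‖ ^ 2 = ‖V sq‖ ^ 2 + ‖V p‖ ^ 2 := by
    have h1 : z₀ • V q = V sq - V p := by rw [hVfact]; abel
    have h2 : ‖z₀ • V q‖ ^ 2 = ‖z₀‖ ^ 2 * ‖V q‖ ^ 2 := by
      rw [norm_smul, mul_pow]
    rw [← h2, h1, norm_sub_sq (𝕜 := ℂ), hVsqVp]
    simp
  -- monotonicity: ‖V q‖² ≤ ‖V sq‖²
  have hmonoV : ‖V q‖ ^ 2 ≤ ‖V sq‖ ^ 2 := by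
    rw [hVnorm, hVnorm]
    set g : ℕ → ℝ := fun m => ‖Lmap a n sq m‖ ^ 2 * ω m with hg
    have hgsum : Summable g := hsumL sq
    have hg0 : g 0 = 0 := by simp [hg, hLsq 0]
    have hgs : ∀ m, g (m + 1) = ‖Lmap a n q m‖ ^ 2 * ω (m + 1) := by
      intro m
      simp [hg, hLsq (m + 1)]
    have h1 : ∑' m, ‖Lmap a n q m‖ ^ 2 * ω m ≤ ∑' m, g (m + 1) := by
      apply Summable.tsum_le_tsum _ (hsumL q) ((summable_nat_add_iff 1).2 hgsum)
      intro m
      rw [hgs]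
      exact mul_le_mul_of_nonneg_left (hmono m) (by positivity)
    have h2 : ∑' m, g m = g 0 + ∑' m, g (m + 1) := Summable.tsum_eq_zero_add hgsum
    rw [hg0, zero_add] at h2
    linarith [h1, h2.ge]
  -- the error is strictly less than 1
  set T : ℝ := ∑' m, ‖a m‖ ^ 2 * ω m with hT
  have hTpos : 0 < T := hne
  set c : ℂ := (starRingEnd ℂ) (a 0) / (T : ℂ) with hc
  set r0 : ℕ → ℂ := fun k => if k = 0 then c else 0 with hr0
  have hLr0 : ∀ m, Lmap a n r0 m = c * a m := by
    intro m
    rw [Lmap_eq_range]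
    rw [Finset.sum_eq_single 0]
    · simp [hr0]
    · intro k _ hk
      simp [hr0, hk]
    · intro h
      exact absurd (Finset.mem_range.2 (by omega)) h
  have hnorm_r0 : ‖V r0‖ ^ 2 = ‖c‖ ^ 2 * T := by
    rw [hVnorm, hT]
    rw [← tsum_mul_left]
    refine tsum_congr fun m => ?_
    rw [hLr0, norm_mul, mul_pow]
    ring
  have hOne_norm : ‖One‖ ^ 2 = 1 := by
    rw [hnormsq]
    have : ∀ m : ℕ, ‖(One : ∀ _ : ℕ, ℂ) m‖ ^ 2 = if m = 0 then 1 else 0 := by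
      intro m
      rw [hOneapp]
      split_ifs <;> simp
    rw [tsum_congr this]
    simp
  have hinner_r0_One : RCLike.re (inner ℂ (V r0) One : ℂ) = ‖a 0‖ ^ 2 / T := by
    have h1 : (inner ℂ (V r0) One : ℂ) = (starRingEnd ℂ) ((V r0 : ∀ _ : ℕ, ℂ) 0) := by
      rw [← inner_conj_symm, hinner_One]
    have h2 : (V r0 : ∀ _ : ℕ, ℂ) 0 = c * a 0 := by
      rw [hVapp, hLr0, hw0, Complex.ofReal_one, mul_one]
    have h3 : c * a 0 = ((‖a 0‖ ^ 2 / T : ℝ) : ℂ) := by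
      rw [hc]
      rw [div_mul_eq_mul_div, mul_comm, Complex.mul_conj']
      push_cast
      ring
    rw [h1, h2, h3, Complex.conj_ofReal, RCLike.re_to_complex]
    exact Complex.ofReal_re _
  have hcnorm : ‖c‖ ^ 2 = ‖a 0‖ ^ 2 / T ^ 2 := by
    rw [hc, norm_div, RCLike.norm_conj]
    rw [Complex.norm_real, Real.norm_eq_abs, abs_of_pos hTpos]
    rw [div_pow]
  have herr_r0 : approxErr ω a n r0 = 1 - ‖a 0‖ ^ 2 / T := by
    rw [hErr, norm_sub_sq (𝕜 := ℂ), hnorm_r0, hinner_r0_One, hOne_norm, hcnorm]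
    field_simp
    ring
  have ha0T : 0 < ‖a 0‖ ^ 2 / T := by
    have : 0 < ‖a 0‖ := norm_pos_iff.2 ha0
    positivity
  have hElt1 : approxErr ω a n p < 1 := by
    calc approxErr ω a n p ≤ approxErr ω a n r0 := hp r0
      _ = 1 - ‖a 0‖ ^ 2 / T := herr_r0
      _ < 1 := by linarith
  -- ‖V p‖² = 1 − error > 0
  have hre : RCLike.re (inner ℂ (V p) One : ℂ) = ‖V p‖ ^ 2 := by
    have h1 := hopt p
    rw [inner_sub_left, sub_eq_zero] at h1
    have h2 : (inner ℂ (V p) One : ℂ) = (starRingEnd ℂ) (inner ℂ (V p) (V p) : ℂ) := by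
      rw [h1, inner_conj_symm]
    rw [h2, RCLike.conj_re]
    exact inner_self_eq_norm_sq (V p)
  have hVp_sq : ‖V p‖ ^ 2 = 1 - approxErr ω a n p := by
    have h1 : approxErr ω a n p = ‖V p‖ ^ 2 - 2 * RCLike.re (inner ℂ (V p) One : ℂ) + 1 := by
      rw [hErr, norm_sub_sq (𝕜 := ℂ), hOne_norm]
    rw [hre] at h1
    linarith
  have hVp_pos : 0 < ‖V p‖ ^ 2 := by rw [hVp_sq]; linarith
  -- conclusion
  by_contra hcon
  push_neg at hcon
  have habs : ‖z₀‖ ≤ 1 := by exact hcon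
  have hVq_nonneg : (0 : ℝ) ≤ ‖V q‖ ^ 2 := by positivity
  have hkey : ‖z₀‖ ^ 2 * ‖V q‖ ^ 2 ≤ ‖V q‖ ^ 2 := by
    have hz2 : ‖z₀‖ ^ 2 ≤ 1 := by
      calc ‖z₀‖ ^ 2 ≤ 1 ^ 2 := pow_le_pow_left₀ (norm_nonneg z₀) habs 2
        _ = 1 := one_pow 2
    exact mul_le_of_le_one_left hVq_nonneg hz2
  linarith [hpyth, hmonoV, hVp_pos, hkey]
end
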